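/- arXiv:1507.07059 — 7 statements merged into one kernel-verified Lean document; each statement's English description precedes it below -/
import Mathlib

section
/- Let n ≥ 2 and let A = (a_{ij}) be an n×n nonnegative irreducible real matrix with a_{ii} = 0 for all i, row sums r_1,…,r_n (all positive), and s_i = Σ_{j=1}^n a_{ij} r_j. Let t_1,…,t_n ≥ 0, M = diag(t_1,…,t_n), and B = A + M. For indices i,j set f(i,j) = (t_i + t_j + sqrt((t_i − t_j)^2 + 4 s_i s_j/(r_i r_j)))/2. Then min{ f(i,j) : 1 ≤ i,j ≤ n, a_{ij} ≠ 0 } ≤ ρ(B) ≤ max{ f(i,j) : 1 ≤ i,j ≤ n, a_{ij} ≠ 0 }, where ρ(B) is the spectral radius of B. -/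
open Matrix

/-- The spectral radius of a real square matrix: the largest modulus of its
complex eigenvalues. -/
noncomputable def specRad {n : ℕ} (M : Matrix (Fin n) (Fin n) ℝ) : ℝ :=
  sSup {x : ℝ | ∃ μ : ℂ, μ ∈ spectrum ℂ (M.map Complex.ofReal) ∧ x = ‖μ‖}

/-- A square matrix is irreducible if for every pair of indices `(i, j)` there is a
positive power `k` with `(A ^ k) i j > 0`. -/
def MatIrred {n : ℕ} (M : Matrix (Fin n) (Fin n) ℝ) : Prop :=
  ∀ i j, ∃ k : ℕ, 0 < k ∧ 0 < (M ^ k) i j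

section aux
variable {n : ℕ}

lemma entry_mul_le {A B C D : Matrix (Fin n) (Fin n) ℝ}
    (hA : ∀ i j, 0 ≤ A i j) (hC : ∀ i j, 0 ≤ C i j)
    (hAB : ∀ i j, A i j ≤ B i j) (hCD : ∀ i j, C i j ≤ D i j) :
    ∀ i j, (A * C) i j ≤ (B * D) i j := by
  intro i j
  simp only [Matrix.mul_apply]
  apply Finset.sum_le_sum
  intro l _
  exact mul_le_mul (hAB i l) (hCD l j) (hC l j) ((hA i l).trans (hAB i l))

lemma entry_pow_nonneg {B : Matrix (Fin n) (Fin n) ℝ}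
    (hB : ∀ i j, 0 ≤ B i j) : ∀ (k : ℕ) (i j), 0 ≤ (B ^ k) i j := by
  intro k
  induction k with
  | zero => intro i j; simp [Matrix.one_apply]; positivity
  | succ m ih =>
      intro i j
      rw [pow_succ, Matrix.mul_apply]
      exact Finset.sum_nonneg fun l _ => mul_nonneg (ih i l) (hB l j)

lemma entry_pow_le_pow {A B : Matrix (Fin n) (Fin n) ℝ}
    (hA : ∀ i j, 0 ≤ A i j) (hAB : ∀ i j, A i j ≤ B i j) :
    ∀ (k : ℕ) (i j), (A ^ k) i j ≤ (B ^ k) i j := by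
  intro k
  induction k with
  | zero => simp
  | succ m ih =>
      rw [pow_succ, pow_succ]
      exact entry_mul_le (entry_pow_nonneg hA m) hA ih hAB

lemma one_add_nonneg {B : Matrix (Fin n) (Fin n) ℝ}
    (hB : ∀ i j, 0 ≤ B i j) : ∀ i j, (0:ℝ) ≤ (1 + B) i j := by
  intro i j
  simp only [Matrix.add_apply, Matrix.one_apply]
  split
  · linarith [hB i j]
  · simpa using hB i j

lemma one_add_pow_mono {B : Matrix (Fin n) (Fin n) ℝ}
    (hB : ∀ i j, 0 ≤ B i j) {k K : ℕ} (hkK : k ≤ K) :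
    ∀ i j, ((1 + B) ^ k) i j ≤ ((1 + B) ^ K) i j := by
  induction K with
  | zero => intro i j; rw [Nat.le_zero.mp hkK]
  | succ m ih =>
      rcases Nat.lt_or_ge k (m+1) with h | h
      · intro i j
        refine (ih (Nat.lt_succ_iff.mp h) i j).trans ?_
        have h1 : ((1+B)^(m+1)) i j = ((1+B)^m) i j + ((1+B)^m * B) i j := by
          rw [pow_succ, mul_add, mul_one, Matrix.add_apply]
        have h2 : 0 ≤ ((1+B)^m * B) i j := by
          rw [Matrix.mul_apply]
          exact Finset.sum_nonneg fun l _ =>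
            mul_nonneg (entry_pow_nonneg (one_add_nonneg hB) m i l) (hB l j)
        linarith
      · have : k = m + 1 := le_antisymm hkK h
        rw [this]
        exact fun i j => le_refl _

lemma pow_le_one_add_pow {B : Matrix (Fin n) (Fin n) ℝ}
    (hB : ∀ i j, 0 ≤ B i j) (k : ℕ) :
    ∀ i j, (B ^ k) i j ≤ ((1 + B) ^ k) i j := by
  apply entry_pow_le_pow hB
  intro i j
  simp only [Matrix.add_apply, Matrix.one_apply]
  split <;> simp

lemma feas_bound {B : Matrix (Fin n) (Fin n) ℝ} (hB : ∀ i j, 0 ≤ B i j)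
    {lam : ℝ} {x : Fin n → ℝ} (hx : ∀ i, 0 ≤ x i) (hsum : ∑ i, x i = 1)
    (hfe : ∀ i, lam * x i ≤ B.mulVec x i) : lam ≤ ∑ i, ∑ j, B i j := by
  have hx1 : ∀ j, x j ≤ 1 := fun j =>
    hsum ▸ Finset.single_le_sum (fun i _ => hx i) (Finset.mem_univ j)
  calc lam = ∑ i, lam * x i := by rw [← Finset.mul_sum, hsum, mul_one]
    _ ≤ ∑ i, B.mulVec x i := Finset.sum_le_sum fun i _ => hfe i
    _ = ∑ i, ∑ j, B i j * x j := by simp [Matrix.mulVec, dotProduct]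
    _ ≤ ∑ i, ∑ j, B i j := Finset.sum_le_sum fun i _ => Finset.sum_le_sum fun j _ =>
         (by nlinarith [hB i j, hx1 j, hx j] : B i j * x j ≤ B i j)

lemma perron (hn : 0 < n) (B : Matrix (Fin n) (Fin n) ℝ)
    (hB : ∀ i j, 0 ≤ B i j) (hirr : ∀ i j, ∃ k, 0 < (B ^ k) i j) :
    ∃ (ρ : ℝ) (x : Fin n → ℝ), 0 ≤ ρ ∧ (∀ i, 0 < x i) ∧
      B.mulVec x = ρ • x ∧ specRad B = ρ := by
  haveI hne : Nonempty (Fin n) := Fin.pos_iff_nonempty.mp hn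
  set Bnd : ℝ := ∑ i, ∑ j, B i j with hBnd
  set S : Set (ℝ × (Fin n → ℝ)) :=
    {p | p.1 ∈ Set.Icc (0:ℝ) Bnd ∧ (∀ i, 0 ≤ p.2 i) ∧ (∑ i, p.2 i) = 1 ∧
      ∀ i, p.1 * p.2 i ≤ B.mulVec p.2 i} with hSdef
  -- S is nonempty
  have hnne : (0:ℝ) < n := Nat.cast_pos.mpr hn
  have hSne : S.Nonempty := by
    refine ⟨(0, fun _ => (n:ℝ)⁻¹), ⟨le_refl _, ?_⟩, fun i => by positivity, ?_, fun i => ?_⟩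
    · exact Finset.sum_nonneg fun i _ => Finset.sum_nonneg fun j _ => hB i j
    · simp [Finset.sum_const]
      field_simp
    · show (0:ℝ) * _ ≤ B.mulVec (fun _ => (n:ℝ)⁻¹) i
      rw [zero_mul]
      simp only [Matrix.mulVec, dotProduct]
      exact Finset.sum_nonneg fun j _ => mul_nonneg (hB i j) (by positivity)
  -- S is closed
  have hclosed : IsClosed S := by
    have h1 : IsClosed {p : ℝ × (Fin n → ℝ) | p.1 ∈ Set.Icc (0:ℝ) Bnd} :=
      isClosed_Icc.preimage continuous_fst
    have h2 : IsClosed {p : ℝ × (Fin n → ℝ) | ∀ i, 0 ≤ p.2 i} := by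
      have he : {p : ℝ × (Fin n → ℝ) | ∀ i, 0 ≤ p.2 i} = ⋂ i, {p | 0 ≤ p.2 i} := by
        ext p; simp
      rw [he]
      exact isClosed_iInter fun i =>
        isClosed_le continuous_const ((continuous_apply i).comp continuous_snd)
    have h3 : IsClosed {p : ℝ × (Fin n → ℝ) | (∑ i, p.2 i) = 1} :=
      isClosed_eq (by fun_prop) continuous_const
    have h4 : IsClosed {p : ℝ × (Fin n → ℝ) | ∀ i, p.1 * p.2 i ≤ B.mulVec p.2 i} := by
      have he : {p : ℝ × (Fin n → ℝ) | ∀ i, p.1 * p.2 i ≤ B.mulVec p.2 i}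
          = ⋂ i, {p | p.1 * p.2 i ≤ ∑ j, B i j * p.2 j} := by
        ext p; simp [Matrix.mulVec, dotProduct]
      rw [he]
      refine isClosed_iInter fun i => isClosed_le ?_ ?_
      · exact continuous_fst.mul ((continuous_apply i).comp continuous_snd)
      · fun_prop
    have : S = {p : ℝ × (Fin n → ℝ) | p.1 ∈ Set.Icc (0:ℝ) Bnd}
        ∩ ({p | ∀ i, 0 ≤ p.2 i} ∩ ({p | (∑ i, p.2 i) = 1}
        ∩ {p | ∀ i, p.1 * p.2 i ≤ B.mulVec p.2 i})) := by
      ext p; simp [hSdef]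
    rw [this]
    exact h1.inter (h2.inter (h3.inter h4))
  -- S is compact
  have hcomp : IsCompact S := by
    refine IsCompact.of_isClosed_subset ((isCompact_Icc (a := (0:ℝ)) (b := Bnd)).prod
      (isCompact_Icc : IsCompact (Set.Icc (0 : Fin n → ℝ) 1))) hclosed ?_
    rintro ⟨lam, x⟩ ⟨h1, h2, h3, _⟩
    refine ⟨h1, ?_, ?_⟩
    · intro i; exact h2 i
    · intro i
      show x i ≤ (1 : Fin n → ℝ) i
      have := Finset.single_le_sum (f := x) (fun j _ => h2 j) (Finset.mem_univ i)
      rw [h3] at this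
      simpa using this
  obtain ⟨⟨ρ, x⟩, hmem, hmax'⟩ := hcomp.exists_isMaxOn hSne continuous_fst.continuousOn
  have hmax : ∀ q ∈ S, q.1 ≤ ρ := fun q hq => hmax' hq
  obtain ⟨hρIcc, hxnn, hxsum, hfeas⟩ := hmem
  have hρ0 : 0 ≤ ρ := hρIcc.1
  -- the strictly positive matrix P
  choose kk hkk using hirr
  set K : ℕ := Finset.univ.sup (fun ij : Fin n × Fin n => kk ij.1 ij.2) with hK
  set P : Matrix (Fin n) (Fin n) ℝ := (1 + B) ^ K with hP
  have hPpos : ∀ i j, 0 < P i j := by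
    intro i j
    have h1 : (B ^ kk i j) i j ≤ P i j :=
      (pow_le_one_add_pow hB (kk i j) i j).trans
        (one_add_pow_mono hB (Finset.le_sup (f := fun ij : Fin n × Fin n => kk ij.1 ij.2)
          (Finset.mem_univ (i,j))) i j)
    exact lt_of_lt_of_le (hkk i j) h1
  have hPnn : ∀ i j, 0 ≤ P i j := fun i j => (hPpos i j).le
  -- there is a positive coordinate of x
  obtain ⟨l₀, hl₀⟩ : ∃ l, 0 < x l := by
    by_contra h
    push_neg at h
    have : ∑ i, x i = 0 := le_antisymm (Finset.sum_nonpos fun i _ => h i)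
      (Finset.sum_nonneg fun i _ => hxnn i)
    rw [hxsum] at this; norm_num at this
  set z : Fin n → ℝ := P.mulVec x with hz
  have hzpos : ∀ i, 0 < z i := by
    intro i
    refine Finset.sum_pos' (fun l _ => mul_nonneg (hPnn i l) (hxnn l)) ⟨l₀, Finset.mem_univ _, ?_⟩
    exact mul_pos (hPpos i l₀) hl₀
  -- the maximizer is an eigenvector
  have heig : B.mulVec x = ρ • x := by
    by_contra hy
    set y : Fin n → ℝ := B.mulVec x - ρ • x with hydef
    have hynn : ∀ i, 0 ≤ y i := fun i => by
      have := hfeas i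
      simp [hydef]
      simpa using this
    obtain ⟨j₀, hj₀⟩ : ∃ j, y j ≠ 0 := by
      by_contra h
      push_neg at h
      refine hy (funext fun i => ?_)
      have := h i
      simp only [hydef, Pi.sub_apply, Pi.smul_apply, smul_eq_mul] at this
      simp only [Pi.smul_apply, smul_eq_mul]
      linarith
    have hj₀pos : 0 < y j₀ := lt_of_le_of_ne (hynn j₀) (Ne.symm hj₀)
    have hPypos : ∀ i, 0 < P.mulVec y i := by
      intro i
      refine Finset.sum_pos' (fun l _ => mul_nonneg (hPnn i l) (hynn l))
        ⟨j₀, Finset.mem_univ _, mul_pos (hPpos i j₀) hj₀pos⟩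
    have hcommP : B * P = P * B := by
      have h := ((Commute.one_right B).add_right (Commute.refl B)).pow_right K
      exact h.eq
    have hBz : ∀ i, ρ * z i < B.mulVec z i := by
      have hkey : B.mulVec z = ρ • z + P.mulVec y := by
        rw [hz, Matrix.mulVec_mulVec, hcommP, ← Matrix.mulVec_mulVec]
        have : B.mulVec x = ρ • x + y := by rw [hydef]; abel
        rw [this, Matrix.mulVec_add, Matrix.mulVec_smul]
      intro i
      rw [hkey]
      have := hPypos i
      simp only [Pi.add_apply, Pi.smul_apply, smul_eq_mul]
      linarith
    set c : ℝ := Finset.univ.inf' Finset.univ_nonempty (fun i => B.mulVec z i / z i) with hc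
    have hcρ : ρ < c := by
      rw [hc, Finset.lt_inf'_iff]
      intro i _
      rw [lt_div_iff₀ (hzpos i)]
      exact hBz i
    have hfeasc : ∀ i, c * z i ≤ B.mulVec z i := by
      intro i
      have h1 : c ≤ B.mulVec z i / z i :=
        Finset.inf'_le _ (Finset.mem_univ i)
      rwa [le_div_iff₀ (hzpos i)] at h1
    set σ : ℝ := ∑ i, z i with hσ
    have hσpos : 0 < σ := Finset.sum_pos (fun i _ => hzpos i) Finset.univ_nonempty
    set x' : Fin n → ℝ := σ⁻¹ • z with hx'
    have hx'nn : ∀ i, 0 ≤ x' i := fun i => by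
      simp only [hx', Pi.smul_apply, smul_eq_mul]
      exact mul_nonneg (inv_nonneg.mpr hσpos.le) (hzpos i).le
    have hx'sum : ∑ i, x' i = 1 := by
      simp [hx', ← Finset.mul_sum, ← hσ]
      field_simp
    have hx'feas : ∀ i, c * x' i ≤ B.mulVec x' i := by
      intro i
      rw [hx', Matrix.mulVec_smul]
      simp only [Pi.smul_apply, smul_eq_mul]
      rw [mul_left_comm]
      exact mul_le_mul_of_nonneg_left (hfeasc i) (by positivity)
    have hcBnd : c ≤ Bnd := feas_bound hB hx'nn hx'sum hx'feas
    have : (c, x') ∈ S := ⟨⟨le_of_lt (lt_of_le_of_lt hρ0 hcρ), hcBnd⟩, hx'nn, hx'sum, hx'feas⟩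
    exact absurd (hmax _ this) (not_le.mpr hcρ)
  -- positivity of x
  have hxpos : ∀ i, 0 < x i := by
    have hstep : (1 + B).mulVec x = (1+ρ) • x := by
      rw [Matrix.add_mulVec, Matrix.one_mulVec, heig, add_smul, one_smul]
    have hPx : ∀ m : ℕ, ((1+B)^m).mulVec x = (1+ρ)^m • x := by
      intro m
      induction m with
      | zero => simp
      | succ l ih =>
          rw [pow_succ, ← Matrix.mulVec_mulVec, hstep, Matrix.mulVec_smul, ih,
            smul_smul, pow_succ]
          ring_nf
    intro i
    have h1 : z i = (1+ρ)^K * x i := by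
      rw [hz, hP, hPx K]; simp
    have h2 : (0:ℝ) < (1+ρ)^K := by positivity
    nlinarith [hzpos i]
  refine ⟨ρ, x, hρ0, hxpos, heig, ?_⟩
  -- identify ρ with the spectral radius
  have hmemspec : (ρ : ℂ) ∈ spectrum ℂ (B.map Complex.ofReal) := by
    rw [spectrum.mem_iff]
    intro hunit
    rw [Matrix.isUnit_iff_isUnit_det, isUnit_iff_ne_zero] at hunit
    apply hunit
    rw [← Matrix.exists_mulVec_eq_zero_iff]
    refine ⟨fun i => (x i : ℂ), ?_, ?_⟩
    · intro h0
      have h1 := congrFun h0 (Classical.arbitrary (Fin n))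
      simp only [Pi.zero_apply, Complex.ofReal_eq_zero] at h1
      exact absurd h1 (ne_of_gt (hxpos _))
    · funext i
      have hxi := congrFun heig i
      simp only [Pi.smul_apply, smul_eq_mul] at hxi
      rw [Matrix.sub_mulVec]
      have h1 : (algebraMap ℂ (Matrix (Fin n) (Fin n) ℂ) (ρ:ℂ)).mulVec
          (fun i => (x i : ℂ)) i = (ρ:ℂ) * (x i : ℂ) := by
        rw [Algebra.algebraMap_eq_smul_one, Matrix.smul_mulVec, Matrix.one_mulVec]
        simp
      have h2 : (B.map Complex.ofReal).mulVec (fun i => (x i : ℂ)) i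
          = ((B.mulVec x i : ℝ) : ℂ) := by
        simp only [Matrix.mulVec, dotProduct, Matrix.map_apply]
        push_cast
        rfl
      simp only [Pi.sub_apply, Pi.zero_apply, h1, h2, hxi]
      push_cast
      ring
  have habs_le : ∀ μ : ℂ, μ ∈ spectrum ℂ (B.map Complex.ofReal) → ‖μ‖ ≤ ρ := by
    intro μ hμ
    rw [spectrum.mem_iff] at hμ
    have hdet : (algebraMap ℂ (Matrix (Fin n) (Fin n) ℂ) μ - B.map Complex.ofReal).det = 0 := by
      by_contra hd
      exact hμ ((Matrix.isUnit_iff_isUnit_det _).mpr (isUnit_iff_ne_zero.mpr hd))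
    obtain ⟨v, hv0, hveq⟩ := Matrix.exists_mulVec_eq_zero_iff.mpr hdet
    have hvmul : (B.map Complex.ofReal).mulVec v = μ • v := by
      rw [Matrix.sub_mulVec, sub_eq_zero] at hveq
      rw [← hveq, Algebra.algebraMap_eq_smul_one, Matrix.smul_mulVec, Matrix.one_mulVec]
    set u : Fin n → ℝ := fun i => ‖v i‖ with hu
    have hunn : ∀ i, 0 ≤ u i := fun i => norm_nonneg _
    have htri : ∀ i, ‖μ‖ * u i ≤ B.mulVec u i := by
      intro i
      have h1 : ‖μ‖ * u i = ‖μ * v i‖ := by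
        rw [norm_mul]
      have h2 : μ * v i = (B.map Complex.ofReal).mulVec v i := by
        rw [hvmul]; simp
      rw [h1, h2]
      calc ‖∑ j, (B.map Complex.ofReal) i j * v j‖
          ≤ ∑ j, ‖(B.map Complex.ofReal) i j * v j‖ :=
            norm_sum_le _ _
        _ = ∑ j, B i j * u j := by
            refine Finset.sum_congr rfl fun j _ => ?_
            rw [norm_mul, Matrix.map_apply, Complex.norm_real, Real.norm_of_nonneg (hB i j)]
        _ = B.mulVec u i := rfl
    obtain ⟨i₀, hvne⟩ : ∃ i, v i ≠ 0 := Function.ne_iff.mp hv0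
    set σu : ℝ := ∑ i, u i with hσu
    have hσupos : 0 < σu :=
      Finset.sum_pos' (fun i _ => hunn i)
        ⟨i₀, Finset.mem_univ _, norm_pos_iff.mpr hvne⟩
    set u' : Fin n → ℝ := σu⁻¹ • u with hu'
    have hu'nn : ∀ i, 0 ≤ u' i := fun i => by
      simp only [hu', Pi.smul_apply, smul_eq_mul]
      exact mul_nonneg (inv_nonneg.mpr hσupos.le) (hunn i)
    have hu'sum : ∑ i, u' i = 1 := by
      simp [hu', ← Finset.mul_sum, ← hσu]
      field_simp
    have hu'feas : ∀ i, ‖μ‖ * u' i ≤ B.mulVec u' i := by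
      intro i
      rw [hu', Matrix.mulVec_smul]
      simp only [Pi.smul_apply, smul_eq_mul]
      rw [mul_left_comm]
      exact mul_le_mul_of_nonneg_left (htri i) (by positivity)
    have hBndμ : ‖μ‖ ≤ Bnd := feas_bound hB hu'nn hu'sum hu'feas
    exact hmax (‖μ‖, u') ⟨⟨norm_nonneg μ, hBndμ⟩, hu'nn, hu'sum, hu'feas⟩
  have hρmem : ρ ∈ {w : ℝ | ∃ μ : ℂ, μ ∈ spectrum ℂ (B.map Complex.ofReal) ∧ w = ‖μ‖} :=
    ⟨(ρ:ℂ), hmemspec, by rw [Complex.norm_real, Real.norm_of_nonneg hρ0]⟩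
  unfold specRad
  apply le_antisymm
  · apply csSup_le ⟨ρ, hρmem⟩
    rintro w ⟨μ, hμ, rfl⟩
    exact habs_le μ hμ
  · refine le_csSup ⟨ρ, ?_⟩ hρmem
    rintro w ⟨μ, hμ, rfl⟩
    exact habs_le μ hμ

end aux

lemma quad_up {tp tq c ρ : ℝ} (hp : tp ≤ ρ) (hq : tq ≤ ρ)
    (h : (ρ - tp) * (ρ - tq) ≤ c) :
    ρ ≤ (tp + tq + Real.sqrt ((tp - tq) ^ 2 + 4 * c)) / 2 := by
  have hu : 0 ≤ 2 * ρ - tp - tq := by linarith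
  have h2 : (2 * ρ - tp - tq) ^ 2 ≤ (tp - tq) ^ 2 + 4 * c := by nlinarith
  have h3 : 2 * ρ - tp - tq ≤ Real.sqrt ((tp - tq) ^ 2 + 4 * c) := by
    rw [Real.le_sqrt hu ((sq_nonneg _).trans h2)]
    exact h2
  linarith

lemma quad_lo {tp tq c ρ : ℝ} (hc : 0 ≤ c) (hp : tp ≤ ρ) (hq : tq ≤ ρ)
    (h : c ≤ (ρ - tp) * (ρ - tq)) :
    (tp + tq + Real.sqrt ((tp - tq) ^ 2 + 4 * c)) / 2 ≤ ρ := by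
  have h2 : (tp - tq) ^ 2 + 4 * c ≤ (2 * ρ - tp - tq) ^ 2 := by nlinarith
  have h3 : Real.sqrt ((tp - tq) ^ 2 + 4 * c) ≤ 2 * ρ - tp - tq := by
    calc Real.sqrt ((tp - tq) ^ 2 + 4 * c) ≤ Real.sqrt ((2 * ρ - tp - tq) ^ 2) :=
          Real.sqrt_le_sqrt h2
      _ = 2 * ρ - tp - tq := Real.sqrt_sq (by linarith)
  linarith

theorem stmt_1 {n : ℕ} (hn : 2 ≤ n) (A : Matrix (Fin n) (Fin n) ℝ)
    (hA : ∀ i j, 0 ≤ A i j) (hirr : MatIrred A) (hdiag : ∀ i, A i i = 0)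
    (r s : Fin n → ℝ) (hr : ∀ i, r i = ∑ j, A i j) (hrpos : ∀ i, 0 < r i)
    (hs : ∀ i, s i = ∑ j, A i j * r j)
    (t : Fin n → ℝ) (ht : ∀ i, 0 ≤ t i)
    (B : Matrix (Fin n) (Fin n) ℝ) (hB : B = A + Matrix.diagonal t)
    (f : Fin n → Fin n → ℝ)
    (hf : ∀ i j, f i j =
      (t i + t j + Real.sqrt ((t i - t j) ^ 2 + 4 * s i * s j / (r i * r j))) / 2) :
    sInf {x | ∃ i j, A i j ≠ 0 ∧ x = f i j} ≤ specRad B ∧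
      specRad B ≤ sSup {x | ∃ i j, A i j ≠ 0 ∧ x = f i j} := by
  have hn0 : 0 < n := by omega
  haveI : Nonempty (Fin n) := Fin.pos_iff_nonempty.mp hn0
  have hBnn : ∀ i j, 0 ≤ B i j := by
    intro i j
    rw [hB]
    simp only [Matrix.add_apply, Matrix.diagonal_apply]
    split
    · have := ht i; have := hA i j; linarith
    · simpa using hA i j
  have hAB : ∀ i j, A i j ≤ B i j := by
    intro i j
    rw [hB]
    simp only [Matrix.add_apply, Matrix.diagonal_apply]
    split
    · linarith [ht i]
    · simp
  have hirrB : ∀ i j, ∃ k, 0 < (B ^ k) i j := by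
    intro i j
    obtain ⟨k, -, hk⟩ := hirr i j
    exact ⟨k, lt_of_lt_of_le hk (entry_pow_le_pow hA hAB k i j)⟩
  obtain ⟨ρ, x, hρ0, hxpos, heig, hspec⟩ := perron hn0 B hBnn hirrB
  -- change of variables w i = x i / r i
  set w : Fin n → ℝ := fun j => x j / r j with hwdef
  have hwpos : ∀ j, 0 < w j := fun j => div_pos (hxpos j) (hrpos j)
  have hxw : ∀ j, x j = r j * w j := fun j => by
    show x j = r j * (x j / r j)
    rw [mul_comm, div_mul_cancel₀ _ (hrpos j).ne']
  -- the key eigen-equation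
  have hkeyeq : ∀ i, (ρ - t i) * x i = ∑ j, A i j * x j := by
    intro i
    have h1 := congrFun heig i
    rw [hB, Matrix.add_mulVec] at h1
    simp only [Pi.add_apply, Pi.smul_apply, smul_eq_mul] at h1
    rw [Matrix.mulVec_diagonal] at h1
    have h2 : A.mulVec x i = ∑ j, A i j * x j := rfl
    rw [h2] at h1
    linarith
  -- existence of a support element in each row
  have hsupp : ∀ i : Fin n, ∃ j, A i j ≠ 0 := by
    intro i
    have h0 : (∑ j, A i j) ≠ 0 := by rw [← hr i]; exact (hrpos i).ne'
    obtain ⟨j, -, hj⟩ := Finset.exists_ne_zero_of_sum_ne_zero h0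
    exact ⟨j, hj⟩
  -- ρ strictly dominates each t i
  have hρt : ∀ i, t i < ρ := by
    intro i
    obtain ⟨j, hj⟩ := hsupp i
    have hApos : 0 < A i j := lt_of_le_of_ne (hA i j) (Ne.symm hj)
    have hsumpos : 0 < ∑ j, A i j * x j :=
      Finset.sum_pos' (fun l _ => mul_nonneg (hA i l) (hxpos l).le)
        ⟨j, Finset.mem_univ _, mul_pos hApos (hxpos j)⟩
    nlinarith [hkeyeq i, hxpos i]
  have hsnn : ∀ i, 0 ≤ s i := fun i => by
    rw [hs i]
    exact Finset.sum_nonneg fun j _ => mul_nonneg (hA i j) (hrpos j).le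
  -- finiteness of the target set
  have hFfin : {x | ∃ i j, A i j ≠ 0 ∧ x = f i j}.Finite := by
    apply Set.Finite.subset (Set.finite_range fun pr : Fin n × Fin n => f pr.1 pr.2)
    rintro w ⟨i, j, -, rfl⟩
    exact ⟨(i, j), rfl⟩
  constructor
  · -- lower bound
    obtain ⟨p, -, hp⟩ := Finset.exists_min_image Finset.univ w Finset.univ_nonempty
    obtain ⟨j₁, hj₁⟩ := hsupp p
    obtain ⟨q, hqmem, hq⟩ := Finset.exists_min_image
      (Finset.univ.filter fun j => A p j ≠ 0) w
      ⟨j₁, Finset.mem_filter.mpr ⟨Finset.mem_univ _, hj₁⟩⟩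
    have hApq : A p q ≠ 0 := (Finset.mem_filter.mp hqmem).2
    have hineq1 : s p * w q ≤ (ρ - t p) * (r p * w p) := by
      calc s p * w q = ∑ j, A p j * (r j * w q) := by
            rw [hs p, Finset.sum_mul]
            exact Finset.sum_congr rfl fun j _ => by ring
        _ ≤ ∑ j, A p j * x j := by
            refine Finset.sum_le_sum fun j _ => ?_
            rcases eq_or_ne (A p j) 0 with h0 | h0
            · simp [h0]
            · rw [hxw j]
              have hwj : w q ≤ w j := hq j (Finset.mem_filter.mpr ⟨Finset.mem_univ _, h0⟩)
              exact mul_le_mul_of_nonneg_left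
                (mul_le_mul_of_nonneg_left hwj (hrpos j).le) (hA p j)
        _ = (ρ - t p) * (r p * w p) := by rw [← hkeyeq p, hxw p]
    have hineq2 : s q * w p ≤ (ρ - t q) * (r q * w q) := by
      calc s q * w p = ∑ j, A q j * (r j * w p) := by
            rw [hs q, Finset.sum_mul]
            exact Finset.sum_congr rfl fun j _ => by ring
        _ ≤ ∑ j, A q j * x j := by
            refine Finset.sum_le_sum fun j _ => ?_
            rw [hxw j]
            exact mul_le_mul_of_nonneg_left
              (mul_le_mul_of_nonneg_left (hp j (Finset.mem_univ j)) (hrpos j).le) (hA q j)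
        _ = (ρ - t q) * (r q * w q) := by rw [← hkeyeq q, hxw q]
    have hprod : (s p * w q) * (s q * w p)
        ≤ ((ρ - t p) * (r p * w p)) * ((ρ - t q) * (r q * w q)) :=
      mul_le_mul hineq1 hineq2
        (mul_nonneg (hsnn q) (hwpos p).le)
        (mul_nonneg (sub_nonneg.mpr (hρt p).le)
          (mul_nonneg (hrpos p).le (hwpos p).le))
    have hq2 : s p * s q / (r p * r q) ≤ (ρ - t p) * (ρ - t q) := by
      rw [div_le_iff₀ (mul_pos (hrpos p) (hrpos q))]
      nlinarith [hprod, mul_pos (hwpos p) (hwpos q)]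
    have hc0 : 0 ≤ s p * s q / (r p * r q) :=
      div_nonneg (mul_nonneg (hsnn p) (hsnn q)) (mul_pos (hrpos p) (hrpos q)).le
    have hfle : f p q ≤ ρ := by
      have harg : (t p - t q) ^ 2 + 4 * (s p * s q / (r p * r q))
          = (t p - t q) ^ 2 + 4 * s p * s q / (r p * r q) := by ring
      have := quad_lo hc0 (hρt p).le (hρt q).le hq2
      rw [harg] at this
      rw [hf p q]
      exact this
    calc sInf {x | ∃ i j, A i j ≠ 0 ∧ x = f i j}
        ≤ f p q := csInf_le hFfin.bddBelow ⟨p, q, hApq, rfl⟩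
      _ ≤ ρ := hfle
      _ = specRad B := hspec.symm
  · -- upper bound
    obtain ⟨p, -, hp⟩ := Finset.exists_max_image Finset.univ w Finset.univ_nonempty
    obtain ⟨j₁, hj₁⟩ := hsupp p
    obtain ⟨q, hqmem, hq⟩ := Finset.exists_max_image
      (Finset.univ.filter fun j => A p j ≠ 0) w
      ⟨j₁, Finset.mem_filter.mpr ⟨Finset.mem_univ _, hj₁⟩⟩
    have hApq : A p q ≠ 0 := (Finset.mem_filter.mp hqmem).2
    have hineq1 : (ρ - t p) * (r p * w p) ≤ s p * w q := by
      calc (ρ - t p) * (r p * w p) = ∑ j, A p j * x j := by rw [← hkeyeq p, hxw p]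
        _ ≤ ∑ j, A p j * (r j * w q) := by
            refine Finset.sum_le_sum fun j _ => ?_
            rcases eq_or_ne (A p j) 0 with h0 | h0
            · simp [h0]
            · rw [hxw j]
              have hwj : w j ≤ w q := hq j (Finset.mem_filter.mpr ⟨Finset.mem_univ _, h0⟩)
              exact mul_le_mul_of_nonneg_left
                (mul_le_mul_of_nonneg_left hwj (hrpos j).le) (hA p j)
        _ = s p * w q := by
            rw [hs p, Finset.sum_mul]
            exact Finset.sum_congr rfl fun j _ => by ring
    have hineq2 : (ρ - t q) * (r q * w q) ≤ s q * w p := by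
      calc (ρ - t q) * (r q * w q) = ∑ j, A q j * x j := by rw [← hkeyeq q, hxw q]
        _ ≤ ∑ j, A q j * (r j * w p) := by
            refine Finset.sum_le_sum fun j _ => ?_
            rw [hxw j]
            exact mul_le_mul_of_nonneg_left
              (mul_le_mul_of_nonneg_left (hp j (Finset.mem_univ j)) (hrpos j).le) (hA q j)
        _ = s q * w p := by
            rw [hs q, Finset.sum_mul]
            exact Finset.sum_congr rfl fun j _ => by ring
    have hprod : ((ρ - t p) * (r p * w p)) * ((ρ - t q) * (r q * w q))
        ≤ (s p * w q) * (s q * w p) :=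
      mul_le_mul hineq1 hineq2
        (mul_nonneg (sub_nonneg.mpr (hρt q).le)
          (mul_nonneg (hrpos q).le (hwpos q).le))
        (mul_nonneg (hsnn p) (hwpos q).le)
    have hq2 : (ρ - t p) * (ρ - t q) ≤ s p * s q / (r p * r q) := by
      rw [le_div_iff₀ (mul_pos (hrpos p) (hrpos q))]
      nlinarith [hprod, mul_pos (hwpos p) (hwpos q)]
    have hfge : ρ ≤ f p q := by
      have harg : (t p - t q) ^ 2 + 4 * (s p * s q / (r p * r q))
          = (t p - t q) ^ 2 + 4 * s p * s q / (r p * r q) := by ring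
      have := quad_up (hρt p).le (hρt q).le hq2
      rw [harg] at this
      rw [hf p q]
      exact this
    calc specRad B = ρ := hspec
      _ ≤ f p q := hfge
      _ ≤ sSup {x | ∃ i j, A i j ≠ 0 ∧ x = f i j} :=
          le_csSup hFfin.bddAbove ⟨p, q, hApq, rfl⟩
end

section
/- Let n ≥ 2 and let A = (a_{ij}) be an n×n nonnegative irreducible real matrix with a_{ii} = 0 for all i, row sums r_1,…,r_n, and s_i = Σ_{j=1}^n a_{ij} r_j. Let t_1,…,t_n ≥ 0 and B = A + diag(t_1,…,t_n). If there is a constant c with t_i + s_i/r_i = c for all i ∈ {1,…,n}, then ρ(B) = c; in particular both bounds min{f(i,j) : a_{ij} ≠ 0} ≤ ρ(B) ≤ max{f(i,j) : a_{ij} ≠ 0} hold with equality, where f(i,j) = (t_i + t_j + sqrt((t_i − t_j)^2 + 4 s_i s_j/(r_i r_j)))/2. -/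
open Matrix

theorem stmt_2 {n : ℕ} (hn : 2 ≤ n) (A : Matrix (Fin n) (Fin n) ℝ)
    (hA : ∀ i j, 0 ≤ A i j) (hirr : MatIrred A) (hdiag : ∀ i, A i i = 0)
    (r s : Fin n → ℝ) (hr : ∀ i, r i = ∑ j, A i j)
    (hs : ∀ i, s i = ∑ j, A i j * r j)
    (t : Fin n → ℝ) (ht : ∀ i, 0 ≤ t i)
    (B : Matrix (Fin n) (Fin n) ℝ) (hB : B = A + Matrix.diagonal t)
    (f : Fin n → Fin n → ℝ)
    (hf : ∀ i j, f i j =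
      (t i + t j + Real.sqrt ((t i - t j) ^ 2 + 4 * s i * s j / (r i * r j))) / 2)
    (c : ℝ) (hc : ∀ i, t i + s i / r i = c) :
    specRad B = c ∧
      specRad B = sInf {x | ∃ i j, A i j ≠ 0 ∧ x = f i j} ∧
      specRad B = sSup {x | ∃ i j, A i j ≠ 0 ∧ x = f i j} := by
  classical
  have i0 : Fin n := ⟨0, by omega⟩
  -- row sums are positive
  have hrpos : ∀ i, 0 < r i := by
    intro i
    rcases (Finset.sum_nonneg (fun j _ => hA i j)).lt_or_eq with h | h
    · rw [hr]; exact h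
    · exfalso
      have hzero : ∀ j, A i j = 0 := by
        intro j
        have := (Finset.sum_eq_zero_iff_of_nonneg (fun j _ => hA i j)).mp h.symm
        exact this j (Finset.mem_univ j)
      obtain ⟨k, hk, hpos⟩ := hirr i i
      obtain ⟨m, rfl⟩ := Nat.exists_eq_add_of_lt hk
      rw [zero_add] at hpos
      have : (A ^ (m + 1)) i i = 0 := by
        rw [pow_succ']
        simp [Matrix.mul_apply, hzero]
      rw [this] at hpos; exact lt_irrefl _ hpos
  -- there is a positive entry in each row
  have hrow : ∀ i, ∃ j, 0 < A i j := by
    intro i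
    by_contra h
    push_neg at h
    have : r i = 0 := by
      rw [hr]
      exact Finset.sum_eq_zero (fun j _ => le_antisymm (h j) (hA i j))
    exact absurd this (hrpos i).ne'
  have hspos : ∀ i, 0 < s i := by
    intro i
    obtain ⟨j, hj⟩ := hrow i
    rw [hs]
    exact Finset.sum_pos' (fun j _ => mul_nonneg (hA i j) (hrpos j).le)
      ⟨j, Finset.mem_univ j, mul_pos hj (hrpos j)⟩
  have hct : ∀ i, t i < c := by
    intro i
    have := hc i
    nlinarith [div_pos (hspos i) (hrpos i)]
  have hcpos : 0 < c := lt_of_le_of_lt (ht i0) (hct i0)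
  -- B is entrywise nonnegative
  have hBnn : ∀ i j, 0 ≤ B i j := by
    intro i j
    rw [hB, Matrix.add_apply]
    rcases eq_or_ne i j with rfl | hij
    · rw [Matrix.diagonal_apply_eq]; exact add_nonneg (hA i i) (ht i)
    · rw [Matrix.diagonal_apply_ne _ hij, add_zero]; exact hA i j
  -- key identity
  have hsir : ∀ i, t i * r i + s i = c * r i := by
    intro i
    have := congrArg (· * r i) (hc i)
    simpa [add_mul, div_mul_cancel₀ _ (hrpos i).ne'] using this
  -- r is an eigenvector of B with eigenvalue c
  have hBr : ∀ i, ∑ j, B i j * r j = c * r i := by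
    intro i
    have h2 : ∑ j, B i j * r j = s i + t i * r i := by
      rw [hB, hs]
      simp only [Matrix.add_apply, add_mul, Finset.sum_add_distrib]
      congr 1
      rw [Finset.sum_eq_single i]
      · simp
      · intro b _ hb; simp [Matrix.diagonal_apply_ne' _ hb]
      · intro h; exact absurd (Finset.mem_univ i) h
    rw [h2]
    linarith [hsir i]
  -- spectrum characterization
  have hspec : ∀ μ : ℂ, μ ∈ spectrum ℂ (B.map Complex.ofReal) ↔
      Module.End.HasEigenvalue (Matrix.toLin' (B.map Complex.ofReal)) μ := by
    intro μ
    rw [← AlgEquiv.spectrum_eq (Matrix.toLinAlgEquiv (Pi.basisFun ℂ (Fin n))),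
      Module.End.hasEigenvalue_iff_mem_spectrum]
    rfl
  -- c is an eigenvalue
  have hcmem : (c : ℂ) ∈ spectrum ℂ (B.map Complex.ofReal) := by
    rw [hspec]
    apply Module.End.hasEigenvalue_of_hasEigenvector
      (x := fun j => (r j : ℂ))
    constructor
    · rw [Module.End.mem_eigenspace_iff]
      funext i
      simp only [Matrix.toLin'_apply, Matrix.mulVec, dotProduct, Matrix.map_apply,
        Pi.smul_apply, smul_eq_mul]
      norm_cast
      exact hBr i
    · intro h
      have := congrFun h i0
      simp only [Pi.zero_apply, Complex.ofReal_eq_zero] at this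
      exact absurd this (hrpos i0).ne'
  -- every eigenvalue has modulus at most c
  have hbound : ∀ μ : ℂ, μ ∈ spectrum ℂ (B.map Complex.ofReal) → ‖μ‖ ≤ c := by
    intro μ hμ
    rw [hspec] at hμ
    obtain ⟨v, hv⟩ := hμ.exists_hasEigenvector
    have hveq : ∀ i, ∑ j, (B i j : ℂ) * v j = μ * v i := by
      intro i
      have := congrFun hv.apply_eq_smul i
      simpa [Matrix.toLin'_apply, Matrix.mulVec, dotProduct, Matrix.map_apply] using this
    obtain ⟨i1, -, hmax⟩ := Finset.exists_max_image Finset.univ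
      (fun i => ‖v i‖ / r i) ⟨i0, Finset.mem_univ i0⟩
    set m := ‖v i1‖ / r i1 with hm
    have hmpos : 0 < m := by
      obtain ⟨j, hj⟩ := Function.ne_iff.mp hv.right
      calc (0:ℝ) < ‖v j‖ / r j := by
            apply div_pos _ (hrpos j)
            simpa using hj
        _ ≤ m := hmax j (Finset.mem_univ j)
    have hle : ∀ j, ‖v j‖ ≤ m * r j := by
      intro j
      have := hmax j (Finset.mem_univ j)
      rw [div_le_iff₀ (hrpos j)] at this
      linarith
    have hvi1 : ‖v i1‖ = m * r i1 := by
      rw [hm, div_mul_cancel₀ _ (hrpos i1).ne']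
    have key : ‖μ‖ * (m * r i1) ≤ m * (c * r i1) := by
      calc ‖μ‖ * (m * r i1) = ‖μ * v i1‖ := by
            rw [norm_mul, hvi1]
        _ = ‖∑ j, (B i1 j : ℂ) * v j‖ := by rw [hveq i1]
        _ ≤ ∑ j, ‖(B i1 j : ℂ) * v j‖ := norm_sum_le _ _
        _ = ∑ j, B i1 j * ‖v j‖ := by
            congr 1; funext j
            rw [norm_mul, Complex.norm_real, Real.norm_eq_abs, abs_of_nonneg (hBnn i1 j)]
        _ ≤ ∑ j, B i1 j * (m * r j) := by
            apply Finset.sum_le_sum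
            intro j _
            exact mul_le_mul_of_nonneg_left (hle j) (hBnn i1 j)
        _ = m * ∑ j, B i1 j * r j := by
            rw [Finset.mul_sum]; congr 1; funext j; ring
        _ = m * (c * r i1) := by rw [hBr i1]
    nlinarith [key, mul_pos hmpos (hrpos i1)]
  -- hence the spectral radius equals c
  have h1 : specRad B = c := by
    unfold specRad
    have hmem : c ∈ {x : ℝ | ∃ μ : ℂ, μ ∈ spectrum ℂ (B.map Complex.ofReal) ∧
        x = ‖μ‖} :=
      ⟨(c : ℂ), hcmem, by rw [Complex.norm_real, Real.norm_eq_abs, abs_of_pos hcpos]⟩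
    have hbdd : BddAbove {x : ℝ | ∃ μ : ℂ, μ ∈ spectrum ℂ (B.map Complex.ofReal) ∧
        x = ‖μ‖} :=
      ⟨c, by rintro x ⟨μ, hμ, rfl⟩; exact hbound μ hμ⟩
    exact le_antisymm (csSup_le ⟨c, hmem⟩ (by rintro x ⟨μ, hμ, rfl⟩; exact hbound μ hμ))
      (le_csSup hbdd hmem)
  -- f i j = c always
  have hfc : ∀ i j, f i j = c := by
    intro i j
    have hsi : s i = (c - t i) * r i := by linarith [hsir i]
    have hsj : s j = (c - t j) * r j := by linarith [hsir j]
    have harg : (t i - t j) ^ 2 + 4 * s i * s j / (r i * r j)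
        = (2 * c - t i - t j) ^ 2 := by
      rw [hsi, hsj]
      have hri := (hrpos i).ne'
      have hrj := (hrpos j).ne'
      field_simp
      ring
    rw [hf, harg, Real.sqrt_sq (by nlinarith [hct i, hct j])]
    ring
  have hset : {x | ∃ i j, A i j ≠ 0 ∧ x = f i j} = {c} := by
    ext x
    simp only [Set.mem_setOf_eq, Set.mem_singleton_iff]
    constructor
    · rintro ⟨i, j, -, rfl⟩; exact hfc i j
    · rintro rfl
      obtain ⟨j, hj⟩ := hrow i0
      exact ⟨i0, j, hj.ne', (hfc i0 j).symm⟩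
  refine ⟨h1, ?_, ?_⟩
  · rw [h1, hset, csInf_singleton]
  · rw [h1, hset, csSup_singleton]
end

section
/- Let n ≥ 2 and let A = (a_{ij}) be an n×n nonnegative irreducible real matrix with a_{ii} = 0 for all i, row sums r_1,…,r_n, and s_i = Σ_{j=1}^n a_{ij} r_j. Let t_1,…,t_n ≥ 0 and B = A + diag(t_1,…,t_n). Suppose the index set {1,…,n} is partitioned into two nonempty sets U and W such that a_{ij} = 0 whenever i,j ∈ U or i,j ∈ W (a bipartite block structure), and suppose there exist l > 0 and a constant m with t_i + l·s_i/r_i = m for all i ∈ U and t_j + s_j/(l·r_j) = m for all j ∈ W. Then ρ(B) = m; consequently if l < 1 then ρ(B) = max{f(i,j) : a_{ij} ≠ 0} and if l > 1 then ρ(B) = min{f(i,j) : a_{ij} ≠ 0}, where f(i,j) = (t_i + t_j + sqrt((t_i − t_j)^2 + 4 s_i s_j/(r_i r_j)))/2. -/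
open Matrix

theorem stmt_3 {n : ℕ} (hn : 2 ≤ n) (A : Matrix (Fin n) (Fin n) ℝ)
    (hA : ∀ i j, 0 ≤ A i j) (hirr : MatIrred A) (hdiag : ∀ i, A i i = 0)
    (r s : Fin n → ℝ) (hr : ∀ i, r i = ∑ j, A i j)
    (hs : ∀ i, s i = ∑ j, A i j * r j)
    (t : Fin n → ℝ) (ht : ∀ i, 0 ≤ t i)
    (B : Matrix (Fin n) (Fin n) ℝ) (hB : B = A + Matrix.diagonal t)
    (f : Fin n → Fin n → ℝ)
    (hf : ∀ i j, f i j =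
      (t i + t j + Real.sqrt ((t i - t j) ^ 2 + 4 * s i * s j / (r i * r j))) / 2)
    (U W : Set (Fin n)) (hU : U.Nonempty) (hW : W.Nonempty)
    (hUW : U ∪ W = Set.univ) (hdisj : Disjoint U W)
    (hbip : ∀ i j, (i ∈ U ∧ j ∈ U) ∨ (i ∈ W ∧ j ∈ W) → A i j = 0)
    (l : ℝ) (hl : 0 < l) (m : ℝ)
    (hmU : ∀ i ∈ U, t i + l * s i / r i = m)
    (hmW : ∀ j ∈ W, t j + s j / (l * r j) = m) :
    specRad B = m ∧
      (l < 1 → specRad B = sSup {x | ∃ i j, A i j ≠ 0 ∧ x = f i j}) ∧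
      (1 < l → specRad B = sInf {x | ∃ i j, A i j ≠ 0 ∧ x = f i j}) := by
  classical
  -- every row of A has a positive entry
  have hApos : ∀ i, ∃ p, 0 < A i p := by
    intro i
    by_contra h
    push_neg at h
    have hz : ∀ p, A i p = 0 := fun p => le_antisymm (h p) (hA i p)
    have hzero : ∀ k j, 0 < k → (A ^ k) i j = 0 := by
      intro k j hk
      obtain ⟨k', rfl⟩ := Nat.exists_eq_succ_of_ne_zero hk.ne'
      rw [pow_succ']
      simp [Matrix.mul_apply, hz]
    obtain ⟨k, hk, hpos⟩ := hirr i i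
    rw [hzero k i hk] at hpos
    exact lt_irrefl 0 hpos
  have hrpos : ∀ i, 0 < r i := by
    intro i
    obtain ⟨p, hp⟩ := hApos i
    rw [hr]
    exact lt_of_lt_of_le hp (Finset.single_le_sum (fun j _ => hA i j) (Finset.mem_univ p))
  have hspos : ∀ i, 0 < s i := by
    intro i
    obtain ⟨p, hp⟩ := hApos i
    rw [hs]
    exact lt_of_lt_of_le (mul_pos hp (hrpos p))
      (Finset.single_le_sum (fun j _ => mul_nonneg (hA i j) (hrpos j).le) (Finset.mem_univ p))
  set v : Fin n → ℝ := fun i => if i ∈ U then r i else l * r i with hvdef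
  have hvpos : ∀ i, 0 < v i := by
    intro i
    by_cases h : i ∈ U <;> simp [hvdef, h, hrpos i, mul_pos hl (hrpos i)]
  have hm0 : 0 ≤ m := by
    obtain ⟨i, hi⟩ := hU
    rw [← hmU i hi]
    exact add_nonneg (ht i) (div_nonneg (mul_nonneg hl.le (hspos i).le) (hrpos i).le)
  have hmemW : ∀ i, i ∉ U → i ∈ W := by
    intro i hi
    have h2 : i ∈ U ∪ W := hUW ▸ Set.mem_univ i
    exact (Set.mem_union i U W).mp h2 |>.resolve_left hi
  have hBnn : ∀ i j, 0 ≤ B i j := by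
    intro i j
    rw [hB]
    rcases eq_or_ne i j with rfl | hij
    · simp [Matrix.add_apply, Matrix.diagonal_apply_eq]
      exact add_nonneg (hA i i) (ht i)
    · simp [Matrix.add_apply, Matrix.diagonal_apply_ne' t (Ne.symm hij), hA i j]
  -- B v = m v
  have hBv : ∀ i, ∑ j, B i j * v j = m * v i := by
    intro i
    have hdiagsum : ∑ j, Matrix.diagonal t i j * v j = t i * v i := by
      rw [Finset.sum_eq_single i]
      · simp
      · intro b _ hb
        rw [Matrix.diagonal_apply_ne' t hb, zero_mul]
      · simp
    have hsplit : ∑ j, B i j * v j = (∑ j, A i j * v j) + t i * v i := by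
      rw [hB]
      simp only [Matrix.add_apply, add_mul]
      rw [Finset.sum_add_distrib, hdiagsum]
    by_cases hiU : i ∈ U
    · have h1 : ∑ j, A i j * v j = l * s i := by
        rw [hs, Finset.mul_sum]
        apply Finset.sum_congr rfl
        intro j _
        by_cases hjU : j ∈ U
        · rw [hbip i j (Or.inl ⟨hiU, hjU⟩)]; ring
        · simp only [hvdef, if_neg hjU]; ring
      rw [hsplit, h1]
      have hm := hmU i hiU
      have hrne : r i ≠ 0 := (hrpos i).ne'
      simp only [hvdef, if_pos hiU]
      field_simp at hm
      linarith [hm]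
    · have hiW := hmemW i hiU
      have h1 : ∑ j, A i j * v j = s i := by
        rw [hs]
        apply Finset.sum_congr rfl
        intro j _
        by_cases hjU : j ∈ U
        · simp only [hvdef, if_pos hjU]
        · rw [hbip i j (Or.inr ⟨hiW, hmemW j hjU⟩)]; ring
      rw [hsplit, h1]
      have hm := hmW i hiW
      have hrne : r i ≠ 0 := (hrpos i).ne'
      have hlne : l ≠ 0 := hl.ne'
      simp only [hvdef, if_neg hiU]
      field_simp at hm
      nlinarith [hm]
  have hentry : ∀ (μ : ℂ) (i x : Fin n),
      ((μ • 1 - B.map Complex.ofReal) : Matrix (Fin n) (Fin n) ℂ) i x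
        = (if i = x then μ else 0) - (B i x : ℂ) := by
    intro μ i x
    simp [Matrix.sub_apply, Matrix.one_apply, Matrix.map_apply, mul_ite, mul_one, mul_zero]
  -- m is an eigenvalue of the complexified B
  have hdet : ((m : ℂ) • 1 - B.map Complex.ofReal).det = 0 := by
    rw [← Matrix.exists_mulVec_eq_zero_iff]
    refine ⟨fun i => (v i : ℂ), ?_, ?_⟩
    · intro h
      have := congrFun h ⟨0, by omega⟩
      simp only [Pi.zero_apply, Complex.ofReal_eq_zero] at this
      exact (hvpos _).ne' this
    · funext i
      simp only [Matrix.mulVec, dotProduct, Pi.zero_apply, hentry, sub_mul,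
        Finset.sum_sub_distrib, ite_mul, zero_mul, Finset.sum_ite_eq, Finset.mem_univ,
        if_true]
      rw [sub_eq_zero]
      exact_mod_cast (hBv i).symm
  have hmspec : (m : ℂ) ∈ spectrum ℂ (B.map Complex.ofReal) := by
    rw [spectrum.mem_iff]
    intro hunit
    rw [Matrix.isUnit_iff_isUnit_det, Algebra.algebraMap_eq_smul_one, hdet] at hunit
    exact not_isUnit_zero hunit
  -- upper bound
  have hub : ∀ x ∈ {x : ℝ | ∃ μ : ℂ, μ ∈ spectrum ℂ (B.map Complex.ofReal) ∧ x = ‖μ‖},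
      x ≤ m := by
    rintro x ⟨μ, hμ, rfl⟩
    rw [spectrum.mem_iff] at hμ
    have hdet0 : ((μ : ℂ) • 1 - B.map Complex.ofReal).det = 0 := by
      by_contra h
      exact hμ (by
        rw [Matrix.isUnit_iff_isUnit_det, Algebra.algebraMap_eq_smul_one]
        exact Ne.isUnit h)
    obtain ⟨y, hy0, hyz⟩ := Matrix.exists_mulVec_eq_zero_iff.mpr hdet0
    have heig : ∀ i, μ * y i = ∑ j, (B i j : ℂ) * y j := by
      intro i
      have h3 := congrFun hyz i
      simp only [Matrix.mulVec, dotProduct, Pi.zero_apply, hentry, sub_mul,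
        Finset.sum_sub_distrib, ite_mul, zero_mul, Finset.sum_ite_eq, Finset.mem_univ,
        if_true] at h3
      linear_combination h3
    obtain ⟨i0, -, hmax⟩ := Finset.exists_max_image Finset.univ
      (fun i => ‖y i‖ / v i) ⟨⟨0, by omega⟩, Finset.mem_univ _⟩
    set c := ‖y i0‖ / v i0 with hcdef
    have hcpos : 0 < c := by
      obtain ⟨j, hj⟩ : ∃ j, y j ≠ 0 := by
        by_contra h
        push_neg at h
        exact hy0 (funext h)
      have : 0 < ‖y j‖ / v j :=
        div_pos (by simpa using hj) (hvpos j)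
      exact lt_of_lt_of_le this (hmax j (Finset.mem_univ j))
    have hbound : ∀ j, ‖y j‖ ≤ c * v j := by
      intro j
      have := hmax j (Finset.mem_univ j)
      rw [div_le_iff₀ (hvpos j)] at this
      linarith [this]
    have h2 : ‖y i0‖ = c * v i0 := by
      rw [hcdef, div_mul_cancel₀ _ (hvpos i0).ne']
    have h1 : ‖μ‖ * ‖y i0‖ ≤ c * (m * v i0) := by
      calc ‖μ‖ * ‖y i0‖ = ‖μ * y i0‖ := (norm_mul _ _).symm
        _ = ‖∑ j, (B i0 j : ℂ) * y j‖ := by rw [heig i0]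
        _ ≤ ∑ j, ‖(B i0 j : ℂ) * y j‖ := norm_sum_le _ _
        _ = ∑ j, B i0 j * ‖y j‖ := by
            apply Finset.sum_congr rfl
            intro j _
            rw [norm_mul, Complex.norm_real, Real.norm_eq_abs, abs_of_nonneg (hBnn i0 j)]
        _ ≤ ∑ j, B i0 j * (c * v j) := by
            apply Finset.sum_le_sum
            intro j _
            exact mul_le_mul_of_nonneg_left (hbound j) (hBnn i0 j)
        _ = c * ∑ j, B i0 j * v j := by rw [Finset.mul_sum]; apply Finset.sum_congr rfl; intros; ring
        _ = c * (m * v i0) := by rw [hBv i0]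
    rw [h2] at h1
    have hcv : 0 < c * v i0 := mul_pos hcpos (hvpos i0)
    nlinarith [h1, hcv]
  have hmmem : m ∈ {x : ℝ | ∃ μ : ℂ, μ ∈ spectrum ℂ (B.map Complex.ofReal) ∧ x = ‖μ‖} :=
    ⟨(m : ℂ), hmspec, by rw [Complex.norm_real, Real.norm_eq_abs, abs_of_nonneg hm0]⟩
  have key : specRad B = m := by
    unfold specRad
    exact le_antisymm (csSup_le ⟨m, hmmem⟩ hub) (le_csSup ⟨m, hub⟩ hmmem)
  -- f i j = m for nonzero entries
  have hkeyUW : ∀ i ∈ U, ∀ j ∈ W, f i j = m := by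
    intro i hi j hj
    have ha := hmU i hi
    have hb := hmW j hj
    set a := l * s i / r i with hadef
    set b := s j / (l * r j) with hbdef
    have hrine : r i ≠ 0 := (hrpos i).ne'
    have hrjne : r j ≠ 0 := (hrpos j).ne'
    have hlne : l ≠ 0 := hl.ne'
    have hab : 4 * s i * s j / (r i * r j) = 4 * (a * b) := by
      rw [hadef, hbdef]
      field_simp
    have ha0 : 0 ≤ a := div_nonneg (mul_nonneg hl.le (hspos i).le) (hrpos i).le
    have hb0 : 0 ≤ b := div_nonneg (hspos j).le (mul_nonneg hl.le (hrpos j).le)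
    have hti : t i = m - a := by linarith [ha]
    have htj : t j = m - b := by linarith [hb]
    rw [hf, hti, htj, hab]
    have harg : (m - a - (m - b)) ^ 2 + 4 * (a * b) = (a + b) ^ 2 := by ring
    rw [harg, Real.sqrt_sq (by linarith)]
    ring
  have hfm : ∀ i j, A i j ≠ 0 → f i j = m := by
    intro i j hij
    by_cases hiU : i ∈ U
    · by_cases hjU : j ∈ U
      · exact absurd (hbip i j (Or.inl ⟨hiU, hjU⟩)) hij
      · exact hkeyUW i hiU j (hmemW j hjU)
    · have hiW := hmemW i hiU
      by_cases hjU : j ∈ U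
      · have := hkeyUW j hjU i hiW
        rw [hf] at this ⊢
        rw [← this]
        ring_nf
      · exact absurd (hbip i j (Or.inr ⟨hiW, hmemW j hjU⟩)) hij
  have hne : ∃ i j, A i j ≠ 0 := by
    obtain ⟨p, hp⟩ := hApos ⟨0, by omega⟩
    exact ⟨_, p, hp.ne'⟩
  have hset : {x | ∃ i j, A i j ≠ 0 ∧ x = f i j} = {m} := by
    ext x
    simp only [Set.mem_setOf_eq, Set.mem_singleton_iff]
    constructor
    · rintro ⟨i, j, hij, rfl⟩
      exact hfm i j hij
    · rintro rfl
      obtain ⟨i, j, hij⟩ := hne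
      exact ⟨i, j, hij, (hfm i j hij).symm⟩
  refine ⟨key, fun _ => ?_, fun _ => ?_⟩
  · rw [hset, csSup_singleton]; exact key
  · rw [hset, csInf_singleton]; exact key
end

section
/- Let n ≥ 2 and let A = (a_{ij}) be an n×n nonnegative irreducible real matrix with a_{ii} = 0 for all i, row sums r_1,…,r_n, and s_i = Σ_{j=1}^n a_{ij} r_j. Let t_1,…,t_n ≥ 0, B = A + diag(t_1,…,t_n), and f(i,j) = (t_i + t_j + sqrt((t_i − t_j)^2 + 4 s_i s_j/(r_i r_j)))/2. If ρ(B) = max{f(i,j) : a_{ij} ≠ 0} or ρ(B) = min{f(i,j) : a_{ij} ≠ 0}, then one of the following holds: (i) t_i + s_i/r_i takes the same value for all i ∈ {1,…,n}; or (ii) the index set {1,…,n} can be partitioned into two nonempty sets U and W with a_{ij} = 0 whenever i,j ∈ U or i,j ∈ W, and there exist l > 0 and a constant m with t_i + l·s_i/r_i = m for all i ∈ U and t_j + s_j/(l·r_j) = m for all j ∈ W. -/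
open Matrix

open Filter

namespace AuxPF
variable {n : ℕ}


variable {n : ℕ}

lemma pow_nonneg {M : Matrix (Fin n) (Fin n) ℝ} (hM : ∀ i j, 0 ≤ M i j) (m : ℕ) :
    ∀ i j, 0 ≤ (M ^ m) i j := by
  induction m with
  | zero => intro i j; simp [Matrix.one_apply]; split <;> norm_num
  | succ k ih =>
      intro i j
      rw [pow_succ, Matrix.mul_apply]
      exact Finset.sum_nonneg fun l _ => mul_nonneg (ih i l) (hM l j)

lemma pow_le_pow {M N : Matrix (Fin n) (Fin n) ℝ} (hM : ∀ i j, 0 ≤ M i j)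
    (hMN : ∀ i j, M i j ≤ N i j) (m : ℕ) : ∀ i j, (M ^ m) i j ≤ (N ^ m) i j := by
  induction m with
  | zero => intro i j; simp
  | succ k ih =>
      intro i j
      rw [pow_succ, pow_succ, Matrix.mul_apply, Matrix.mul_apply]
      refine Finset.sum_le_sum fun l _ => ?_
      have h1 : 0 ≤ (M ^ k) i l := pow_nonneg hM k i l
      have h2 : 0 ≤ M l j := hM l j
      nlinarith [ih i l, hMN l j]

/-- positivity persists when multiplying by a nonneg matrix with positive diagonal -/
lemma pos_persist {P : Matrix (Fin n) (Fin n) ℝ} (hP : ∀ i j, 0 ≤ P i j)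
    (hPd : ∀ i, 0 < P i i) {i j : Fin n} {m : ℕ} (h : 0 < (P ^ m) i j) :
    ∀ M, m ≤ M → 0 < (P ^ M) i j := by
  intro M hM
  induction M with
  | zero =>
      have : m = 0 := by omega
      subst this; simpa using h
  | succ k ih =>
      rcases Nat.lt_or_ge m (k+1) with hlt | hge
      · have hk : m ≤ k := by omega
        have hik : 0 < (P ^ k) i j := ih hk
        rw [pow_succ, Matrix.mul_apply]
        have : (P ^ k) i j * P j j ≤ ∑ l, (P ^ k) i l * P l j :=
          Finset.single_le_sum (fun l _ => mul_nonneg (pow_nonneg hP k i l) (hP l j))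
            (Finset.mem_univ j)
        have := mul_pos hik (hPd j)
        linarith
      · have : m = k + 1 := by omega
        simpa [this] using h

lemma mulVec_nonneg {M : Matrix (Fin n) (Fin n) ℝ} (hM : ∀ i j, 0 ≤ M i j)
    {z : Fin n → ℝ} (hz : ∀ i, 0 ≤ z i) : ∀ i, 0 ≤ (M *ᵥ z) i := by
  intro i
  simp only [Matrix.mulVec, dotProduct]
  exact Finset.sum_nonneg fun j _ => mul_nonneg (hM i j) (hz j)

lemma mulVec_mono {M : Matrix (Fin n) (Fin n) ℝ} (hM : ∀ i j, 0 ≤ M i j)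
    {z w : Fin n → ℝ} (hzw : ∀ i, z i ≤ w i) : ∀ i, (M *ᵥ z) i ≤ (M *ᵥ w) i := by
  intro i
  simp only [Matrix.mulVec, dotProduct]
  exact Finset.sum_le_sum fun j _ => mul_le_mul_of_nonneg_left (hzw j) (hM i j)

section Spec

attribute [local instance] Matrix.linftyOpNormedRing Matrix.linftyOpNormedAlgebra

variable (hn : 0 < n)
include hn

lemma spec_nonempty (M : Matrix (Fin n) (Fin n) ℝ) :
    (spectrum ℂ (M.map Complex.ofReal)).Nonempty := by
  have : Nonempty (Fin n) := ⟨⟨0, hn⟩⟩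
  exact spectrum.nonempty_of_isAlgClosed_of_finiteDimensional ℂ _

omit hn in
lemma absSet_finite (M : Matrix (Fin n) (Fin n) ℝ) :
    {x : ℝ | ∃ μ : ℂ, μ ∈ spectrum ℂ (M.map Complex.ofReal) ∧ x = ‖μ‖}.Finite := by
  have h1 : {x : ℝ | ∃ μ : ℂ, μ ∈ spectrum ℂ (M.map Complex.ofReal) ∧ x = ‖μ‖}
      = (fun μ : ℂ => ‖μ‖) '' (spectrum ℂ (M.map Complex.ofReal)) := by
    ext x; simp [Set.mem_image, eq_comm]
  rw [h1]
  exact (Matrix.finite_spectrum _).image _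

lemma specRad_mem (M : Matrix (Fin n) (Fin n) ℝ) :
    ∃ μ : ℂ, μ ∈ spectrum ℂ (M.map Complex.ofReal) ∧ ‖μ‖ = specRad M := by
  have hne : {x : ℝ | ∃ μ : ℂ, μ ∈ spectrum ℂ (M.map Complex.ofReal) ∧ x = ‖μ‖}.Nonempty := by
    obtain ⟨μ, hμ⟩ := spec_nonempty hn M
    exact ⟨‖μ‖, μ, hμ, rfl⟩
  have := hne.csSup_mem (absSet_finite M)
  obtain ⟨μ, hμ, hx⟩ := this
  exact ⟨μ, hμ, hx.symm⟩

omit hn in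
lemma abs_le_specRad {M : Matrix (Fin n) (Fin n) ℝ} {μ : ℂ}
    (hμ : μ ∈ spectrum ℂ (M.map Complex.ofReal)) : ‖μ‖ ≤ specRad M :=
  le_csSup ((absSet_finite M).bddAbove) ⟨μ, hμ, rfl⟩

lemma specRad_nonneg (M : Matrix (Fin n) (Fin n) ℝ) : 0 ≤ specRad M := by
  obtain ⟨μ, _, h⟩ := specRad_mem hn M
  rw [← h]; exact norm_nonneg μ

end Spec



-- placeholders for part1 results
section Spec
attribute [local instance] Matrix.linftyOpNormedRing Matrix.linftyOpNormedAlgebra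

lemma map_pow' (M : Matrix (Fin n) (Fin n) ℝ) (m : ℕ) :
    (M ^ m).map Complex.ofReal = (M.map Complex.ofReal) ^ m := by
  have := map_pow (Complex.ofRealHom.mapMatrix) M m
  exact this

lemma rowsum_le_norm {M : Matrix (Fin n) (Fin n) ℝ} (hM : ∀ i j, 0 ≤ M i j) (i : Fin n) :
    ∑ j, M i j ≤ ‖M.map Complex.ofReal‖ := by
  rw [Matrix.linfty_opNorm_def]
  have h1 : ∑ j, M i j = ((∑ j, ‖(M.map Complex.ofReal) i j‖₊ : NNReal) : ℝ) := by
    push_cast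
    refine Finset.sum_congr rfl fun j _ => ?_
    rw [Matrix.map_apply, Complex.norm_real, Real.norm_eq_abs, abs_of_nonneg (hM i j)]
  rw [h1]
  exact NNReal.coe_le_coe.mpr (Finset.le_sup
    (f := fun i => ∑ j, ‖(M.map Complex.ofReal) i j‖₊) (Finset.mem_univ i))

/-- Key subinvariance lemma: if `B z ≥ λ z` entrywise with `z ≥ 0`, `z ≠ 0`, `λ > 0`,
then `λ ≤ specRad B`. -/
lemma le_specRad_of_subinvariant (hn : 0 < n) {B : Matrix (Fin n) (Fin n) ℝ}
    (hB : ∀ i j, 0 ≤ B i j) {z : Fin n → ℝ} (hz : ∀ i, 0 ≤ z i) (hz0 : z ≠ 0)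
    {lam : ℝ} (hlam : 0 < lam) (hsub : ∀ i, lam * z i ≤ (B *ᵥ z) i) :
    lam ≤ specRad B := by
  classical
  obtain ⟨i0, hi0⟩ : ∃ i0, 0 < z i0 := by
    by_contra hc
    push_neg at hc
    exact hz0 (funext fun i => le_antisymm (hc i) (hz i))
  set Z : ℝ := ∑ j, z j with hZ
  have hZpos : 0 < Z := by
    have : z i0 ≤ Z := Finset.single_le_sum (fun j _ => hz j) (Finset.mem_univ i0)
    linarith
  -- step 1 : lam^m * z ≤ B^m z
  have step1 : ∀ m : ℕ, ∀ i, lam ^ m * z i ≤ ((B ^ m) *ᵥ z) i := by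
    intro m
    induction m with
    | zero => intro i; simp [Matrix.one_mulVec]
    | succ k ih =>
        intro i
        have h1 : ∀ i, ((B ^ k) *ᵥ (lam • z)) i ≤ ((B ^ k) *ᵥ (B *ᵥ z)) i := by
          refine mulVec_mono (pow_nonneg hB k) fun i => ?_
          simpa using hsub i
        have h2 : ((B ^ k) *ᵥ (lam • z)) i = lam * (((B ^ k) *ᵥ z) i) := by
          rw [Matrix.mulVec_smul]; simp
        have h3 : ((B ^ k) *ᵥ (B *ᵥ z)) i = ((B ^ (k+1)) *ᵥ z) i := by
          rw [Matrix.mulVec_mulVec, ← pow_succ]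
        have h4 := ih i
        have h5 : lam * (lam ^ k * z i) ≤ lam * (((B ^ k) *ᵥ z) i) :=
          mul_le_mul_of_nonneg_left h4 (le_of_lt hlam)
        calc lam ^ (k+1) * z i = lam * (lam ^ k * z i) := by ring
          _ ≤ lam * (((B ^ k) *ᵥ z) i) := h5
          _ = ((B ^ k) *ᵥ (lam • z)) i := h2.symm
          _ ≤ ((B ^ k) *ᵥ (B *ᵥ z)) i := h1 i
          _ = ((B ^ (k+1)) *ᵥ z) i := h3
  -- step 2 : lam^m * z i0 ≤ ‖(B')^m‖ * Z
  set B' := B.map Complex.ofReal with hB'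
  have step2 : ∀ m : ℕ, lam ^ m * z i0 ≤ ‖B' ^ m‖ * Z := by
    intro m
    have h1 := step1 m i0
    have h2 : ((B ^ m) *ᵥ z) i0 ≤ (∑ j, (B ^ m) i0 j) * Z := by
      simp only [Matrix.mulVec, dotProduct]
      rw [Finset.sum_mul]
      refine Finset.sum_le_sum fun j _ => ?_
      have hj : z j ≤ Z := Finset.single_le_sum (fun l _ => hz l) (Finset.mem_univ j)
      exact mul_le_mul_of_nonneg_left hj (pow_nonneg hB m i0 j)
    have h3 : (∑ j, (B ^ m) i0 j) * Z ≤ ‖B' ^ m‖ * Z := by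
      have := rowsum_le_norm (pow_nonneg hB m) i0
      rw [map_pow'] at this
      exact mul_le_mul_of_nonneg_right this (le_of_lt hZpos)
    linarith
  -- step 3 : via Gelfand's formula, ofReal lam ≤ spectralRadius ℂ B'
  have hcpl : CompleteSpace (Matrix (Fin n) (Fin n) ℂ) := by
    have : FiniteDimensional ℂ (Matrix (Fin n) (Fin n) ℂ) := by infer_instance
    exact FiniteDimensional.complete ℂ _
  have gelfand := spectrum.pow_norm_pow_one_div_tendsto_nhds_spectralRadius B'
  set c : ℝ := z i0 / Z with hc
  have hcpos : 0 < c := div_pos hi0 hZpos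
  -- real sequence bound for m ≥ 1
  have hbound : ∀ m : ℕ, 1 ≤ m → c ^ (1 / (m:ℝ)) * lam ≤ ‖B' ^ m‖ ^ (1 / (m:ℝ)) := by
    intro m hm
    have hm0 : (0:ℝ) < m := by exact_mod_cast hm
    have h1 : lam ^ m * c ≤ ‖B' ^ m‖ := by
      rw [hc, ← mul_div_assoc, div_le_iff₀ hZpos]; exact step2 m
    have hle : (0:ℝ) ≤ lam ^ m * c := by positivity
    have h2 := Real.rpow_le_rpow hle h1 (by positivity : (0:ℝ) ≤ 1/(m:ℝ))
    rw [Real.mul_rpow (by positivity) (le_of_lt hcpos)] at h2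
    have hx : ((lam ^ m : ℝ)) ^ (1/(m:ℝ)) = lam := by
      rw [← Real.rpow_natCast lam m, ← Real.rpow_mul (le_of_lt hlam)]
      rw [mul_one_div, div_self (ne_of_gt hm0), Real.rpow_one]
    rw [hx] at h2
    linarith
  -- tendsto of the lower sequence
  have rtends : Tendsto (fun m : ℕ => c ^ (1 / (m:ℝ)) * lam) atTop (nhds lam) := by
    have h0 : Tendsto (fun m : ℕ => Real.log c * (1 / (m:ℝ))) atTop (nhds 0) := by
      have := tendsto_one_div_atTop_nhds_zero_nat (𝕜 := ℝ)
      have h := this.const_mul (Real.log c)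
      simpa using h
    have h1 : Tendsto (fun m : ℕ => Real.exp (Real.log c * (1 / (m:ℝ)))) atTop (nhds 1) := by
      have := (Real.continuous_exp.tendsto 0).comp h0
      simpa [Function.comp_def] using this
    have h2 : Tendsto (fun m : ℕ => Real.exp (Real.log c * (1 / (m:ℝ))) * lam) atTop
        (nhds (1 * lam)) := h1.mul_const lam
    rw [one_mul] at h2
    refine h2.congr fun m => ?_
    rw [← Real.rpow_def_of_pos hcpos]
  have etends : Tendsto (fun m : ℕ => ENNReal.ofReal (c ^ (1 / (m:ℝ)) * lam)) atTop
      (nhds (ENNReal.ofReal lam)) := (ENNReal.continuous_ofReal.tendsto lam).comp rtends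
  have hev : (fun m : ℕ => ENNReal.ofReal (c ^ (1 / (m:ℝ)) * lam)) ≤ᶠ[atTop]
      (fun m : ℕ => ENNReal.ofReal (‖B' ^ m‖ ^ (1 / (m:ℝ)))) := by
    filter_upwards [Filter.eventually_ge_atTop 1] with m hm
    exact ENNReal.ofReal_le_ofReal (hbound m hm)
  have key : ENNReal.ofReal lam ≤ spectralRadius ℂ B' :=
    le_of_tendsto_of_tendsto etends gelfand hev
  have hub : spectralRadius ℂ B' ≤ ENNReal.ofReal (specRad B) := by
    refine iSup₂_le fun μ hμ => ?_
    rw [← ENNReal.ofReal_coe_nnreal, coe_nnnorm]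
    refine ENNReal.ofReal_le_ofReal ?_
    exact abs_le_specRad hμ
  exact (ENNReal.ofReal_le_ofReal_iff (specRad_nonneg hn B)).mp (key.trans hub)
end Spec

/-- existence of a complex eigenvector for an element of the spectrum -/
lemma exists_eigenvector {M : Matrix (Fin n) (Fin n) ℂ} {μ : ℂ} (hμ : μ ∈ spectrum ℂ M) :
    ∃ v : Fin n → ℂ, v ≠ 0 ∧ M *ᵥ v = μ • v := by
  classical
  have h1 : ¬IsUnit (algebraMap ℂ (Matrix (Fin n) (Fin n) ℂ) μ - M) := spectrum.mem_iff.mp hμ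
  have h2 : (algebraMap ℂ (Matrix (Fin n) (Fin n) ℂ) μ - M).det = 0 := by
    by_contra hd
    exact h1 ((Matrix.isUnit_iff_isUnit_det _).mpr (isUnit_iff_ne_zero.mpr hd))
  obtain ⟨v, hv0, hv⟩ := (Matrix.exists_mulVec_eq_zero_iff).mpr h2
  refine ⟨v, hv0, ?_⟩
  have h3 : (algebraMap ℂ (Matrix (Fin n) (Fin n) ℂ) μ) = μ • (1 : Matrix (Fin n) (Fin n) ℂ) := by
    rw [Algebra.algebraMap_eq_smul_one]
  rw [h3, Matrix.sub_mulVec, Matrix.smul_mulVec, Matrix.one_mulVec, sub_eq_zero] at hv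
  exact hv.symm

/-- The Perron eigenvector lemma. -/
lemma perron (hn : 0 < n) {B : Matrix (Fin n) (Fin n) ℝ} (hB : ∀ i j, 0 ≤ B i j)
    {K : ℕ} (hK : ∀ i j, 0 < (((1 : Matrix (Fin n) (Fin n) ℝ) + B) ^ K) i j) :
    ∃ u : Fin n → ℝ, (∀ i, 0 < u i) ∧ B *ᵥ u = specRad B • u := by
  classical
  haveI : Nonempty (Fin n) := ⟨⟨0, hn⟩⟩
  set ρ := specRad B with hρ
  have hρ0 : 0 ≤ ρ := specRad_nonneg hn B
  obtain ⟨μ, hμmem, hμabs⟩ := specRad_mem hn B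
  obtain ⟨v, hv0, hv⟩ := exists_eigenvector hμmem
  set u : Fin n → ℝ := fun i => ‖v i‖ with hu
  have hu0 : ∀ i, 0 ≤ u i := fun i => norm_nonneg _
  have hune : u ≠ 0 := by
    intro hc
    apply hv0
    funext i
    have : u i = 0 := by rw [hc]; rfl
    simpa [hu, norm_eq_zero] using this
  -- subinvariance: ρ * u ≤ B u entrywise
  have hsub : ∀ i, ρ * u i ≤ (B *ᵥ u) i := by
    intro i
    have h1 : ((B.map Complex.ofReal) *ᵥ v) i = μ * v i := by rw [hv]; rfl
    have h2 : ‖μ * v i‖ = ρ * u i := by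
      rw [norm_mul, hμabs]
    rw [← h2, ← h1]
    have h3 : ((B.map Complex.ofReal) *ᵥ v) i = ∑ j, (B i j : ℂ) * v j := rfl
    rw [h3]
    calc ‖∑ j, (B i j : ℂ) * v j‖ ≤ ∑ j, ‖(B i j : ℂ) * v j‖ := by
          exact norm_sum_le _ _
      _ = ∑ j, B i j * u j := by
          refine Finset.sum_congr rfl fun j _ => ?_
          rw [norm_mul, Complex.norm_real, Real.norm_eq_abs, abs_of_nonneg (hB i j)]
      _ = (B *ᵥ u) i := rfl
  -- set P := (1 + B) ^ K
  set P : Matrix (Fin n) (Fin n) ℝ := ((1 : Matrix (Fin n) (Fin n) ℝ) + B) ^ K with hP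
  have hcomm : Commute B P := (((Commute.one_right B).add_right (Commute.refl B))).pow_right K
  have hPu : ∀ i, 0 < (P *ᵥ u) i := by
    intro i
    obtain ⟨i0, hi0⟩ : ∃ i0, 0 < u i0 := by
      by_contra hc
      push_neg at hc
      exact hune (funext fun i => le_antisymm (hc i) (hu0 i))
    have h1 : P i i0 * u i0 ≤ ∑ j, P i j * u j :=
      Finset.single_le_sum (fun j _ => mul_nonneg (le_of_lt (hK i j)) (hu0 j)) (Finset.mem_univ i0)
    have h2 : 0 < P i i0 * u i0 := mul_pos (hK i i0) hi0
    have h3 : (P *ᵥ u) i = ∑ j, P i j * u j := rfl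
    linarith
  -- show B u = ρ u
  have key : B *ᵥ u = ρ • u := by
    by_contra hne
    set d : Fin n → ℝ := fun i => (B *ᵥ u) i - ρ * u i with hd
    have hd0 : ∀ i, 0 ≤ d i := fun i => by simp [hd]; linarith [hsub i]
    have hdne : d ≠ 0 := by
      intro hc
      apply hne
      funext i
      have : d i = 0 := by rw [hc]; rfl
      simp only [hd] at this
      simp only [Pi.smul_apply, smul_eq_mul]
      linarith
    obtain ⟨j0, hj0⟩ : ∃ j0, 0 < d j0 := by
      by_contra hc
      push_neg at hc
      exact hdne (funext fun i => le_antisymm (hc i) (hd0 i))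
    set z : Fin n → ℝ := P *ᵥ u with hz
    have hzpos : ∀ i, 0 < z i := hPu
    have hPd : ∀ i, 0 < (P *ᵥ d) i := by
      intro i
      have h1 : P i j0 * d j0 ≤ ∑ j, P i j * d j :=
        Finset.single_le_sum (fun j _ => mul_nonneg (le_of_lt (hK i j)) (hd0 j)) (Finset.mem_univ j0)
      have h2 : 0 < P i j0 * d j0 := mul_pos (hK i j0) hj0
      have h3 : (P *ᵥ d) i = ∑ j, P i j * d j := rfl
      linarith
    have hBz : ∀ i, (B *ᵥ z) i = ρ * z i + (P *ᵥ d) i := by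
      intro i
      have h1 : B *ᵥ z = P *ᵥ (B *ᵥ u) := by
        rw [hz, Matrix.mulVec_mulVec, Matrix.mulVec_mulVec, hcomm.eq]
      have h2 : P *ᵥ d = P *ᵥ (B *ᵥ u) - P *ᵥ (ρ • u) := by
        rw [← Matrix.mulVec_sub]
        congr 1
      have h3 : (P *ᵥ (ρ • u)) i = ρ * z i := by
        rw [Matrix.mulVec_smul]
        simp [hz]
      have := congrFun h2 i
      rw [h1]
      simp only [Pi.sub_apply] at this
      rw [this, h3]
      ring
    -- lam := min of (B z)_i / z_i > ρ
    set lam : ℝ := Finset.univ.inf' Finset.univ_nonempty (fun i => (B *ᵥ z) i / z i) with hlam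
    have hlamgt : ρ < lam := by
      rw [hlam]
      rw [Finset.lt_inf'_iff]
      intro i _
      rw [lt_div_iff₀ (hzpos i)]
      have := hBz i
      have := hPd i
      nlinarith
    have hlampos : 0 < lam := lt_of_le_of_lt hρ0 hlamgt
    have hsubz : ∀ i, lam * z i ≤ (B *ᵥ z) i := by
      intro i
      have h1 : lam ≤ (B *ᵥ z) i / z i := Finset.inf'_le _ (Finset.mem_univ i)
      rw [le_div_iff₀ (hzpos i)] at h1
      linarith
    have := le_specRad_of_subinvariant hn hB (fun i => le_of_lt (hzpos i))
      (by intro hc; have := hzpos ⟨0, hn⟩; rw [hc] at this; simp at this)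
      hlampos hsubz
    rw [← hρ] at this
    linarith
  -- positivity of u
  have hBpow : ∀ m : ℕ, (B ^ m) *ᵥ u = (ρ ^ m) • u := by
    intro m
    induction m with
    | zero => simp [Matrix.one_mulVec]
    | succ k ih =>
        rw [pow_succ, ← Matrix.mulVec_mulVec, key, Matrix.mulVec_smul, ih, smul_smul,
          ← pow_succ']
  have hPuEq : ∀ m : ℕ, (((1 : Matrix (Fin n) (Fin n) ℝ) + B) ^ m) *ᵥ u = ((1 + ρ) ^ m) • u := by
    intro m
    induction m with
    | zero => simp [Matrix.one_mulVec]
    | succ k ih =>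
        rw [pow_succ, ← Matrix.mulVec_mulVec]
        have h1 : ((1 : Matrix (Fin n) (Fin n) ℝ) + B) *ᵥ u = (1 + ρ) • u := by
          rw [Matrix.add_mulVec, Matrix.one_mulVec, key]
          funext i
          simp
          ring
        rw [h1, Matrix.mulVec_smul, ih, smul_smul, ← pow_succ']
  have hupos : ∀ i, 0 < u i := by
    intro i
    have h1 := hPu i
    rw [hP, hPuEq K] at h1
    simp only [Pi.smul_apply, smul_eq_mul] at h1
    have h2 : (0:ℝ) < (1 + ρ) ^ K := by positivity
    nlinarith
  exact ⟨u, hupos, key⟩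


lemma prodeq {x1 y1 x2 y2 : ℝ} (hx1 : 0 < x1) (hx2 : 0 < x2) (h1 : x1 ≤ y1) (h2 : x2 ≤ y2)
    (hp : y1 * y2 ≤ x1 * x2) : x1 = y1 ∧ x2 = y2 :=
  ⟨by nlinarith, by nlinarith⟩

/-- a function monotone along edges of an irreducible matrix is constant -/
lemma const_of_edge_mono {A : Matrix (Fin n) (Fin n) ℝ} (hA : ∀ i j, 0 ≤ A i j)
    (hirr : MatIrred A) {g : Fin n → ℝ} (hmono : ∀ p q, A p q ≠ 0 → g p ≤ g q) :
    ∀ v v', g v = g v' := by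
  have path : ∀ m, ∀ p q, 0 < (A ^ m) p q → 0 < m → g p ≤ g q := by
    intro m
    induction m with
    | zero => intro p q _ h; exact absurd h (lt_irrefl 0)
    | succ mm ih =>
        intro p q hq _
        by_cases hmm : mm = 0
        · subst hmm
          rw [pow_one] at hq
          exact hmono p q (ne_of_gt hq)
        · rw [pow_succ, Matrix.mul_apply] at hq
          obtain ⟨l, hl⟩ : ∃ l, 0 < (A ^ mm) p l * A l q := by
            by_contra hc
            push_neg at hc
            have : (∑ l, (A ^ mm) p l * A l q) ≤ 0 := Finset.sum_nonpos fun l _ => hc l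
            linarith
          have h1 : 0 < (A ^ mm) p l := by
            have := pow_nonneg hA mm p l
            have := hA l q
            nlinarith
          have h2 : 0 < A l q := by
            have := pow_nonneg hA mm p l
            have := hA l q
            nlinarith
          exact le_trans (ih p l h1 (by omega)) (hmono l q (ne_of_gt h2))
  intro v v'
  obtain ⟨m1, hm1, hp1⟩ := hirr v v'
  obtain ⟨m2, hm2, hp2⟩ := hirr v' v
  exact le_antisymm (path m1 v v' hp1 hm1) (path m2 v' v hp2 hm2)

/-- positive-entry path propagation helper -/
lemma path_prop {A : Matrix (Fin n) (Fin n) ℝ} (hA : ∀ i j, 0 ≤ A i j)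
    {Q : Fin n → Prop} (hstep : ∀ p, Q p → ∀ q, A p q ≠ 0 → Q q) :
    ∀ m, ∀ p q, Q p → 0 < (A ^ m) p q → 0 < m → Q q := by
  intro m
  induction m with
  | zero => intro p q _ _ h; exact absurd h (lt_irrefl 0)
  | succ mm ih =>
      intro p q hp hq _
      by_cases hmm : mm = 0
      · subst hmm
        rw [pow_one] at hq
        exact hstep p hp q (ne_of_gt hq)
      · rw [pow_succ, Matrix.mul_apply] at hq
        obtain ⟨l, hl⟩ : ∃ l, 0 < (A ^ mm) p l * A l q := by
          by_contra hc
          push_neg at hc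
          have : (∑ l, (A ^ mm) p l * A l q) ≤ 0 := Finset.sum_nonpos fun l _ => hc l
          linarith
        have h1 : 0 < (A ^ mm) p l := by
          have := pow_nonneg hA mm p l; have := hA l q; nlinarith
        have h2 : 0 < A l q := by
          have := pow_nonneg hA mm p l; have := hA l q; nlinarith
        exact hstep l (ih p l hp h1 (by omega)) q (ne_of_gt h2)

lemma mul3_le {a b c d : ℝ} (ha : 0 ≤ a) (hb : 0 < b) (hcd : c ≤ d) :
    a * (b * c) ≤ a * b * d := by nlinarith [mul_nonneg ha hb.le]

lemma coreMax (hn : 0 < n) {A : Matrix (Fin n) (Fin n) ℝ} (hA : ∀ i j, 0 ≤ A i j)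
    (hirr : MatIrred A) (hApos : ∀ i, ∃ j, 0 < A i j)
    {r s t y : Fin n → ℝ} {ρ : ℝ}
    (hrpos : ∀ i, 0 < r i) (hspos : ∀ i, 0 < s i) (hypos : ∀ i, 0 < y i)
    (hs : ∀ i, s i = ∑ j, A i j * r j) (htlt : ∀ i, t i < ρ)
    (eig : ∀ i, (ρ - t i) * (r i * y i) = ∑ j, A i j * (r j * y j))
    (hkey : ∀ i j, A i j ≠ 0 → s i * s j ≤ ((ρ - t i) * (ρ - t j)) * (r i * r j)) :
    (∃ c : ℝ, ∀ i, t i + s i / r i = c) ∨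
      (∃ U W : Set (Fin n), U.Nonempty ∧ W.Nonempty ∧ U ∪ W = Set.univ ∧ Disjoint U W ∧
        (∀ i j, (i ∈ U ∧ j ∈ U) ∨ (i ∈ W ∧ j ∈ W) → A i j = 0) ∧
        ∃ l : ℝ, 0 < l ∧ ∃ m : ℝ,
          (∀ i ∈ U, t i + l * s i / r i = m) ∧ (∀ j ∈ W, t j + s j / (l * r j) = m)) := by
  classical
  haveI : Nonempty (Fin n) := ⟨⟨0, hn⟩⟩
  obtain ⟨i0, -, hi0max⟩ := Finset.exists_max_image Finset.univ y Finset.univ_nonempty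
  set Mv := y i0 with hMv
  have hyle : ∀ j, y j ≤ Mv := fun j => hi0max j (Finset.mem_univ j)
  have hMvpos : 0 < Mv := hypos i0
  -- general bound
  have genB : ∀ i, (ρ - t i) * (r i * y i) ≤ s i * Mv := by
    intro i
    rw [eig i, hs i, Finset.sum_mul]
    exact Finset.sum_le_sum fun j _ => mul3_le (hA i j) (hrpos j) (hyle j)
  -- the two key equalities at a maximizer and its neighbors
  have G : ∀ w, y w = Mv → ∀ k, A w k ≠ 0 →
      ((ρ - t w) * (r w * Mv) = s w * y k ∧ (ρ - t k) * (r k * y k) = s k * Mv) := by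
    intro w hw
    have hNne : (Finset.univ.filter (fun j => A w j ≠ 0)).Nonempty := by
      obtain ⟨j, hj⟩ := hApos w
      exact ⟨j, Finset.mem_filter.mpr ⟨Finset.mem_univ j, ne_of_gt hj⟩⟩
    obtain ⟨j0, hj0mem, hj0max⟩ := Finset.exists_max_image _ y hNne
    have hj0A : A w j0 ≠ 0 := (Finset.mem_filter.mp hj0mem).2
    have termle : ∀ j, A w j * (r j * y j) ≤ A w j * (r j * y j0) := by
      intro j
      by_cases hj : A w j = 0
      · simp [hj]
      · have hyj : y j ≤ y j0 := hj0max j (Finset.mem_filter.mpr ⟨Finset.mem_univ j, hj⟩)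
        have : A w j * (r j * y j) ≤ A w j * r j * y j0 := mul3_le (hA w j) (hrpos j) hyj
        linarith [this, (by ring : A w j * r j * y j0 = A w j * (r j * y j0))]
    have sumr : ∑ j, A w j * (r j * y j0) = s w * y j0 := by
      rw [hs w, Finset.sum_mul]
      exact Finset.sum_congr rfl fun j _ => by ring
    have bX1 : (ρ - t w) * (r w * Mv) ≤ s w * y j0 := by
      rw [← hw, eig w, ← sumr]
      exact Finset.sum_le_sum fun j _ => termle j
    have bX2 : (ρ - t j0) * (r j0 * y j0) ≤ s j0 * Mv := genB j0
    have hX1pos : 0 < (ρ - t w) * (r w * Mv) :=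
      mul_pos (by linarith [htlt w]) (mul_pos (hrpos w) hMvpos)
    have hX2pos : 0 < (ρ - t j0) * (r j0 * y j0) :=
      mul_pos (by linarith [htlt j0]) (mul_pos (hrpos j0) (hypos j0))
    have hprod : (s w * y j0) * (s j0 * Mv) ≤
        ((ρ - t w) * (r w * Mv)) * ((ρ - t j0) * (r j0 * y j0)) := by
      have hk3 := hkey w j0 hj0A
      have h5 := mul_le_mul_of_nonneg_right hk3 (mul_pos (hypos j0) hMvpos).le
      nlinarith [h5]
    obtain ⟨e1, e2⟩ := prodeq hX1pos hX2pos bX1 bX2 hprod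
    -- termwise equality
    have hsum : ∑ j, A w j * (r j * y j) = ∑ j, A w j * (r j * y j0) := by
      rw [← eig w, hw, sumr]
      exact e1
    have term : ∀ j, A w j * (r j * y j) = A w j * (r j * y j0) := by
      intro j
      exact (Finset.sum_eq_sum_iff_of_le (fun j _ => termle j)).mp hsum j (Finset.mem_univ j)
    intro k hk
    have hyk : y k = y j0 := by
      have h1 := term k
      have h2 : A w k * r k ≠ 0 :=
        mul_ne_zero hk (ne_of_gt (hrpos k))
      have h3 : A w k * (r k * y k) = A w k * (r k * y j0) := h1
      have h4 : r k * y k = r k * y j0 := mul_left_cancel₀ hk h3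
      exact mul_left_cancel₀ (ne_of_gt (hrpos k)) h4
    constructor
    · rw [hyk]; exact e1
    · have bX2' : (ρ - t k) * (r k * y k) ≤ s k * Mv := genB k
      have hX2'pos : 0 < (ρ - t k) * (r k * y k) :=
        mul_pos (by linarith [htlt k]) (mul_pos (hrpos k) (hypos k))
      have e1' : (ρ - t w) * (r w * Mv) = s w * y k := by rw [hyk]; exact e1
      have hprod' : (s w * y k) * (s k * Mv) ≤
          ((ρ - t w) * (r w * Mv)) * ((ρ - t k) * (r k * y k)) := by
        have hk3 := hkey w k hk
        have h5 := mul_le_mul_of_nonneg_right hk3 (mul_pos (hypos k) hMvpos).le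
        nlinarith [h5]
      exact (prodeq hX1pos hX2'pos (le_of_eq e1') bX2' hprod').2
  -- G2 : neighbors of neighbors of maximizers are maximizers
  have G2 : ∀ w, y w = Mv → ∀ k, A w k ≠ 0 → ∀ l, A k l ≠ 0 → y l = Mv := by
    intro w hw k hk l hl
    have h2 := (G w hw k hk).2
    have termle : ∀ j, A k j * (r j * y j) ≤ A k j * (r j * Mv) := by
      intro j
      have := mul3_le (hA k j) (hrpos j) (hyle j)
      linarith [this, (by ring : A k j * r j * Mv = A k j * (r j * Mv))]
    have sumr : ∑ j, A k j * (r j * Mv) = s k * Mv := by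
      rw [hs k, Finset.sum_mul]
      exact Finset.sum_congr rfl fun j _ => by ring
    have hsum : ∑ j, A k j * (r j * y j) = ∑ j, A k j * (r j * Mv) := by
      rw [← eig k, sumr]
      exact h2
    have term := (Finset.sum_eq_sum_iff_of_le (fun j _ => termle j)).mp hsum l (Finset.mem_univ l)
    have h4 : r l * y l = r l * Mv := mul_left_cancel₀ hl term
    exact mul_left_cancel₀ (ne_of_gt (hrpos l)) h4
  by_cases hcase : ∃ w k, y w = Mv ∧ A w k ≠ 0 ∧ y k = Mv
  · -- case (i): all entries of y equal Mv
    obtain ⟨w, k, hw, hk, hkM⟩ := hcase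
    have Iw : y w = Mv ∧ ∀ l, A w l ≠ 0 → y l = Mv := by
      refine ⟨hw, fun l hl => ?_⟩
      have e1l := (G w hw l hl).1
      have e1k := (G w hw k hk).1
      have h1 : s w * y l = s w * y k := by rw [← e1l, ← e1k]
      have h2 := mul_left_cancel₀ (ne_of_gt (hspos w)) h1
      rw [h2, hkM]
    have hall : ∀ v, y v = Mv := by
      intro v
      obtain ⟨m, hm0, hmpos⟩ := hirr w v
      exact (path_prop hA (Q := fun q => y q = Mv ∧ ∀ l, A q l ≠ 0 → y l = Mv)
        (fun p hp q hq => ⟨hp.2 q hq, fun l hl => G2 p hp.1 q hq l hl⟩)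
        m w v Iw hmpos hm0).1
    left
    refine ⟨ρ, fun i => ?_⟩
    have h1 : (ρ - t i) * (r i * Mv) = s i * Mv := by
      have h0 := eig i
      rw [hall i] at h0
      have h2 : ∑ j, A i j * (r j * y j) = s i * Mv := by
        rw [hs i, Finset.sum_mul]
        refine Finset.sum_congr rfl fun j _ => by rw [hall j]; ring
      rw [← h2]
      exact h0
    have h2 : (ρ - t i) * r i = s i := by
      have hMne : Mv ≠ 0 := ne_of_gt hMvpos
      have h3 : ((ρ - t i) * r i) * Mv = s i * Mv := by
        calc ((ρ - t i) * r i) * Mv = (ρ - t i) * (r i * Mv) := by ring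
          _ = s i * Mv := h1
      exact mul_right_cancel₀ hMne h3
    have h3 : s i / r i = ρ - t i := by
      rw [← h2]
      exact mul_div_cancel_right₀ _ (ne_of_gt (hrpos i))
    rw [h3]; ring
  · -- case (ii): bipartite structure
    push_neg at hcase
    set U : Set (Fin n) := {i | y i = Mv} with hU
    set W : Set (Fin n) := {i | y i ≠ Mv} with hW
    -- propagation invariant
    have hJ : ∀ v, y v = Mv ∨ ((ρ - t v) * (r v * y v) = s v * Mv ∧ ∀ l, A v l ≠ 0 → y l = Mv) := by
      intro v
      obtain ⟨m, hm0, hmpos⟩ := hirr i0 v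
      refine path_prop hA
        (Q := fun q => y q = Mv ∨ ((ρ - t q) * (r q * y q) = s q * Mv ∧
          ∀ l, A q l ≠ 0 → y l = Mv)) ?_ m i0 v (Or.inl rfl) hmpos hm0
      intro p hp q hq
      rcases hp with hyp | ⟨heqp, hnbp⟩
      · exact Or.inr ⟨(G p hyp q hq).2, fun l hl => G2 p hyp q hq l hl⟩
      · exact Or.inl (hnbp q hq)
    have hWfact : ∀ v, y v ≠ Mv →
        ((ρ - t v) * (r v * y v) = s v * Mv ∧ ∀ l, A v l ≠ 0 → y l = Mv) := by
      intro v hv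
      rcases hJ v with h | h
      · exact absurd h hv
      · exact h
    have hUne : U.Nonempty := ⟨i0, rfl⟩
    have hWne : W.Nonempty := by
      obtain ⟨j1, hj1⟩ := hApos i0
      exact ⟨j1, hcase i0 j1 rfl (ne_of_gt hj1)⟩
    have hUW : U ∪ W = Set.univ := by
      ext i
      simp only [hU, hW, Set.mem_union, Set.mem_setOf_eq, Set.mem_univ, iff_true]
      tauto
    have hdisj : Disjoint U W := by
      rw [Set.disjoint_left]
      intro i hi hi'
      exact hi' hi
    have hzero : ∀ i j, (i ∈ U ∧ j ∈ U) ∨ (i ∈ W ∧ j ∈ W) → A i j = 0 := by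
      intro i j hij
      rcases hij with ⟨hi, hj⟩ | ⟨hi, hj⟩
      · by_contra hne
        exact hcase i j hi hne hj
      · by_contra hne
        exact hj ((hWfact i hi).2 j hne)
    -- the transfer function
    set h : Fin n → ℝ := fun v => if y v = Mv then (ρ - t v) * r v / s v
      else s v / ((ρ - t v) * r v) with hh
    have hval1 : ∀ v, y v = Mv → h v = (ρ - t v) * r v / s v := by
      intro v hv; rw [hh]; simp only [hv, if_true, if_pos]
    have hval2 : ∀ v, y v ≠ Mv → h v = s v / ((ρ - t v) * r v) := by
      intro v hv; rw [hh]; simp only [hv, if_false, if_neg, not_false_iff]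
    have hmono : ∀ p q, A p q ≠ 0 → h p ≤ h q := by
      intro p q hpq
      by_cases hyp : y p = Mv <;> by_cases hyq : y q = Mv
      · exact absurd (hzero p q (Or.inl ⟨hyp, hyq⟩)) hpq
      · -- p ∈ U, q ∈ W : equality
        have e1 := (G p hyp q hpq).1
        have e2 := (hWfact q hyq).1
        rw [hval1 p hyp, hval2 q hyq]
        rw [div_le_div_iff₀ (hspos p) (mul_pos (by linarith [htlt q]) (hrpos q))]
        have e4 : ((ρ - t p) * r p * ((ρ - t q) * r q)) * (Mv * y q)
            = (s q * s p) * (Mv * y q) := by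
          linear_combination ((ρ - t q) * (r q * y q)) * e1 + (s p * y q) * e2
        have := mul_right_cancel₀ (ne_of_gt (mul_pos hMvpos (hypos q))) e4
        linarith
      · -- p ∈ W, q ∈ U : inequality from hkey
        rw [hval2 p hyp, hval1 q hyq]
        rw [div_le_div_iff₀ (mul_pos (by linarith [htlt p]) (hrpos p)) (hspos q)]
        have hk3 := hkey p q hpq
        nlinarith [hk3]
      · exact absurd (hzero p q (Or.inr ⟨hyp, hyq⟩)) hpq
    have hconst := const_of_edge_mono hA hirr hmono
    set l : ℝ := (ρ - t i0) * r i0 / s i0 with hl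
    have hl0 : 0 < l := div_pos (mul_pos (by linarith [htlt i0]) (hrpos i0)) (hspos i0)
    have hhi0 : h i0 = l := hval1 i0 rfl
    right
    refine ⟨U, W, hUne, hWne, hUW, hdisj, hzero, l, hl0, ρ, ?_, ?_⟩
    · intro i hi
      have hhl : h i = l := by rw [hconst i i0, hhi0]
      rw [hval1 i hi] at hhl
      rw [← hhl]
      have h1 := hrpos i; have h2 := hspos i
      have h4 : (ρ - t i) * r i / s i * s i / r i = ρ - t i := by
        field_simp
      rw [h4]; ring
    · intro j hj
      have hhl : h j = l := by rw [hconst j i0, hhi0]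
      rw [hval2 j hj] at hhl
      rw [← hhl]
      have h1 := hrpos j; have h2 := hspos j; have h3 : (0:ℝ) < ρ - t j := by linarith [htlt j]
      have h5 : s j / ((ρ - t j) * r j) * r j = s j / (ρ - t j) := by
        field_simp
      have h4 : s j / (s j / ((ρ - t j) * r j) * r j) = ρ - t j := by
        rw [h5, div_div_eq_mul_div, mul_comm, mul_div_assoc,
          div_self (ne_of_gt h2), mul_one]
      rw [h4]; ring
lemma coreMin (hn : 0 < n) {A : Matrix (Fin n) (Fin n) ℝ} (hA : ∀ i j, 0 ≤ A i j)
    (hirr : MatIrred A) (hApos : ∀ i, ∃ j, 0 < A i j)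
    {r s t y : Fin n → ℝ} {ρ : ℝ}
    (hrpos : ∀ i, 0 < r i) (hspos : ∀ i, 0 < s i) (hypos : ∀ i, 0 < y i)
    (hs : ∀ i, s i = ∑ j, A i j * r j) (htlt : ∀ i, t i < ρ)
    (eig : ∀ i, (ρ - t i) * (r i * y i) = ∑ j, A i j * (r j * y j))
    (hkey : ∀ i j, A i j ≠ 0 → ((ρ - t i) * (ρ - t j)) * (r i * r j) ≤ s i * s j) :
    (∃ c : ℝ, ∀ i, t i + s i / r i = c) ∨
      (∃ U W : Set (Fin n), U.Nonempty ∧ W.Nonempty ∧ U ∪ W = Set.univ ∧ Disjoint U W ∧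
        (∀ i j, (i ∈ U ∧ j ∈ U) ∨ (i ∈ W ∧ j ∈ W) → A i j = 0) ∧
        ∃ l : ℝ, 0 < l ∧ ∃ m : ℝ,
          (∀ i ∈ U, t i + l * s i / r i = m) ∧ (∀ j ∈ W, t j + s j / (l * r j) = m)) := by
  classical
  haveI : Nonempty (Fin n) := ⟨⟨0, hn⟩⟩
  obtain ⟨i0, -, hi0min⟩ := Finset.exists_min_image Finset.univ y Finset.univ_nonempty
  set Mv := y i0 with hMv
  have hyle : ∀ j, Mv ≤ y j := fun j => hi0min j (Finset.mem_univ j)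
  have hMvpos : 0 < Mv := hypos i0
  -- general bound
  have genB : ∀ i, s i * Mv ≤ (ρ - t i) * (r i * y i) := by
    intro i
    rw [eig i, hs i, Finset.sum_mul]
    refine Finset.sum_le_sum fun j _ => ?_
    have := mul3_le (hA i j) (hrpos j) (hyle j)
    linarith [this, (by ring : A i j * (r j * Mv) = A i j * r j * Mv),
      (by ring : A i j * r j * y j = A i j * (r j * y j))]
  -- the two key equalities at a maximizer and its neighbors
  have G : ∀ w, y w = Mv → ∀ k, A w k ≠ 0 →
      ((ρ - t w) * (r w * Mv) = s w * y k ∧ (ρ - t k) * (r k * y k) = s k * Mv) := by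
    intro w hw
    have hNne : (Finset.univ.filter (fun j => A w j ≠ 0)).Nonempty := by
      obtain ⟨j, hj⟩ := hApos w
      exact ⟨j, Finset.mem_filter.mpr ⟨Finset.mem_univ j, ne_of_gt hj⟩⟩
    obtain ⟨j0, hj0mem, hj0min⟩ := Finset.exists_min_image _ y hNne
    have hj0A : A w j0 ≠ 0 := (Finset.mem_filter.mp hj0mem).2
    have termle : ∀ j, A w j * (r j * y j0) ≤ A w j * (r j * y j) := by
      intro j
      by_cases hj : A w j = 0
      · simp [hj]
      · have hyj : y j0 ≤ y j := hj0min j (Finset.mem_filter.mpr ⟨Finset.mem_univ j, hj⟩)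
        have : A w j * (r j * y j0) ≤ A w j * r j * y j := mul3_le (hA w j) (hrpos j) hyj
        linarith [this, (by ring : A w j * r j * y j = A w j * (r j * y j))]
    have sumr : ∑ j, A w j * (r j * y j0) = s w * y j0 := by
      rw [hs w, Finset.sum_mul]
      exact Finset.sum_congr rfl fun j _ => by ring
    have bX1 : s w * y j0 ≤ (ρ - t w) * (r w * Mv) := by
      rw [← hw, eig w, ← sumr]
      exact Finset.sum_le_sum fun j _ => termle j
    have bX2 : s j0 * Mv ≤ (ρ - t j0) * (r j0 * y j0) := genB j0
    have hX1pos : 0 < (ρ - t w) * (r w * Mv) :=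
      mul_pos (by linarith [htlt w]) (mul_pos (hrpos w) hMvpos)
    have hX2pos : 0 < (ρ - t j0) * (r j0 * y j0) :=
      mul_pos (by linarith [htlt j0]) (mul_pos (hrpos j0) (hypos j0))
    have hprod : ((ρ - t w) * (r w * Mv)) * ((ρ - t j0) * (r j0 * y j0)) ≤
        (s w * y j0) * (s j0 * Mv) := by
      have hk3 := hkey w j0 hj0A
      have h5 := mul_le_mul_of_nonneg_right hk3 (mul_pos (hypos j0) hMvpos).le
      nlinarith [h5]
    obtain ⟨e1', e2'⟩ := prodeq (mul_pos (hspos w) (hypos j0)) (mul_pos (hspos j0) hMvpos)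
      bX1 bX2 hprod
    have e1 : (ρ - t w) * (r w * Mv) = s w * y j0 := e1'.symm
    have e2 : (ρ - t j0) * (r j0 * y j0) = s j0 * Mv := e2'.symm
    -- termwise equality
    have hsum : ∑ j, A w j * (r j * y j0) = ∑ j, A w j * (r j * y j) := by
      rw [← eig w, hw, sumr]
      exact e1'
    have term : ∀ j, A w j * (r j * y j0) = A w j * (r j * y j) := by
      intro j
      exact (Finset.sum_eq_sum_iff_of_le (fun j _ => termle j)).mp hsum j (Finset.mem_univ j)
    intro k hk
    have hyk : y k = y j0 := by
      have h1 := term k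
      have h2 : A w k * r k ≠ 0 :=
        mul_ne_zero hk (ne_of_gt (hrpos k))
      have h3 : A w k * (r k * y k) = A w k * (r k * y j0) := h1.symm
      have h4 : r k * y k = r k * y j0 := mul_left_cancel₀ hk h3
      exact mul_left_cancel₀ (ne_of_gt (hrpos k)) h4
    constructor
    · rw [hyk]; exact e1
    · have bX2' : s k * Mv ≤ (ρ - t k) * (r k * y k) := genB k
      have e1'' : s w * y k = (ρ - t w) * (r w * Mv) := by rw [hyk]; exact e1'
      have hprod' : ((ρ - t w) * (r w * Mv)) * ((ρ - t k) * (r k * y k)) ≤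
          (s w * y k) * (s k * Mv) := by
        have hk3 := hkey w k hk
        have h5 := mul_le_mul_of_nonneg_right hk3 (mul_pos (hypos k) hMvpos).le
        nlinarith [h5]
      exact ((prodeq (mul_pos (hspos w) (hypos k)) (mul_pos (hspos k) hMvpos)
        (le_of_eq e1'') bX2' hprod').2).symm
  -- G2 : neighbors of neighbors of maximizers are maximizers
  have G2 : ∀ w, y w = Mv → ∀ k, A w k ≠ 0 → ∀ l, A k l ≠ 0 → y l = Mv := by
    intro w hw k hk l hl
    have h2 := (G w hw k hk).2
    have termle : ∀ j, A k j * (r j * Mv) ≤ A k j * (r j * y j) := by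
      intro j
      have := mul3_le (hA k j) (hrpos j) (hyle j)
      linarith [this, (by ring : A k j * r j * y j = A k j * (r j * y j))]
    have sumr : ∑ j, A k j * (r j * Mv) = s k * Mv := by
      rw [hs k, Finset.sum_mul]
      exact Finset.sum_congr rfl fun j _ => by ring
    have hsum : ∑ j, A k j * (r j * Mv) = ∑ j, A k j * (r j * y j) := by
      rw [← eig k, sumr]
      exact h2.symm
    have term := (Finset.sum_eq_sum_iff_of_le (fun j _ => termle j)).mp hsum l (Finset.mem_univ l)
    have h4 : r l * y l = r l * Mv := (mul_left_cancel₀ hl term).symm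
    exact mul_left_cancel₀ (ne_of_gt (hrpos l)) h4
  by_cases hcase : ∃ w k, y w = Mv ∧ A w k ≠ 0 ∧ y k = Mv
  · -- case (i): all entries of y equal Mv
    obtain ⟨w, k, hw, hk, hkM⟩ := hcase
    have Iw : y w = Mv ∧ ∀ l, A w l ≠ 0 → y l = Mv := by
      refine ⟨hw, fun l hl => ?_⟩
      have e1l := (G w hw l hl).1
      have e1k := (G w hw k hk).1
      have h1 : s w * y l = s w * y k := by rw [← e1l, ← e1k]
      have h2 := mul_left_cancel₀ (ne_of_gt (hspos w)) h1
      rw [h2, hkM]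
    have hall : ∀ v, y v = Mv := by
      intro v
      obtain ⟨m, hm0, hmpos⟩ := hirr w v
      exact (path_prop hA (Q := fun q => y q = Mv ∧ ∀ l, A q l ≠ 0 → y l = Mv)
        (fun p hp q hq => ⟨hp.2 q hq, fun l hl => G2 p hp.1 q hq l hl⟩)
        m w v Iw hmpos hm0).1
    left
    refine ⟨ρ, fun i => ?_⟩
    have h1 : (ρ - t i) * (r i * Mv) = s i * Mv := by
      have h0 := eig i
      rw [hall i] at h0
      have h2 : ∑ j, A i j * (r j * y j) = s i * Mv := by
        rw [hs i, Finset.sum_mul]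
        refine Finset.sum_congr rfl fun j _ => by rw [hall j]; ring
      rw [← h2]
      exact h0
    have h2 : (ρ - t i) * r i = s i := by
      have hMne : Mv ≠ 0 := ne_of_gt hMvpos
      have h3 : ((ρ - t i) * r i) * Mv = s i * Mv := by
        calc ((ρ - t i) * r i) * Mv = (ρ - t i) * (r i * Mv) := by ring
          _ = s i * Mv := h1
      exact mul_right_cancel₀ hMne h3
    have h3 : s i / r i = ρ - t i := by
      rw [← h2]
      exact mul_div_cancel_right₀ _ (ne_of_gt (hrpos i))
    rw [h3]; ring
  · -- case (ii): bipartite structure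
    push_neg at hcase
    set U : Set (Fin n) := {i | y i = Mv} with hU
    set W : Set (Fin n) := {i | y i ≠ Mv} with hW
    -- propagation invariant
    have hJ : ∀ v, y v = Mv ∨ ((ρ - t v) * (r v * y v) = s v * Mv ∧ ∀ l, A v l ≠ 0 → y l = Mv) := by
      intro v
      obtain ⟨m, hm0, hmpos⟩ := hirr i0 v
      refine path_prop hA
        (Q := fun q => y q = Mv ∨ ((ρ - t q) * (r q * y q) = s q * Mv ∧
          ∀ l, A q l ≠ 0 → y l = Mv)) ?_ m i0 v (Or.inl rfl) hmpos hm0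
      intro p hp q hq
      rcases hp with hyp | ⟨heqp, hnbp⟩
      · exact Or.inr ⟨(G p hyp q hq).2, fun l hl => G2 p hyp q hq l hl⟩
      · exact Or.inl (hnbp q hq)
    have hWfact : ∀ v, y v ≠ Mv →
        ((ρ - t v) * (r v * y v) = s v * Mv ∧ ∀ l, A v l ≠ 0 → y l = Mv) := by
      intro v hv
      rcases hJ v with h | h
      · exact absurd h hv
      · exact h
    have hUne : U.Nonempty := ⟨i0, rfl⟩
    have hWne : W.Nonempty := by
      obtain ⟨j1, hj1⟩ := hApos i0
      exact ⟨j1, hcase i0 j1 rfl (ne_of_gt hj1)⟩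
    have hUW : U ∪ W = Set.univ := by
      ext i
      simp only [hU, hW, Set.mem_union, Set.mem_setOf_eq, Set.mem_univ, iff_true]
      tauto
    have hdisj : Disjoint U W := by
      rw [Set.disjoint_left]
      intro i hi hi'
      exact hi' hi
    have hzero : ∀ i j, (i ∈ U ∧ j ∈ U) ∨ (i ∈ W ∧ j ∈ W) → A i j = 0 := by
      intro i j hij
      rcases hij with ⟨hi, hj⟩ | ⟨hi, hj⟩
      · by_contra hne
        exact hcase i j hi hne hj
      · by_contra hne
        exact hj ((hWfact i hi).2 j hne)
    -- the transfer function
    set h : Fin n → ℝ := fun v => if y v = Mv then (ρ - t v) * r v / s v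
      else s v / ((ρ - t v) * r v) with hh
    have hval1 : ∀ v, y v = Mv → h v = (ρ - t v) * r v / s v := by
      intro v hv; rw [hh]; simp only [hv, if_true, if_pos]
    have hval2 : ∀ v, y v ≠ Mv → h v = s v / ((ρ - t v) * r v) := by
      intro v hv; rw [hh]; simp only [hv, if_false, if_neg, not_false_iff]
    have hmono : ∀ p q, A p q ≠ 0 → h q ≤ h p := by
      intro p q hpq
      by_cases hyp : y p = Mv <;> by_cases hyq : y q = Mv
      · exact absurd (hzero p q (Or.inl ⟨hyp, hyq⟩)) hpq
      · -- p ∈ U, q ∈ W : equality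
        have e1 := (G p hyp q hpq).1
        have e2 := (hWfact q hyq).1
        rw [hval2 q hyq, hval1 p hyp]
        rw [div_le_div_iff₀ (mul_pos (by linarith [htlt q]) (hrpos q)) (hspos p)]
        have e4 : ((ρ - t p) * r p * ((ρ - t q) * r q)) * (Mv * y q)
            = (s q * s p) * (Mv * y q) := by
          linear_combination ((ρ - t q) * (r q * y q)) * e1 + (s p * y q) * e2
        have := mul_right_cancel₀ (ne_of_gt (mul_pos hMvpos (hypos q))) e4
        linarith
      · -- p ∈ W, q ∈ U : inequality from hkey
        rw [hval1 q hyq, hval2 p hyp]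
        rw [div_le_div_iff₀ (hspos q) (mul_pos (by linarith [htlt p]) (hrpos p))]
        have hk3 := hkey p q hpq
        nlinarith [hk3]
      · exact absurd (hzero p q (Or.inr ⟨hyp, hyq⟩)) hpq
    have hmono' : ∀ p q, A p q ≠ 0 → (fun v => -h v) p ≤ (fun v => -h v) q := by
      intro p q hpq
      simp only [neg_le_neg_iff]
      exact hmono p q hpq
    have hconst : ∀ v v', h v = h v' := by
      intro v v'
      have := const_of_edge_mono hA hirr hmono' v v'
      simpa using this
    set l : ℝ := (ρ - t i0) * r i0 / s i0 with hl
    have hl0 : 0 < l := div_pos (mul_pos (by linarith [htlt i0]) (hrpos i0)) (hspos i0)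
    have hhi0 : h i0 = l := hval1 i0 rfl
    right
    refine ⟨U, W, hUne, hWne, hUW, hdisj, hzero, l, hl0, ρ, ?_, ?_⟩
    · intro i hi
      have hhl : h i = l := by rw [hconst i i0, hhi0]
      rw [hval1 i hi] at hhl
      rw [← hhl]
      have h1 := hrpos i; have h2 := hspos i
      have h4 : (ρ - t i) * r i / s i * s i / r i = ρ - t i := by
        field_simp
      rw [h4]; ring
    · intro j hj
      have hhl : h j = l := by rw [hconst j i0, hhi0]
      rw [hval2 j hj] at hhl
      rw [← hhl]
      have h1 := hrpos j; have h2 := hspos j; have h3 : (0:ℝ) < ρ - t j := by linarith [htlt j]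
      have h5 : s j / ((ρ - t j) * r j) * r j = s j / (ρ - t j) := by
        field_simp
      have h4 : s j / (s j / ((ρ - t j) * r j) * r j) = ρ - t j := by
        rw [h5, div_div_eq_mul_div, mul_comm, mul_div_assoc,
          div_self (ne_of_gt h2), mul_one]
      rw [h4]; ring


end AuxPF
theorem stmt_4 {n : ℕ} (hn : 2 ≤ n) (A : Matrix (Fin n) (Fin n) ℝ)
    (hA : ∀ i j, 0 ≤ A i j) (hirr : MatIrred A) (hdiag : ∀ i, A i i = 0)
    (r s : Fin n → ℝ) (hr : ∀ i, r i = ∑ j, A i j)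
    (hs : ∀ i, s i = ∑ j, A i j * r j)
    (t : Fin n → ℝ) (ht : ∀ i, 0 ≤ t i)
    (B : Matrix (Fin n) (Fin n) ℝ) (hB : B = A + Matrix.diagonal t)
    (f : Fin n → Fin n → ℝ)
    (hf : ∀ i j, f i j =
      (t i + t j + Real.sqrt ((t i - t j) ^ 2 + 4 * s i * s j / (r i * r j))) / 2)
    (heq : specRad B = sSup {x | ∃ i j, A i j ≠ 0 ∧ x = f i j} ∨
      specRad B = sInf {x | ∃ i j, A i j ≠ 0 ∧ x = f i j}) :
    (∃ c : ℝ, ∀ i, t i + s i / r i = c) ∨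
      (∃ U W : Set (Fin n), U.Nonempty ∧ W.Nonempty ∧ U ∪ W = Set.univ ∧ Disjoint U W ∧
        (∀ i j, (i ∈ U ∧ j ∈ U) ∨ (i ∈ W ∧ j ∈ W) → A i j = 0) ∧
        ∃ l : ℝ, 0 < l ∧ ∃ m : ℝ,
          (∀ i ∈ U, t i + l * s i / r i = m) ∧ (∀ j ∈ W, t j + s j / (l * r j) = m)) := by
  classical
  have hn0 : 0 < n := by omega
  haveI : Nonempty (Fin n) := ⟨⟨0, hn0⟩⟩
  -- every row has a positive entry
  have hApos : ∀ i, ∃ j, 0 < A i j := by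
    intro i
    by_contra hc
    push_neg at hc
    have hzero : ∀ j, A i j = 0 := fun j => le_antisymm (hc j) (hA i j)
    have hrow : ∀ k : ℕ, 0 < k → ∀ j, (A ^ k) i j = 0 := by
      intro k hk
      induction k with
      | zero => omega
      | succ m ih =>
          intro j
          by_cases hm : m = 0
          · subst hm; rw [pow_one]; exact hzero j
          · rw [pow_succ, Matrix.mul_apply]
            refine Finset.sum_eq_zero fun l _ => ?_
            rw [ih (by omega) l, zero_mul]
    obtain ⟨k, hk0, hkpos⟩ := hirr i i
    rw [hrow k hk0 i] at hkpos
    exact lt_irrefl 0 hkpos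
  have hrpos : ∀ i, 0 < r i := by
    intro i
    obtain ⟨j, hj⟩ := hApos i
    rw [hr i]
    have h1 : A i j ≤ ∑ j, A i j :=
      Finset.single_le_sum (fun l _ => hA i l) (Finset.mem_univ j)
    linarith
  have hspos : ∀ i, 0 < s i := by
    intro i
    obtain ⟨j, hj⟩ := hApos i
    rw [hs i]
    have h1 : A i j * r j ≤ ∑ j, A i j * r j :=
      Finset.single_le_sum (fun l _ => mul_nonneg (hA i l) (le_of_lt (hrpos l)))
        (Finset.mem_univ j)
    have h2 : 0 < A i j * r j := mul_pos hj (hrpos j)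
    linarith
  -- B is entrywise nonnegative
  have hB0 : ∀ i j, 0 ≤ B i j := by
    intro i j
    rw [hB, Matrix.add_apply, Matrix.diagonal_apply]
    by_cases hij : i = j
    · simp only [hij, if_pos rfl]
      exact add_nonneg (hA j j) (ht j)
    · simp only [if_neg hij, add_zero]
      exact hA i j
  -- positivity of a power of 1 + B
  have hP0 : ∀ i j, 0 ≤ ((1 : Matrix (Fin n) (Fin n) ℝ) + B) i j := by
    intro i j
    rw [Matrix.add_apply, Matrix.one_apply]
    by_cases hij : i = j
    · simp only [if_pos hij]
      linarith [hB0 i j]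
    · simp only [if_neg hij]
      linarith [hB0 i j]
  have hPd : ∀ i, 0 < ((1 : Matrix (Fin n) (Fin n) ℝ) + B) i i := by
    intro i
    rw [Matrix.add_apply, Matrix.one_apply, if_pos rfl]
    linarith [hB0 i i]
  have hAleP : ∀ i j, A i j ≤ ((1 : Matrix (Fin n) (Fin n) ℝ) + B) i j := by
    intro i j
    rw [Matrix.add_apply, Matrix.one_apply, hB, Matrix.add_apply, Matrix.diagonal_apply]
    by_cases hij : i = j
    · simp only [if_pos hij]
      have := ht j
      rw [hij]
      linarith [ht j]
    · simp only [if_neg hij]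
      linarith
  obtain ⟨K, hK⟩ : ∃ K, ∀ i j, 0 < (((1 : Matrix (Fin n) (Fin n) ℝ) + B) ^ K) i j := by
    set k : Fin n → Fin n → ℕ := fun i j => (hirr i j).choose with hk
    have hkspec : ∀ i j, 0 < k i j ∧ 0 < (A ^ (k i j)) i j := fun i j => (hirr i j).choose_spec
    refine ⟨Finset.univ.sup (fun i => Finset.univ.sup (fun j => k i j)), fun i j => ?_⟩
    have hle : k i j ≤ Finset.univ.sup (fun i => Finset.univ.sup (fun j => k i j)) :=
      le_trans (Finset.le_sup (f := fun j => k i j) (Finset.mem_univ j))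
        (Finset.le_sup (f := fun i => Finset.univ.sup (fun j => k i j)) (Finset.mem_univ i))
    have h1 : 0 < (((1 : Matrix (Fin n) (Fin n) ℝ) + B) ^ (k i j)) i j :=
      lt_of_lt_of_le (hkspec i j).2 (AuxPF.pow_le_pow hA hAleP (k i j) i j)
    exact AuxPF.pos_persist hP0 hPd h1 _ hle
  obtain ⟨u, hupos, huB⟩ := AuxPF.perron hn0 hB0 hK
  set ρ := specRad B with hρ
  set y : Fin n → ℝ := fun i => u i / r i with hy
  have hypos : ∀ i, 0 < y i := fun i => div_pos (hupos i) (hrpos i)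
  have hur : ∀ i, u i = r i * y i := by
    intro i
    have h0 : y i = u i / r i := rfl
    have h1 : r i ≠ 0 := ne_of_gt (hrpos i)
    rw [h0]
    field_simp
  -- the eigenvalue equation in terms of y
  have eig : ∀ i, (ρ - t i) * (r i * y i) = ∑ j, A i j * (r j * y j) := by
    intro i
    have h1 : (B *ᵥ u) i = ρ * u i := by
      rw [huB]; simp
    have h2 : (B *ᵥ u) i = (∑ j, A i j * u j) + t i * u i := by
      simp only [Matrix.mulVec, dotProduct, hB, Matrix.add_apply, add_mul]
      rw [Finset.sum_add_distrib]
      congr 1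
      rw [Finset.sum_congr rfl (fun j _ => by rw [Matrix.diagonal_apply, ite_mul, zero_mul])]
      rw [Finset.sum_ite_eq Finset.univ i (fun j => t i * u j)]
      simp
    have h3 : ∑ j, A i j * u j = ∑ j, A i j * (r j * y j) :=
      Finset.sum_congr rfl fun j _ => by rw [hur j]
    have h4 := hur i
    have h5 : (∑ j, A i j * (r j * y j)) + t i * u i = ρ * u i := by
      rw [← h3, ← h2, h1]
    linear_combination (-1 : ℝ) * h5 + (t i - ρ) * h4
  have htlt : ∀ i, t i < ρ := by
    intro i
    obtain ⟨j, hj⟩ := hApos i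
    have h1 : A i j * (r j * y j) ≤ ∑ j, A i j * (r j * y j) :=
      Finset.single_le_sum
        (fun l _ => mul_nonneg (hA i l) (le_of_lt (mul_pos (hrpos l) (hypos l))))
        (Finset.mem_univ j)
    have h2 : 0 < A i j * (r j * y j) := mul_pos hj (mul_pos (hrpos j) (hypos j))
    have h3 := eig i
    by_contra hc
    push_neg at hc
    have h4 : (ρ - t i) * (r i * y i) ≤ 0 :=
      mul_nonpos_of_nonpos_of_nonneg (by linarith) (le_of_lt (mul_pos (hrpos i) (hypos i)))
    linarith
  -- the common sqrt manipulation
  have hD0 : ∀ i j, (0:ℝ) ≤ (t i - t j) ^ 2 + 4 * s i * s j / (r i * r j) := by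
    intro i j
    have h1 : 0 ≤ 4 * s i * s j / (r i * r j) :=
      div_nonneg (by nlinarith [hspos i, hspos j])
        (le_of_lt (mul_pos (hrpos i) (hrpos j)))
    nlinarith [sq_nonneg (t i - t j), h1]
  have hSfin : {x | ∃ i j, A i j ≠ 0 ∧ x = f i j}.Finite := by
    have hsub : {x | ∃ i j, A i j ≠ 0 ∧ x = f i j} ⊆
        Set.range (fun p : Fin n × Fin n => f p.1 p.2) := by
      rintro x ⟨i, j, -, rfl⟩
      exact ⟨(i, j), rfl⟩
    exact (Set.finite_range _).subset hsub
  rcases heq with hmax | hmin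
  · -- maximum case
    have hkey : ∀ i j, A i j ≠ 0 → s i * s j ≤ ((ρ - t i) * (ρ - t j)) * (r i * r j) := by
      intro i j hij
      have hFle : f i j ≤ ρ := by
        rw [hmax]
        exact le_csSup (hSfin.bddAbove) ⟨i, j, hij, rfl⟩
      rw [hf i j] at hFle
      set D := (t i - t j) ^ 2 + 4 * s i * s j / (r i * r j) with hD
      have hsq : Real.sqrt D ≤ 2 * ρ - t i - t j := by linarith
      have hq := Real.sq_sqrt (hD0 i j)
      rw [← hD] at hq
      have hDle : D ≤ (2 * ρ - t i - t j) ^ 2 := by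
        nlinarith [hq, Real.sqrt_nonneg D, hsq]
      rw [hD] at hDle
      have h4 : 4 * s i * s j / (r i * r j) = 4 * (s i * s j / (r i * r j)) := by ring
      rw [h4] at hDle
      have hdiv : s i * s j / (r i * r j) ≤ (ρ - t i) * (ρ - t j) := by nlinarith [hDle]
      rw [div_le_iff₀ (mul_pos (hrpos i) (hrpos j))] at hdiv
      nlinarith [hdiv]
    exact AuxPF.coreMax hn0 hA hirr hApos hrpos hspos hypos hs htlt eig hkey
  · -- minimum case
    have hkey : ∀ i j, A i j ≠ 0 → ((ρ - t i) * (ρ - t j)) * (r i * r j) ≤ s i * s j := by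
      intro i j hij
      have hFge : ρ ≤ f i j := by
        rw [hmin]
        exact csInf_le (hSfin.bddBelow) ⟨i, j, hij, rfl⟩
      rw [hf i j] at hFge
      set D := (t i - t j) ^ 2 + 4 * s i * s j / (r i * r j) with hD
      have hsq : 2 * ρ - t i - t j ≤ Real.sqrt D := by linarith
      have hpos : (0:ℝ) ≤ 2 * ρ - t i - t j := by linarith [htlt i, htlt j]
      have hq := Real.sq_sqrt (hD0 i j)
      rw [← hD] at hq
      have hDge : (2 * ρ - t i - t j) ^ 2 ≤ D := by
        nlinarith [hq, Real.sqrt_nonneg D, hsq, hpos]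
      rw [hD] at hDge
      have h4 : 4 * s i * s j / (r i * r j) = 4 * (s i * s j / (r i * r j)) := by ring
      rw [h4] at hDge
      have hdiv : (ρ - t i) * (ρ - t j) ≤ s i * s j / (r i * r j) := by nlinarith [hDge]
      rw [le_div_iff₀ (mul_pos (hrpos i) (hrpos j))] at hdiv
      nlinarith [hdiv]
    exact AuxPF.coreMin hn0 hA hirr hApos hrpos hspos hypos hs htlt eig hkey
end

section
/- Let G be a finite simple connected graph on n ≥ 2 vertices v_1,…,v_n with adjacency spectral radius ρ(G). Then min{ sqrt(m_i m_j) : v_i ~ v_j } ≤ ρ(G) ≤ max{ sqrt(m_i m_j) : v_i ~ v_j }, where the minimum and maximum are taken over all adjacent pairs of vertices. -/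
open Matrix

lemma spec_map_eq {n : ℕ} (A : Matrix (Fin n) (Fin n) ℝ) (hA : A.IsHermitian) :
    spectrum ℂ (A.map Complex.ofReal) = Set.range (fun i => (hA.eigenvalues i : ℂ)) := by
  have hsp := hA.spectral_theorem
  rw [Unitary.conjStarAlgAut_apply] at hsp
  set U : Matrix (Fin n) (Fin n) ℝ := (hA.eigenvectorUnitary : Matrix (Fin n) (Fin n) ℝ) with hU
  have hUU : U * star U = 1 := (Matrix.mem_unitaryGroup_iff).mp hA.eigenvectorUnitary.2
  have hUU' : star U * U = 1 := (Matrix.mem_unitaryGroup_iff').mp hA.eigenvectorUnitary.2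
  set φ := (Complex.ofRealHom.mapMatrix : Matrix (Fin n) (Fin n) ℝ →+* Matrix (Fin n) (Fin n) ℂ)
    with hφ
  have hmap : A.map Complex.ofReal = φ A := rfl
  have hdiag : φ (diagonal (RCLike.ofReal ∘ hA.eigenvalues))
      = diagonal (fun i => (hA.eigenvalues i : ℂ)) := by
    ext i j
    by_cases h : i = j <;> simp [hφ, RingHom.mapMatrix_apply, Matrix.map_apply, Matrix.diagonal, h]
  have hu1 : φ U * φ (star U) = 1 := by rw [← _root_.map_mul, hUU, _root_.map_one]
  have hu2 : φ (star U) * φ U = 1 := by rw [← _root_.map_mul, hUU', _root_.map_one]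
  let u : (Matrix (Fin n) (Fin n) ℂ)ˣ := ⟨φ U, φ (star U), hu1, hu2⟩
  have key := congrArg φ hsp
  rw [_root_.map_mul, _root_.map_mul] at key
  have key2 : φ A = u * φ (diagonal (RCLike.ofReal ∘ hA.eigenvalues)) * (u⁻¹ : _ˣ) := key
  rw [hmap, key2, spectrum.units_conjugate, hdiag, spectrum_diagonal]

lemma hpsd_top {n : ℕ} (A : Matrix (Fin n) (Fin n) ℝ) (hA : A.IsHermitian) (ρ : ℝ)
    (hρ : ∀ i, hA.eigenvalues i ≤ ρ) :
    PosSemidef (ρ • (1 : Matrix (Fin n) (Fin n) ℝ) - A) := by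
  have hdg : diagonal (fun i => ρ - hA.eigenvalues i)
      = ρ • (1 : Matrix (Fin n) (Fin n) ℝ) - diagonal (RCLike.ofReal ∘ hA.eigenvalues) := by
    ext i j
    by_cases h : i = j <;> simp [h, Matrix.one_apply]
  set U : Matrix (Fin n) (Fin n) ℝ := (hA.eigenvectorUnitary : Matrix (Fin n) (Fin n) ℝ) with hU
  have hUU : U * star U = 1 := (Matrix.mem_unitaryGroup_iff).mp hA.eigenvectorUnitary.2
  have key : ρ • (1 : Matrix (Fin n) (Fin n) ℝ) - A
      = U * diagonal (fun i => ρ - hA.eigenvalues i) * star U := by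
    rw [hdg, Matrix.mul_sub, Matrix.sub_mul, Matrix.mul_smul, Matrix.smul_mul, mul_one,
      hUU, ← Unitary.conjStarAlgAut_apply (S := ℝ), ← hA.spectral_theorem]
  rw [key]
  exact (posSemidef_diagonal_iff.mpr (fun i => by linarith [hρ i])).mul_mul_conjTranspose_same U

lemma rayleigh_le {n : ℕ} (A : Matrix (Fin n) (Fin n) ℝ) (hA : A.IsHermitian) (ρ : ℝ)
    (hρ : ∀ i, hA.eigenvalues i ≤ ρ) (x : Fin n → ℝ) :
    x ⬝ᵥ (A *ᵥ x) ≤ ρ * (x ⬝ᵥ x) := by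
  have h2 := (hpsd_top A hA ρ hρ).dotProduct_mulVec_nonneg x
  have hst : star x = x := by ext i; simp
  rw [hst, sub_mulVec, dotProduct_sub, smul_mulVec, one_mulVec, dotProduct_smul,
    smul_eq_mul] at h2
  linarith

lemma abs_dot_le {n : ℕ} (A : Matrix (Fin n) (Fin n) ℝ) (hnn : ∀ i j, 0 ≤ A i j)
    (v : Fin n → ℝ) :
    |v ⬝ᵥ (A *ᵥ v)| ≤ (fun i => |v i|) ⬝ᵥ (A *ᵥ fun i => |v i|) := by
  simp only [dotProduct, mulVec, dotProduct, Finset.mul_sum]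
  refine (Finset.abs_sum_le_sum_abs _ _).trans ?_
  refine Finset.sum_le_sum fun i _ => (Finset.abs_sum_le_sum_abs _ _).trans ?_
  refine Finset.sum_le_sum fun j _ => ?_
  rw [abs_mul, abs_mul, abs_of_nonneg (hnn i j)]

lemma perron_vec {n : ℕ} (A : Matrix (Fin n) (Fin n) ℝ) (hA : A.IsHermitian)
    (hnn : ∀ i j, 0 ≤ A i j) (i1 : Fin n) (hρ : ∀ i, hA.eigenvalues i ≤ hA.eigenvalues i1) :
    ∃ x : Fin n → ℝ, (∀ i, 0 ≤ x i) ∧ x ≠ 0 ∧ A *ᵥ x = hA.eigenvalues i1 • x := by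
  set ρ := hA.eigenvalues i1 with hρdef
  set v : Fin n → ℝ := ⇑(hA.eigenvectorBasis i1) with hv
  have hev : A *ᵥ v = ρ • v := hA.mulVec_eigenvectorBasis i1
  have hvne : v ≠ 0 := by
    have := hA.eigenvectorBasis.orthonormal.ne_zero i1
    intro h
    apply this
    ext j
    exact congrFun h j
  set x : Fin n → ℝ := fun i => |v i| with hx
  have hxx : x ⬝ᵥ x = v ⬝ᵥ v := by
    simp [hx, dotProduct, abs_mul_abs_self]
  have hvAv : v ⬝ᵥ (A *ᵥ v) = ρ * (v ⬝ᵥ v) := by rw [hev, dotProduct_smul, smul_eq_mul]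
  have hle : v ⬝ᵥ (A *ᵥ v) ≤ x ⬝ᵥ (A *ᵥ x) := (le_abs_self _).trans (abs_dot_le A hnn v)
  have hge : x ⬝ᵥ (A *ᵥ x) ≤ ρ * (x ⬝ᵥ x) := rayleigh_le A hA ρ hρ x
  have heq : x ⬝ᵥ ((ρ • (1 : Matrix (Fin n) (Fin n) ℝ) - A) *ᵥ x) = 0 := by
    rw [sub_mulVec, dotProduct_sub, smul_mulVec, one_mulVec, dotProduct_smul, smul_eq_mul]
    rw [hxx] at hge ⊢
    linarith
  obtain ⟨B, hB⟩ : ∃ B : Matrix (Fin n) (Fin n) ℝ, ρ • (1 : Matrix (Fin n) (Fin n) ℝ) - A = Bᴴ * B := by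
    open scoped MatrixOrder in
    exact CStarAlgebra.nonneg_iff_eq_star_mul_self.mp (hpsd_top A hA ρ hρ).nonneg
  have hBx : B *ᵥ x = 0 := by
    rw [← dotProduct_self_eq_zero (v := B *ᵥ x)]
    have h3 : x ⬝ᵥ ((Bᴴ * B) *ᵥ x) = (B *ᵥ x) ⬝ᵥ (B *ᵥ x) := by
      rw [← mulVec_mulVec, dotProduct_mulVec]
      congr 1
      have h4 := Matrix.star_mulVec (M := B) (v := x)
      have hstx : star x = x := by ext i; simp
      have hstBx : star (B *ᵥ x) = B *ᵥ x := by ext i; simp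
      rw [hstx] at h4
      rw [← h4, hstBx]
    rw [← h3, ← hB, heq]
  have hMx : (ρ • (1 : Matrix (Fin n) (Fin n) ℝ) - A) *ᵥ x = 0 := by
    rw [hB, ← mulVec_mulVec, hBx, mulVec_zero]
  have hAx : A *ᵥ x = ρ • x := by
    rw [sub_mulVec, smul_mulVec, one_mulVec, sub_eq_zero] at hMx
    exact hMx.symm
  refine ⟨x, fun i => abs_nonneg _, ?_, hAx⟩
  intro h
  apply hvne
  ext i
  have := congrFun h i
  simp only [hx, Pi.zero_apply] at this
  exact abs_eq_zero.mp this

lemma walk_pos {n : ℕ} (G : SimpleGraph (Fin n)) (x : Fin n → ℝ)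
    (hstep : ∀ a b, G.Adj a b → 0 < x a → 0 < x b) :
    ∀ {u v : Fin n} (_ : G.Walk u v), 0 < x u → 0 < x v := by
  intro u v w
  induction w with
  | nil => exact id
  | cons h p ih => exact fun hu => ih (hstep _ _ h hu)

lemma exists_adj_of_conn {n : ℕ} (hn : 2 ≤ n) (G : SimpleGraph (Fin n)) (hG : G.Connected)
    (i : Fin n) : ∃ j, G.Adj i j := by
  obtain ⟨j, hj⟩ : ∃ j : Fin n, j ≠ i := by
    by_cases h : i = ⟨0, by omega⟩
    · exact ⟨⟨1, by omega⟩, by simp [h, Fin.ext_iff]⟩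
    · exact ⟨⟨0, by omega⟩, fun hc => h hc.symm⟩
  obtain ⟨w⟩ := hG.preconnected i j
  cases w with
  | nil => exact absurd rfl hj
  | cons h p => exact ⟨_, h⟩

theorem stmt_6 {n : ℕ} (hn : 2 ≤ n) (G : SimpleGraph (Fin n)) [DecidableRel G.Adj]
    (hG : G.Connected)
    (m : Fin n → ℝ)
    (hm : ∀ i, m i = (∑ j ∈ G.neighborFinset i, (G.degree j : ℝ)) / (G.degree i : ℝ)) :
    sInf {x | ∃ i j, G.Adj i j ∧ x = Real.sqrt (m i * m j)} ≤ specRad (G.adjMatrix ℝ) ∧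
      specRad (G.adjMatrix ℝ) ≤ sSup {x | ∃ i j, G.Adj i j ∧ x = Real.sqrt (m i * m j)} := by
  classical
  set A := G.adjMatrix ℝ with hAdef
  have hA : A.IsHermitian := by
    rw [Matrix.IsHermitian, hAdef]
    ext i j
    simp [Matrix.conjTranspose_apply, SimpleGraph.adjMatrix_apply, G.adj_comm i j]
  have hnn : ∀ i j, 0 ≤ A i j := by
    intro i j
    rw [hAdef, SimpleGraph.adjMatrix_apply]
    split_ifs <;> norm_num
  -- max eigenvalue
  obtain ⟨i1, -, hmax⟩ := Finset.exists_max_image Finset.univ hA.eigenvalues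
    ⟨⟨0, by omega⟩, Finset.mem_univ _⟩
  set ρ := hA.eigenvalues i1 with hρdef
  have hρub : ∀ i, hA.eigenvalues i ≤ ρ := fun i => hmax i (Finset.mem_univ i)
  -- Perron eigenvector
  obtain ⟨x, hx0, hxne, hAx⟩ := perron_vec A hA hnn i1 hρub
  -- degrees
  have hd : ∀ i, ∃ j, G.Adj i j := exists_adj_of_conn hn G hG
  have hdeg : ∀ i, 0 < G.degree i := by
    intro i
    obtain ⟨j, hj⟩ := hd i
    exact (G.degree_pos_iff_exists_adj i).mpr ⟨j, hj⟩
  have hdR : ∀ i, (0 : ℝ) < G.degree i := fun i => by exact_mod_cast hdeg i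
  have hNne : ∀ i, (G.neighborFinset i).Nonempty := by
    intro i
    obtain ⟨j, hj⟩ := hd i
    exact ⟨j, (SimpleGraph.mem_neighborFinset G i j).mpr hj⟩
  -- eigen-equation pointwise
  have hAxj : ∀ j, ρ * x j = ∑ k ∈ G.neighborFinset j, x k := by
    intro j
    have h1 := congrFun hAx j
    simp only [Pi.smul_apply, smul_eq_mul] at h1
    rw [hρdef, ← h1]
    exact SimpleGraph.adjMatrix_mulVec_apply _ _ _
  -- positivity of ρ
  obtain ⟨i0, hi0⟩ := Function.ne_iff.mp hxne
  have hi0pos : 0 < x i0 := lt_of_le_of_ne (hx0 i0) (Ne.symm hi0)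
  obtain ⟨j0, hj0⟩ := hd i0
  have hsum0 : x i0 ≤ ∑ k ∈ G.neighborFinset j0, x k :=
    Finset.single_le_sum (fun k _ => hx0 k)
      ((SimpleGraph.mem_neighborFinset G j0 i0).mpr hj0.symm)
  have hρx : 0 < ρ * x j0 := lt_of_lt_of_le hi0pos (by rw [hAxj j0]; exact hsum0)
  have hρpos : 0 < ρ := by
    rcases mul_pos_iff.mp hρx with ⟨h1, h2⟩ | ⟨h1, h2⟩
    · exact h1
    · exact absurd h2 (not_lt.mpr (hx0 j0))
  -- positivity of x everywhere
  have hstep : ∀ a b, G.Adj a b → 0 < x a → 0 < x b := by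
    intro a b hab ha
    have h1 : x a ≤ ∑ k ∈ G.neighborFinset b, x k :=
      Finset.single_le_sum (fun k _ => hx0 k)
        ((SimpleGraph.mem_neighborFinset G b a).mpr hab.symm)
    have h2 : 0 < ρ * x b := lt_of_lt_of_le ha (by rw [hAxj b]; exact h1)
    rcases mul_pos_iff.mp h2 with ⟨_, hb⟩ | ⟨h1', _⟩
    · exact hb
    · exact absurd hρpos (not_lt.mpr h1'.le)
  have hxpos : ∀ j, 0 < x j := by
    intro j
    obtain ⟨w⟩ := hG.preconnected i0 j
    exact walk_pos G x hstep w hi0pos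
  -- the y vector
  set y : Fin n → ℝ := fun i => x i / (G.degree i : ℝ) with hy
  have hypos : ∀ i, 0 < y i := fun i => div_pos (hxpos i) (hdR i)
  have hxy : ∀ i, x i = (G.degree i : ℝ) * y i := by
    intro i
    rw [hy]
    field_simp [(hdR i).ne']
  have hsum_m : ∀ i, (∑ j ∈ G.neighborFinset i, (G.degree j : ℝ)) = m i * G.degree i := by
    intro i
    rw [hm i]
    field_simp [(hdR i).ne']
  have hmpos : ∀ i, 0 < m i := by
    intro i
    rw [hm i]
    exact div_pos (Finset.sum_pos (fun k _ => hdR k) (hNne i)) (hdR i)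
  -- the key edge bound, generic in comparison direction
  have hkey_le : ∀ u v : Fin n, v ∈ G.neighborFinset u →
      (∀ k ∈ G.neighborFinset u, y k ≤ y v) → ρ * y u ≤ m u * y v := by
    intro u v hvmem hvmax
    have h1 : ρ * x u ≤ (m u * G.degree u) * y v := by
      rw [hAxj u, ← hsum_m u]
      calc ∑ k ∈ G.neighborFinset u, x k
          = ∑ k ∈ G.neighborFinset u, (G.degree k : ℝ) * y k :=
            Finset.sum_congr rfl fun k _ => hxy k
        _ ≤ ∑ k ∈ G.neighborFinset u, (G.degree k : ℝ) * y v :=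
            Finset.sum_le_sum fun k hk =>
              mul_le_mul_of_nonneg_left (hvmax k hk) (hdR k).le
        _ = (∑ k ∈ G.neighborFinset u, (G.degree k : ℝ)) * y v := by
            rw [Finset.sum_mul]
    have h2 : (ρ * y u) * (G.degree u : ℝ) ≤ (m u * y v) * (G.degree u : ℝ) := by
      have e1 : (ρ * y u) * (G.degree u : ℝ) = ρ * x u := by rw [hxy u]; ring
      have e2 : (m u * y v) * (G.degree u : ℝ) = (m u * G.degree u) * y v := by ring
      rw [e1, e2]; exact h1
    exact le_of_mul_le_mul_right h2 (hdR u)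
  have hkey_ge : ∀ u v : Fin n, v ∈ G.neighborFinset u →
      (∀ k ∈ G.neighborFinset u, y v ≤ y k) → m u * y v ≤ ρ * y u := by
    intro u v hvmem hvmin
    have h1 : (m u * G.degree u) * y v ≤ ρ * x u := by
      rw [hAxj u, ← hsum_m u]
      calc (∑ k ∈ G.neighborFinset u, (G.degree k : ℝ)) * y v
          = ∑ k ∈ G.neighborFinset u, (G.degree k : ℝ) * y v := by rw [Finset.sum_mul]
        _ ≤ ∑ k ∈ G.neighborFinset u, (G.degree k : ℝ) * y k :=
            Finset.sum_le_sum fun k hk =>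
              mul_le_mul_of_nonneg_left (hvmin k hk) (hdR k).le
        _ = ∑ k ∈ G.neighborFinset u, x k :=
            Finset.sum_congr rfl fun k _ => (hxy k).symm
    have h2 : (m u * y v) * (G.degree u : ℝ) ≤ (ρ * y u) * (G.degree u : ℝ) := by
      have e1 : (ρ * y u) * (G.degree u : ℝ) = ρ * x u := by rw [hxy u]; ring
      have e2 : (m u * y v) * (G.degree u : ℝ) = (m u * G.degree u) * y v := by ring
      rw [e1, e2]; exact h1
    exact le_of_mul_le_mul_right h2 (hdR u)
  -- identify specRad with ρ
  have habs : ∀ i, |hA.eigenvalues i| ≤ ρ := by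
    intro i
    set v : Fin n → ℝ := ⇑(hA.eigenvectorBasis i) with hv
    have hev : A *ᵥ v = hA.eigenvalues i • v := hA.mulVec_eigenvectorBasis i
    have hvne : v ≠ 0 := by
      have := hA.eigenvectorBasis.orthonormal.ne_zero i
      intro h
      apply this
      ext j
      exact congrFun h j
    have hvv : 0 < v ⬝ᵥ v := by
      refine lt_of_le_of_ne (Finset.sum_nonneg fun k _ => mul_self_nonneg _) ?_
      intro h
      exact hvne (dotProduct_self_eq_zero.mp h.symm)
    set xv : Fin n → ℝ := fun j => |v j| with hxv
    have h1 : |v ⬝ᵥ (A *ᵥ v)| ≤ xv ⬝ᵥ (A *ᵥ xv) := abs_dot_le A hnn v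
    have h2 : xv ⬝ᵥ (A *ᵥ xv) ≤ ρ * (xv ⬝ᵥ xv) := rayleigh_le A hA ρ hρub xv
    have h3 : xv ⬝ᵥ xv = v ⬝ᵥ v := by simp [hxv, dotProduct, abs_mul_abs_self]
    have h4 : v ⬝ᵥ (A *ᵥ v) = hA.eigenvalues i * (v ⬝ᵥ v) := by
      rw [hev, dotProduct_smul, smul_eq_mul]
    have h5 : |hA.eigenvalues i| * (v ⬝ᵥ v) ≤ ρ * (v ⬝ᵥ v) := by
      have : |hA.eigenvalues i| * (v ⬝ᵥ v) = |v ⬝ᵥ (A *ᵥ v)| := by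
        rw [h4, abs_mul, abs_of_pos hvv]
      rw [this]
      calc |v ⬝ᵥ (A *ᵥ v)| ≤ xv ⬝ᵥ (A *ᵥ xv) := h1
        _ ≤ ρ * (xv ⬝ᵥ xv) := h2
        _ = ρ * (v ⬝ᵥ v) := by rw [h3]
    exact le_of_mul_le_mul_right h5 hvv
  have hspec : specRad A = ρ := by
    rw [specRad]
    have hset : {t : ℝ | ∃ μ : ℂ, μ ∈ spectrum ℂ (A.map Complex.ofReal) ∧ t = ‖μ‖}
        = Set.range (fun i => |hA.eigenvalues i|) := by
      rw [spec_map_eq A hA]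
      ext t
      constructor
      · rintro ⟨μ, ⟨i, rfl⟩, rfl⟩
        exact ⟨i, by simp [Complex.norm_real]⟩
      · rintro ⟨i, rfl⟩
        exact ⟨(hA.eigenvalues i : ℂ), ⟨i, rfl⟩, by simp [Complex.norm_real]⟩
    rw [hset]
    refine IsGreatest.csSup_eq ⟨⟨i1, ?_⟩, ?_⟩
    · exact abs_of_pos hρpos
    · rintro t ⟨i, rfl⟩
      exact habs i
  -- bounded sets
  set S := {t : ℝ | ∃ i j, G.Adj i j ∧ t = Real.sqrt (m i * m j)} with hS
  have hSsub : S ⊆ Set.range (fun p : Fin n × Fin n => Real.sqrt (m p.1 * m p.2)) := by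
    rintro t ⟨i, j, -, rfl⟩
    exact ⟨(i, j), rfl⟩
  have hSbddAbove : BddAbove S :=
    ((Set.finite_range _).subset hSsub).bddAbove
  have hSbddBelow : BddBelow S := by
    refine ⟨0, ?_⟩
    rintro t ⟨i, j, -, rfl⟩
    exact Real.sqrt_nonneg _
  constructor
  · -- lower bound: pick minimizers
    obtain ⟨u, -, hu⟩ := Finset.exists_min_image Finset.univ y ⟨⟨0, by omega⟩, Finset.mem_univ _⟩
    obtain ⟨v, hvmem, hv⟩ := Finset.exists_min_image (G.neighborFinset u) y (hNne u)
    have huv : G.Adj u v := (SimpleGraph.mem_neighborFinset G u v).mp hvmem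
    have i1' : m u * y v ≤ ρ * y u := hkey_ge u v hvmem fun k hk => hv k hk
    have i2' : m v * y u ≤ ρ * y v := by
      refine hkey_ge v u ((SimpleGraph.mem_neighborFinset G v u).mpr huv.symm) ?_
      intro k _
      exact hu k (Finset.mem_univ k)
    have hsq : m u * m v ≤ ρ ^ 2 := by
      have c1 : m u * (m v * y u) ≤ m u * (ρ * y v) :=
        mul_le_mul_of_nonneg_left i2' (hmpos u).le
      have c2 : ρ * (m u * y v) ≤ ρ * (ρ * y u) :=
        mul_le_mul_of_nonneg_left i1' hρpos.le
      have c3 : (m u * m v) * y u ≤ (ρ ^ 2) * y u := by nlinarith [hypos u, hypos v]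
      exact le_of_mul_le_mul_right c3 (hypos u)
    have hle : Real.sqrt (m u * m v) ≤ ρ := by
      calc Real.sqrt (m u * m v) ≤ Real.sqrt (ρ ^ 2) := Real.sqrt_le_sqrt hsq
        _ = ρ := Real.sqrt_sq hρpos.le
    have hmem : Real.sqrt (m u * m v) ∈ S := ⟨u, v, huv, rfl⟩
    have := csInf_le hSbddBelow hmem
    rw [hspec]
    exact this.trans hle
  · -- upper bound: pick maximizers
    obtain ⟨u, -, hu⟩ := Finset.exists_max_image Finset.univ y ⟨⟨0, by omega⟩, Finset.mem_univ _⟩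
    obtain ⟨v, hvmem, hv⟩ := Finset.exists_max_image (G.neighborFinset u) y (hNne u)
    have huv : G.Adj u v := (SimpleGraph.mem_neighborFinset G u v).mp hvmem
    have i1' : ρ * y u ≤ m u * y v := hkey_le u v hvmem fun k hk => hv k hk
    have i2' : ρ * y v ≤ m v * y u := by
      refine hkey_le v u ((SimpleGraph.mem_neighborFinset G v u).mpr huv.symm) ?_
      intro k _
      exact hu k (Finset.mem_univ k)
    have hsq : ρ ^ 2 ≤ m u * m v := by
      have c3 : (ρ ^ 2) * y u ≤ (m u * m v) * y u := by nlinarith [hypos u, hypos v, hmpos u]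
      exact le_of_mul_le_mul_right c3 (hypos u)
    have hle : ρ ≤ Real.sqrt (m u * m v) :=
      (Real.le_sqrt hρpos.le (by nlinarith [hmpos u, hmpos v])).mpr hsq
    have hmem : Real.sqrt (m u * m v) ∈ S := ⟨u, v, huv, rfl⟩
    have := le_csSup hSbddAbove hmem
    rw [hspec]
    exact hle.trans this
end

section
/- Let G be a finite simple connected graph on n ≥ 2 vertices v_1,…,v_n with adjacency spectral radius ρ(G). Then ρ(G) = min{ sqrt(m_i m_j) : v_i ~ v_j } or ρ(G) = max{ sqrt(m_i m_j) : v_i ~ v_j } holds if and only if one of the following holds: (i) m_1 = m_2 = … = m_n; (ii) G is bipartite and any two vertices in the same part of the bipartition have the same average neighbor degree m_i. -/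
open Matrix

section Aux
variable {n : ℕ}

lemma algebraMap_mulVec (μ : ℂ) (z : Fin n → ℂ) :
    (algebraMap ℂ (Matrix (Fin n) (Fin n) ℂ)) μ *ᵥ z = μ • z := by
  ext i
  simp [Matrix.mulVec, dotProduct, Matrix.algebraMap_matrix_apply]

lemma mem_spectrum_of_eig {M : Matrix (Fin n) (Fin n) ℂ} {μ : ℂ} {z : Fin n → ℂ}
    (hz : z ≠ 0) (h : M *ᵥ z = μ • z) : μ ∈ spectrum ℂ M := by
  rw [spectrum.mem_iff]
  have key := algebraMap_mulVec (n:=n) μ z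
  intro hU
  rw [Matrix.isUnit_iff_isUnit_det] at hU
  have hdet : (algebraMap ℂ (Matrix (Fin n) (Fin n) ℂ) μ - M).det = 0 := by
    rw [← Matrix.exists_mulVec_eq_zero_iff]
    refine ⟨z, hz, ?_⟩
    rw [Matrix.sub_mulVec, key, h, sub_self]
  rw [hdet] at hU
  exact (not_isUnit_zero hU)

lemma eig_of_mem_spectrum {M : Matrix (Fin n) (Fin n) ℂ} {μ : ℂ}
    (h : μ ∈ spectrum ℂ M) : ∃ z : Fin n → ℂ, z ≠ 0 ∧ M *ᵥ z = μ • z := by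
  rw [spectrum.mem_iff] at h
  have hdet : (algebraMap ℂ (Matrix (Fin n) (Fin n) ℂ) μ - M).det = 0 := by
    by_contra hd
    exact h ((Matrix.isUnit_iff_isUnit_det _).2 (isUnit_iff_ne_zero.2 hd))
  rw [← Matrix.exists_mulVec_eq_zero_iff] at hdet
  obtain ⟨z, hz, hz0⟩ := hdet
  have key := algebraMap_mulVec (n:=n) μ z
  refine ⟨z, hz, ?_⟩
  rwa [Matrix.sub_mulVec, key, sub_eq_zero, eq_comm] at hz0

lemma abs_eig_le {A : Matrix (Fin n) (Fin n) ℝ} (hsymm : Aᵀ = A) (hpos : ∀ i j, 0 ≤ A i j)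
    {w : Fin n → ℝ} (hw : ∀ i, 0 < w i) {c : ℝ} (hAw : A *ᵥ w = c • w)
    {μ : ℂ} (hμ : μ ∈ spectrum ℂ (A.map Complex.ofReal)) : ‖μ‖ ≤ c := by
  obtain ⟨z, hz, hzeq⟩ := eig_of_mem_spectrum hμ
  have key : ∀ i, ‖μ‖ * ‖(z i)‖ ≤ ∑ j, A i j * ‖(z j)‖ := by
    intro i
    have h1 : (∑ j, ((A i j : ℂ) * z j)) = μ * z i := by
      have := congrFun hzeq i
      simpa [Matrix.mulVec, dotProduct, Matrix.map_apply] using this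
    calc ‖μ‖ * ‖(z i)‖ = ‖(μ * z i)‖ := (norm_mul _ _).symm
      _ = ‖(∑ j, ((A i j : ℂ) * z j))‖ := by rw [h1]
      _ ≤ ∑ j, ‖((A i j : ℂ) * z j)‖ := by
          exact norm_sum_le _ _
      _ = ∑ j, A i j * ‖(z j)‖ := by
          refine Finset.sum_congr rfl fun j _ => ?_
          rw [norm_mul, Complex.norm_real, Real.norm_eq_abs, abs_of_nonneg (hpos i j)]
  have hsum_pos : 0 < ∑ i, w i * ‖(z i)‖ := by
    have hzi : ∃ i, z i ≠ 0 := by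
      by_contra hc; push_neg at hc; exact hz (funext fun i => hc i)
    obtain ⟨i0, hi0⟩ := hzi
    refine Finset.sum_pos' (fun i _ => ?_) ⟨i0, Finset.mem_univ i0, ?_⟩
    · exact mul_nonneg (hw i).le (norm_nonneg _)
    · exact mul_pos (hw i0) (by simpa using hi0)
  have main : ‖μ‖ * (∑ i, w i * ‖(z i)‖) ≤
      c * (∑ i, w i * ‖(z i)‖) := by
    calc ‖μ‖ * (∑ i, w i * ‖(z i)‖)
        = ∑ i, w i * (‖μ‖ * ‖(z i)‖) := by
          rw [Finset.mul_sum]; refine Finset.sum_congr rfl fun i _ => by ring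
      _ ≤ ∑ i, w i * (∑ j, A i j * ‖(z j)‖) := by
          refine Finset.sum_le_sum fun i _ => mul_le_mul_of_nonneg_left (key i) (hw i).le
      _ = ∑ j, (∑ i, A i j * w i) * ‖(z j)‖ := by
          simp_rw [Finset.mul_sum, Finset.sum_mul]
          rw [Finset.sum_comm]
          refine Finset.sum_congr rfl fun j _ => Finset.sum_congr rfl fun i _ => by ring
      _ = ∑ j, (c * w j) * ‖(z j)‖ := by
          refine Finset.sum_congr rfl fun j _ => ?_
          have : (∑ i, A j i * w i) = c * w j := by
            simpa [Matrix.mulVec, dotProduct] using congrFun hAw j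
          rw [← this]
          congr 1
          refine Finset.sum_congr rfl fun i _ => ?_
          have hsym' : A i j = A j i := by conv_lhs => rw [← hsymm, Matrix.transpose_apply]
          rw [hsym']
      _ = c * (∑ i, w i * ‖(z i)‖) := by
          rw [Finset.mul_sum]; refine Finset.sum_congr rfl fun i _ => by ring
  exact le_of_mul_le_mul_right main hsum_pos

lemma specRad_eq_of_eig (hn : 0 < n) {A : Matrix (Fin n) (Fin n) ℝ} (hsymm : Aᵀ = A)
    (hpos : ∀ i j, 0 ≤ A i j) {w : Fin n → ℝ} (hw : ∀ i, 0 < w i) {c : ℝ} (hc0 : 0 ≤ c)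
    (hAw : A *ᵥ w = c • w) : specRad A = c := by
  have hmem : (c : ℂ) ∈ spectrum ℂ (A.map Complex.ofReal) := by
    apply mem_spectrum_of_eig (z := fun i => (w i : ℂ))
    · intro h0
      have h1 := congrFun h0 ⟨0, hn⟩
      simp only [Pi.zero_apply, Complex.ofReal_eq_zero] at h1
      exact (hw _).ne' h1
    · ext i
      have hr : (∑ j, A i j * w j) = c * w i := by
        simpa [Matrix.mulVec, dotProduct] using congrFun hAw i
      simp only [Matrix.mulVec, dotProduct, Matrix.map_apply, Pi.smul_apply,
        smul_eq_mul]
      exact_mod_cast hr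
  apply IsGreatest.csSup_eq
  constructor
  · exact ⟨(c:ℂ), hmem, by rw [Complex.norm_real, Real.norm_eq_abs, abs_of_nonneg hc0]⟩
  · rintro x ⟨μ, hμ, rfl⟩
    exact abs_eig_le hsymm hpos hw hAw hμ


lemma perron_s7 (hn : 2 ≤ n) (G : SimpleGraph (Fin n)) [DecidableRel G.Adj] (hG : G.Connected) :
    ∃ (w : Fin n → ℝ) (c : ℝ), (∀ i, 0 < w i) ∧ 0 ≤ c ∧ G.adjMatrix ℝ *ᵥ w = c • w := by
  classical
  set A := G.adjMatrix ℝ with hA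
  have hApos : ∀ i j, 0 ≤ A i j := fun i j => by
    simp [hA, SimpleGraph.adjMatrix]; split <;> norm_num
  have hAsymm : ∀ i j, A i j = A j i := fun i j => by
    simp [hA, SimpleGraph.adjMatrix_apply, G.adj_comm]
  have hnea : Nonempty (Fin n) := ⟨⟨0, by omega⟩⟩
  have : Nontrivial (EuclideanSpace ℝ (Fin n)) := by
    refine ⟨0, (WithLp.equiv 2 (Fin n → ℝ)).symm (fun _ => 1), fun h => ?_⟩
    exact zero_ne_one (congrFun (congrArg (WithLp.equiv 2 (Fin n → ℝ)) h) ⟨0, by omega⟩)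
  set T : EuclideanSpace ℝ (Fin n) →L[ℝ] EuclideanSpace ℝ (Fin n) := LinearMap.toContinuousLinearMap (Matrix.toEuclideanLin A) with hT
  have hTapp : ∀ (x : EuclideanSpace ℝ (Fin n)) (i : Fin n), T x i = ∑ j, A i j * x j := fun x i => rfl
  have hinner : ∀ x y : EuclideanSpace ℝ (Fin n), (inner ℝ x y : ℝ) = ∑ i, x i * y i := fun x y => by
    simp [PiLp.inner_apply, RCLike.inner_apply, mul_comm]
  have hreap : ∀ x : EuclideanSpace ℝ (Fin n), T.reApplyInnerSelf x = ∑ i, ∑ j, A i j * x j * x i := by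
    intro x
    rw [ContinuousLinearMap.reApplyInnerSelf_apply, RCLike.re_to_real, hinner]
    exact Finset.sum_congr rfl fun i _ => by rw [hTapp, Finset.sum_mul]
  have hsa : IsSelfAdjoint T := by
    rw [ContinuousLinearMap.isSelfAdjoint_iff_isSymmetric]
    intro x y
    simp only [ContinuousLinearMap.coe_coe]
    rw [hinner, hinner]
    calc ∑ i, T x i * y i
        = ∑ i, ∑ j, A i j * x j * y i := by
          refine Finset.sum_congr rfl fun i _ => by rw [hTapp, Finset.sum_mul]
      _ = ∑ j, ∑ i, A i j * x j * y i := Finset.sum_comm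
      _ = ∑ j, x j * T y j := by
          refine Finset.sum_congr rfl fun j _ => ?_
          rw [hTapp, Finset.mul_sum]
          refine Finset.sum_congr rfl fun i _ => by rw [hAsymm i j]; ring
  have hsph : (Metric.sphere (0 : EuclideanSpace ℝ (Fin n)) 1).Nonempty :=
    NormedSpace.sphere_nonempty.mpr zero_le_one
  obtain ⟨x₀, hx₀mem, hx₀max⟩ :=
    IsCompact.exists_isMaxOn (isCompact_sphere (0 : EuclideanSpace ℝ (Fin n)) 1) hsph
      T.reApplyInnerSelf_continuous.continuousOn
  have hx₀norm : ‖x₀‖ = 1 := mem_sphere_zero_iff_norm.mp hx₀mem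
  set y₀ : EuclideanSpace ℝ (Fin n) := (WithLp.equiv 2 (Fin n → ℝ)).symm (fun i => |x₀ i|)
    with hy₀
  have hy₀app : ∀ i, y₀ i = |x₀ i| := fun i => rfl
  have hy₀norm : ‖y₀‖ = 1 := by
    rw [EuclideanSpace.norm_eq] at hx₀norm ⊢
    simpa [hy₀app, Real.norm_eq_abs, abs_abs] using hx₀norm
  have hy₀ne : y₀ ≠ 0 := by
    intro h; rw [h, norm_zero] at hy₀norm; norm_num at hy₀norm
  have hmax' : IsMaxOn T.reApplyInnerSelf (Metric.sphere (0 : EuclideanSpace ℝ (Fin n)) 1) y₀ := by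
    rw [isMaxOn_iff]
    intro z hz
    refine le_trans (isMaxOn_iff.mp hx₀max z hz) ?_
    rw [hreap, hreap]
    refine Finset.sum_le_sum fun i _ => Finset.sum_le_sum fun j _ => ?_
    rw [hy₀app, hy₀app]
    calc A i j * x₀ j * x₀ i ≤ |A i j * x₀ j * x₀ i| := le_abs_self _
      _ = A i j * |x₀ j| * |x₀ i| := by rw [abs_mul, abs_mul, abs_of_nonneg (hApos i j)]
  have hev := hsa.hasEigenvector_of_isMaxOn hy₀ne (by rw [hy₀norm]; exact hmax')
  set c := (⨆ x : {x : EuclideanSpace ℝ (Fin n) // x ≠ 0}, T.rayleighQuotient x) with hc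
  have heig : (T : EuclideanSpace ℝ (Fin n) →ₗ[ℝ] EuclideanSpace ℝ (Fin n)) y₀ = c • y₀ :=
    hev.apply_eq_smul
  set w : Fin n → ℝ := fun i => y₀ i with hw
  have hAw : A *ᵥ w = c • w := by
    ext i
    have h1 : T y₀ i = c * y₀ i := by
      rw [show T y₀ = c • y₀ from heig]; rfl
    rw [hTapp] at h1
    simpa [Matrix.mulVec, dotProduct, hw] using h1
  have hwnonneg : ∀ i, 0 ≤ w i := fun i => by rw [hw]; exact abs_nonneg _
  have hAwi : ∀ i, ∑ k, A i k * w k = c * w i := fun i => by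
    simpa [Matrix.mulVec, dotProduct] using congrFun hAw i
  have hex : ∃ i0, w i0 ≠ 0 := by
    by_contra hcc
    push_neg at hcc
    apply hy₀ne
    ext i
    exact hcc i
  obtain ⟨i0, hi0⟩ := hex
  have hc0 : 0 ≤ c := by
    have h1 := hAwi i0
    have h2 : 0 ≤ ∑ k, A i0 k * w k :=
      Finset.sum_nonneg fun k _ => mul_nonneg (hApos i0 k) (hwnonneg k)
    have h3 : 0 < w i0 := lt_of_le_of_ne (hwnonneg i0) (Ne.symm hi0)
    nlinarith
  have hprop : ∀ i, w i = 0 → ∀ j, G.Adj i j → w j = 0 := by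
    intro i hi j hij
    have h1 := hAwi i
    rw [hi, mul_zero] at h1
    have h2 := (Finset.sum_eq_zero_iff_of_nonneg
      (fun k _ => mul_nonneg (hApos i k) (hwnonneg k))).mp h1 j (Finset.mem_univ j)
    have h3 : A i j = 1 := by simp [hA, SimpleGraph.adjMatrix_apply, hij]
    rw [h3, one_mul] at h2
    exact h2
  have hzero : ∀ (u v : Fin n) (p : G.Walk u v), w u = 0 → w v = 0 := by
    intro u v p
    induction p with
    | nil => exact id
    | cons h q ih => intro h0; exact ih (hprop _ h0 _ h)
  have hwpos : ∀ i, 0 < w i := by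
    intro i
    rcases (hwnonneg i).lt_or_eq with h | h
    · exact h
    · exfalso
      obtain ⟨p⟩ := hG.preconnected i i0
      exact hi0 (hzero i i0 p h.symm)
  exact ⟨w, c, hwpos, hc0, hAw⟩


lemma classify (G : SimpleGraph (Fin n)) [DecidableRel G.Adj] (hG : G.Connected)
    (m : Fin n → ℝ) (t : ℝ) (ht : 0 < t) (hm0 : ∀ i, m i ≠ 0)
    (hprod : ∀ i j, G.Adj i j → m i * m j = t) :
    (∀ i j, m i = m j) ∨
      ∃ U : Set (Fin n), (∀ i j, G.Adj i j → (i ∈ U ↔ j ∉ U)) ∧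
        (∀ i ∈ U, ∀ j ∈ U, m i = m j) ∧ (∀ i ∉ U, ∀ j ∉ U, m i = m j) := by
  obtain ⟨v⟩ := hG.nonempty
  have hinv : t / (t / m v) = m v := by
    field_simp
  have hstep : ∀ i j, G.Adj i j → m j = t / m i := by
    intro i j hij
    rw [eq_div_iff (hm0 i), mul_comm]
    exact hprod i j hij
  have hdi : ∀ (u x : Fin n) (p : G.Walk u x),
      (m u = m v ∨ m u = t / m v) → (m x = m v ∨ m x = t / m v) := by
    intro u x p
    induction p with
    | nil => exact id
    | @cons u b x h q ih =>
      intro hu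
      apply ih
      have hb := hstep u b h
      rcases hu with h1 | h1
      · right; rw [hb, h1]
      · left; rw [hb, h1, hinv]
  have hdich : ∀ x, m x = m v ∨ m x = t / m v := by
    intro x
    obtain ⟨p⟩ := hG.preconnected v x
    exact hdi v x p (Or.inl rfl)
  by_cases hvv : m v = t / m v
  · left
    intro i j
    rcases hdich i with h | h <;> rcases hdich j with h' | h' <;>
      rw [h, h'] <;> rw [← hvv]
  · right
    refine ⟨{x | m x = m v}, ?_, ?_, ?_⟩
    · intro i j hij
      have hmj := hstep i j hij
      constructor
      · intro hi hj
        rw [Set.mem_setOf_eq] at hi hj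
        rw [hi] at hmj
        exact hvv (hj ▸ hmj)
      · intro hj
        rcases hdich i with h | h
        · exact h
        · exfalso
          apply hj
          rw [Set.mem_setOf_eq, hmj, h, hinv]
    · intro i hi j hj
      rw [Set.mem_setOf_eq] at hi hj
      rw [hi, hj]
    · intro i hi j hj
      rw [Set.mem_setOf_eq] at hi hj
      rcases hdich i with h | h
      · exact absurd h hi
      · rcases hdich j with h' | h'
        · exact absurd h' hj
        · rw [h, h']

lemma exists_adj (hn : 2 ≤ n) (G : SimpleGraph (Fin n)) (hG : G.Connected) (i : Fin n) :
    ∃ j, G.Adj i j := by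
  have : ∃ u : Fin n, u ≠ i := by
    by_cases h : i = ⟨0, by omega⟩
    · exact ⟨⟨1, by omega⟩, by rw [h]; intro hh; exact absurd (congrArg Fin.val hh) (by norm_num)⟩
    · exact ⟨⟨0, by omega⟩, fun hh => h hh.symm⟩
  obtain ⟨u, hu⟩ := this
  obtain ⟨p⟩ := hG.preconnected i u
  cases p with
  | nil => exact absurd rfl hu
  | cons h q => exact ⟨_, h⟩

end Aux

theorem stmt_7 {n : ℕ} (hn : 2 ≤ n) (G : SimpleGraph (Fin n)) [DecidableRel G.Adj]
    (hG : G.Connected)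
    (m : Fin n → ℝ)
    (hm : ∀ i, m i = (∑ j ∈ G.neighborFinset i, (G.degree j : ℝ)) / (G.degree i : ℝ)) :
    (specRad (G.adjMatrix ℝ) = sInf {x | ∃ i j, G.Adj i j ∧ x = Real.sqrt (m i * m j)} ∨
      specRad (G.adjMatrix ℝ) = sSup {x | ∃ i j, G.Adj i j ∧ x = Real.sqrt (m i * m j)}) ↔
    ((∀ i j, m i = m j) ∨
      ∃ U : Set (Fin n), (∀ i j, G.Adj i j → (i ∈ U ↔ j ∉ U)) ∧
        (∀ i ∈ U, ∀ j ∈ U, m i = m j) ∧ (∀ i ∉ U, ∀ j ∉ U, m i = m j)) := by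
  classical
  have hnn : 0 < n := by omega
  set A := G.adjMatrix ℝ with hA
  have hApos : ∀ i j, 0 ≤ A i j := fun i j => by
    simp [hA, SimpleGraph.adjMatrix]; split <;> norm_num
  have hAsymmT : Aᵀ = A := G.transpose_adjMatrix
  set d : Fin n → ℝ := fun i => (G.degree i : ℝ) with hd
  have hdpos : ∀ i, 0 < d i := by
    intro i
    have h1 : 0 < G.degree i := by
      rw [SimpleGraph.degree_pos_iff_exists_adj]
      exact exists_adj hn G hG i
    simp only [hd]
    exact_mod_cast h1
  have hmd : ∀ i, m i * d i = ∑ j ∈ G.neighborFinset i, d j := by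
    intro i
    rw [hm i]
    exact div_mul_cancel₀ _ (by
      have h1 : 0 < G.degree i := by
        rw [SimpleGraph.degree_pos_iff_exists_adj]
        exact exists_adj hn G hG i
      exact_mod_cast h1.ne')
  have hmpos : ∀ i, 0 < m i := by
    intro i
    rw [hm i]
    apply div_pos
    · apply Finset.sum_pos
      · intro j _
        exact hdpos j
      · obtain ⟨j, hj⟩ := exists_adj hn G hG i
        exact ⟨j, (SimpleGraph.mem_neighborFinset G i j).mpr hj⟩
    · exact hdpos i
  have hAd : A *ᵥ d = fun i => m i * d i := by
    ext i
    rw [hA, SimpleGraph.adjMatrix_mulVec_apply]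
    exact (hmd i).symm
  have hA2d : ∀ i, (A *ᵥ (A *ᵥ d)) i = ∑ k ∈ G.neighborFinset i, m k * d k := by
    intro i
    rw [hA, SimpleGraph.adjMatrix_mulVec_apply]
    refine Finset.sum_congr rfl fun k _ => ?_
    rw [← hA, hAd]
  set S := {x | ∃ i j, G.Adj i j ∧ x = Real.sqrt (m i * m j)} with hS
  have hSfin : S.Finite := by
    apply Set.Finite.subset (Set.finite_range (fun p : Fin n × Fin n => Real.sqrt (m p.1 * m p.2)))
    rintro x ⟨i, j, _, rfl⟩
    exact ⟨(i, j), rfl⟩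
  obtain ⟨v0, huv0⟩ := exists_adj hn G hG ⟨0, hnn⟩
  have hSne : S.Nonempty := ⟨_, ⟨0, hnn⟩, v0, huv0, rfl⟩
  obtain ⟨w, c, hwpos, hc0, hAw⟩ := perron_s7 hn G hG
  have hspec : specRad A = c := specRad_eq_of_eig hnn hAsymmT hApos hwpos hc0 hAw
  constructor
  · -- hard direction
    intro hcase
    have hAwi : ∀ i, ∑ k, A i k * w k = c * w i := fun i => by
      have h := congrFun hAw i
      simpa [Matrix.mulVec, dotProduct, hA, SimpleGraph.adjMatrix_apply,
        ite_mul, one_mul, zero_mul] using h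
    have swap : ∀ u : Fin n → ℝ, ∑ i, w i * (A *ᵥ u) i = c * ∑ i, w i * u i := by
      intro u
      calc ∑ i, w i * (A *ᵥ u) i = ∑ i, ∑ k, A i k * u k * w i := by
            refine Finset.sum_congr rfl fun i _ => ?_
            rw [show (A *ᵥ u) i = ∑ k, A i k * u k from by
              simp [Matrix.mulVec, dotProduct], Finset.mul_sum]
            refine Finset.sum_congr rfl fun k _ => by ring
        _ = ∑ k, (∑ i, A k i * w i) * u k := by
            rw [Finset.sum_comm]
            refine Finset.sum_congr rfl fun k _ => ?_
            rw [Finset.sum_mul]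
            refine Finset.sum_congr rfl fun i _ => ?_
            have : A i k = A k i := by conv_lhs => rw [← hAsymmT, Matrix.transpose_apply]
            rw [this]; ring
        _ = ∑ k, (c * w k) * u k := by
            refine Finset.sum_congr rfl fun k _ => by rw [hAwi k]
        _ = c * ∑ k, w k * u k := by
            rw [Finset.mul_sum]
            refine Finset.sum_congr rfl fun k _ => by ring
    have key : ∑ i, w i * (A *ᵥ (A *ᵥ d)) i = c ^ 2 * ∑ i, w i * d i := by
      rw [swap (A *ᵥ d), swap d]; ring
    have hprod : ∀ i j, G.Adj i j → m i * m j = c ^ 2 := by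
      rcases hcase with hmin | hmax
      · -- min case
        rw [hspec] at hmin
        have hle : ∀ i j, G.Adj i j → c ^ 2 ≤ m i * m j := by
          intro i j hij
          have h1 : c ≤ Real.sqrt (m i * m j) := by
            rw [hmin]
            exact csInf_le hSfin.bddBelow ⟨i, j, hij, rfl⟩
          have h2 := Real.sq_sqrt (mul_nonneg (hmpos i).le (hmpos j).le)
          nlinarith [Real.sqrt_nonneg (m i * m j)]
        have hdivle : ∀ i k, G.Adj i k → c ^ 2 / m i ≤ m k := by
          intro i k hik
          have := hle i k hik
          rw [div_le_iff₀ (hmpos i)]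
          nlinarith
        have hge : ∀ i, c ^ 2 * d i ≤ (A *ᵥ (A *ᵥ d)) i := by
          intro i
          rw [hA2d i]
          have h1 : ∑ k ∈ G.neighborFinset i, (c ^ 2 / m i) * d k ≤
              ∑ k ∈ G.neighborFinset i, m k * d k := by
            refine Finset.sum_le_sum fun k hk => ?_
            exact mul_le_mul_of_nonneg_right
              (hdivle i k ((SimpleGraph.mem_neighborFinset G i k).mp hk)) (hdpos k).le
          calc c ^ 2 * d i = (c ^ 2 / m i) * (m i * d i) := by
                field_simp [(hmpos i).ne']
            _ = (c ^ 2 / m i) * ∑ k ∈ G.neighborFinset i, d k := by rw [hmd i]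
            _ = ∑ k ∈ G.neighborFinset i, (c ^ 2 / m i) * d k := Finset.mul_sum _ _ _
            _ ≤ ∑ k ∈ G.neighborFinset i, m k * d k := h1
        have hzero : ∑ i, w i * ((A *ᵥ (A *ᵥ d)) i - c ^ 2 * d i) = 0 := by
          have h6 : ∑ i, w i * ((A *ᵥ (A *ᵥ d)) i - c ^ 2 * d i) =
              (∑ i, w i * (A *ᵥ (A *ᵥ d)) i) - c ^ 2 * ∑ i, w i * d i := by
            rw [Finset.mul_sum, ← Finset.sum_sub_distrib]
            exact Finset.sum_congr rfl fun i _ => by ring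
          rw [h6, key, sub_self]
        have heach := (Finset.sum_eq_zero_iff_of_nonneg
          (fun i _ => mul_nonneg (hwpos i).le (sub_nonneg.mpr (hge i)))).mp hzero
        have hmain : ∀ i, (A *ᵥ (A *ᵥ d)) i = c ^ 2 * d i := by
          intro i
          have h4 := heach i (Finset.mem_univ i)
          rcases mul_eq_zero.mp h4 with h5 | h5
          · exact absurd h5 (hwpos i).ne'
          · linarith [sub_eq_zero.mp h5]
        intro i j hij
        have h1 : ∑ k ∈ G.neighborFinset i, (m k - c ^ 2 / m i) * d k = 0 := by
          have h2 : ∑ k ∈ G.neighborFinset i, (m k - c ^ 2 / m i) * d k =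
              (∑ k ∈ G.neighborFinset i, m k * d k) -
                (c ^ 2 / m i) * ∑ k ∈ G.neighborFinset i, d k := by
            rw [Finset.mul_sum, ← Finset.sum_sub_distrib]
            exact Finset.sum_congr rfl fun k _ => by ring
          rw [h2, ← hA2d i, hmain i, ← hmd i]
          field_simp [(hmpos i).ne']
          ring
        have hterm := (Finset.sum_eq_zero_iff_of_nonneg
          (fun k hk => mul_nonneg
            (sub_nonneg.mpr (hdivle i k ((SimpleGraph.mem_neighborFinset G i k).mp hk)))
            (hdpos k).le)).mp h1 j ((SimpleGraph.mem_neighborFinset G i j).mpr hij)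
        rcases mul_eq_zero.mp hterm with h5 | h5
        · have h7 : m j = c ^ 2 / m i := by linarith [sub_eq_zero.mp h5]
          rw [h7]
          field_simp [(hmpos i).ne']
        · exact absurd h5 (hdpos j).ne'
      · -- max case
        rw [hspec] at hmax
        have hle : ∀ i j, G.Adj i j → m i * m j ≤ c ^ 2 := by
          intro i j hij
          have h1 : Real.sqrt (m i * m j) ≤ c := by
            rw [hmax]
            exact le_csSup hSfin.bddAbove ⟨i, j, hij, rfl⟩
          have h2 := Real.sq_sqrt (mul_nonneg (hmpos i).le (hmpos j).le)
          nlinarith [Real.sqrt_nonneg (m i * m j)]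
        have hdivle : ∀ i k, G.Adj i k → m k ≤ c ^ 2 / m i := by
          intro i k hik
          have := hle i k hik
          rw [le_div_iff₀ (hmpos i)]
          nlinarith
        have hge : ∀ i, (A *ᵥ (A *ᵥ d)) i ≤ c ^ 2 * d i := by
          intro i
          rw [hA2d i]
          have h1 : ∑ k ∈ G.neighborFinset i, m k * d k ≤
              ∑ k ∈ G.neighborFinset i, (c ^ 2 / m i) * d k := by
            refine Finset.sum_le_sum fun k hk => ?_
            exact mul_le_mul_of_nonneg_right
              (hdivle i k ((SimpleGraph.mem_neighborFinset G i k).mp hk)) (hdpos k).le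
          calc ∑ k ∈ G.neighborFinset i, m k * d k
              ≤ ∑ k ∈ G.neighborFinset i, (c ^ 2 / m i) * d k := h1
            _ = (c ^ 2 / m i) * ∑ k ∈ G.neighborFinset i, d k := (Finset.mul_sum _ _ _).symm
            _ = (c ^ 2 / m i) * (m i * d i) := by rw [hmd i]
            _ = c ^ 2 * d i := by
                field_simp [(hmpos i).ne']
        have hzero : ∑ i, w i * (c ^ 2 * d i - (A *ᵥ (A *ᵥ d)) i) = 0 := by
          have h6 : ∑ i, w i * (c ^ 2 * d i - (A *ᵥ (A *ᵥ d)) i) =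
              c ^ 2 * (∑ i, w i * d i) - ∑ i, w i * (A *ᵥ (A *ᵥ d)) i := by
            rw [Finset.mul_sum, ← Finset.sum_sub_distrib]
            exact Finset.sum_congr rfl fun i _ => by ring
          rw [h6, key, sub_self]
        have heach := (Finset.sum_eq_zero_iff_of_nonneg
          (fun i _ => mul_nonneg (hwpos i).le (sub_nonneg.mpr (hge i)))).mp hzero
        have hmain : ∀ i, (A *ᵥ (A *ᵥ d)) i = c ^ 2 * d i := by
          intro i
          have h4 := heach i (Finset.mem_univ i)
          rcases mul_eq_zero.mp h4 with h5 | h5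
          · exact absurd h5 (hwpos i).ne'
          · linarith [sub_eq_zero.mp h5]
        intro i j hij
        have h1 : ∑ k ∈ G.neighborFinset i, (c ^ 2 / m i - m k) * d k = 0 := by
          have h2 : ∑ k ∈ G.neighborFinset i, (c ^ 2 / m i - m k) * d k =
              (c ^ 2 / m i) * (∑ k ∈ G.neighborFinset i, d k) -
                ∑ k ∈ G.neighborFinset i, m k * d k := by
            rw [Finset.mul_sum, ← Finset.sum_sub_distrib]
            exact Finset.sum_congr rfl fun k _ => by ring
          rw [h2, ← hA2d i, hmain i, ← hmd i]
          field_simp [(hmpos i).ne']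
          ring
        have hterm := (Finset.sum_eq_zero_iff_of_nonneg
          (fun k hk => mul_nonneg
            (sub_nonneg.mpr (hdivle i k ((SimpleGraph.mem_neighborFinset G i k).mp hk)))
            (hdpos k).le)).mp h1 j ((SimpleGraph.mem_neighborFinset G i j).mpr hij)
        rcases mul_eq_zero.mp hterm with h5 | h5
        · have h7 : m j = c ^ 2 / m i := by linarith [sub_eq_zero.mp h5]
          rw [h7]
          field_simp [(hmpos i).ne']
        · exact absurd h5 (hdpos j).ne'
    have htpos : 0 < c ^ 2 := by
      have h := hprod _ _ huv0
      rw [← h]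
      exact mul_pos (hmpos _) (hmpos _)
    exact classify G hG m (c ^ 2) htpos (fun i => (hmpos i).ne') hprod
  · -- easy direction
    rintro (hall | ⟨U, hUadj, hUa, hUb⟩)
    · left
      have hc00 : 0 ≤ m v0 := (hmpos v0).le
      have heig : A *ᵥ d = m v0 • d := by
        rw [hAd]; ext i; rw [Pi.smul_apply, smul_eq_mul, hall i v0]
      have hspec2 : specRad A = m v0 := specRad_eq_of_eig hnn hAsymmT hApos hdpos hc00 heig
      have hSeq : S = {m v0} := by
        ext x
        constructor
        · rintro ⟨i, j, hij, rfl⟩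
          rw [Set.mem_singleton_iff, hall i v0, hall j v0]
          exact Real.sqrt_mul_self hc00
        · rintro rfl
          exact ⟨⟨0, hnn⟩, v0, huv0, by
            rw [hall ⟨0, hnn⟩ v0, Real.sqrt_mul_self hc00]⟩
      rw [hspec2, hSeq, csInf_singleton]
    · left
      -- bipartite case
      obtain ⟨u1, v1, hu1, hv1, huv1⟩ :
          ∃ u v, u ∈ U ∧ v ∉ U ∧ G.Adj u v := by
        have h := hUadj _ v0 huv0
        by_cases hu : (⟨0, hnn⟩ : Fin n) ∈ U
        · exact ⟨_, v0, hu, h.mp hu, huv0⟩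
        · have hv : v0 ∈ U := by
            by_contra hv
            exact hu (h.mpr hv)
          exact ⟨v0, _, hv, hu, huv0.symm⟩
      have hapos : 0 < m u1 := hmpos u1
      have hbpos : 0 < m v1 := hmpos v1
      have hmU : ∀ i ∈ U, m i = m u1 := fun i hi => hUa i hi u1 hu1
      have hmV : ∀ i, i ∉ U → m i = m v1 := fun i hi => hUb i hi v1 hv1
      have cross : ∀ i j, G.Adj i j → m i * m j = m u1 * m v1 := by
        intro i j hij
        have h := hUadj i j hij
        by_cases hi : i ∈ U
        · rw [hmU i hi, hmV j (h.mp hi)]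
        · have hj : j ∈ U := by
            by_contra hj
            exact hi (h.mpr hj)
          rw [hmV i hi, hmU j hj]; ring
      set c1 := Real.sqrt (m u1 * m v1) with hc1
      have hc10 : 0 ≤ c1 := Real.sqrt_nonneg _
      set w1 : Fin n → ℝ := fun i => if i ∈ U then Real.sqrt (m u1) * d i
        else Real.sqrt (m v1) * d i with hw1
      have hw1pos : ∀ i, 0 < w1 i := by
        intro i
        rw [hw1]
        dsimp only
        split
        · exact mul_pos (Real.sqrt_pos.mpr hapos) (hdpos i)
        · exact mul_pos (Real.sqrt_pos.mpr hbpos) (hdpos i)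
      have heig : A *ᵥ w1 = c1 • w1 := by
        ext i
        rw [hA, SimpleGraph.adjMatrix_mulVec_apply, Pi.smul_apply, smul_eq_mul]
        by_cases hi : i ∈ U
        · have hnbr : ∀ j ∈ G.neighborFinset i, w1 j = Real.sqrt (m v1) * d j := by
            intro j hj
            have hadjij := (SimpleGraph.mem_neighborFinset G i j).mp hj
            rw [hw1]
            dsimp only
            rw [if_neg ((hUadj i j hadjij).mp hi)]
          rw [Finset.sum_congr rfl hnbr, ← Finset.mul_sum, ← hmd i, hmU i hi]
          rw [hw1]
          dsimp only
          rw [if_pos hi, hc1, Real.sqrt_mul hapos.le]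
          rw [show Real.sqrt (m u1) * Real.sqrt (m v1) * (Real.sqrt (m u1) * d i) =
            (Real.sqrt (m u1) * Real.sqrt (m u1)) * (Real.sqrt (m v1) * d i) from by ring,
            Real.mul_self_sqrt hapos.le]
          ring
        · have hnbr : ∀ j ∈ G.neighborFinset i, w1 j = Real.sqrt (m u1) * d j := by
            intro j hj
            have hadjij := (SimpleGraph.mem_neighborFinset G i j).mp hj
            have hj' : j ∈ U := by
              by_contra hjn
              exact hi ((hUadj i j hadjij).mpr hjn)
            rw [hw1]
            dsimp only
            rw [if_pos hj']
          rw [Finset.sum_congr rfl hnbr, ← Finset.mul_sum, ← hmd i, hmV i hi]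
          rw [hw1]
          dsimp only
          rw [if_neg hi, hc1, Real.sqrt_mul hapos.le]
          rw [show Real.sqrt (m u1) * Real.sqrt (m v1) * (Real.sqrt (m v1) * d i) =
            (Real.sqrt (m v1) * Real.sqrt (m v1)) * (Real.sqrt (m u1) * d i) from by ring,
            Real.mul_self_sqrt hbpos.le]
          ring
      have hspec2 : specRad A = c1 := specRad_eq_of_eig hnn hAsymmT hApos hw1pos hc10 heig
      have hSeq : S = {c1} := by
        ext x
        constructor
        · rintro ⟨i, j, hij, rfl⟩
          rw [Set.mem_singleton_iff, hc1, cross i j hij]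
        · rintro rfl
          exact ⟨u1, v1, huv1, rfl⟩
      rw [hspec2, hSeq, csInf_singleton]
end

section
/- Let G be a finite simple connected graph on n ≥ 2 vertices v_1,…,v_n, where d_i is the degree of v_i and m_i is the average degree of the neighbors of v_i. Then d_1 + m_1 = d_2 + m_2 = … = d_n + m_n holds if and only if G is a regular graph or a bipartite semi-regular graph. -/
open Finset SimpleGraph

theorem stmt_8 {n : ℕ} (hn : 2 ≤ n) (G : SimpleGraph (Fin n)) [DecidableRel G.Adj]
    (hG : G.Connected)
    (m : Fin n → ℝ)
    (hm : ∀ i, m i = (∑ j ∈ G.neighborFinset i, (G.degree j : ℝ)) / (G.degree i : ℝ)) :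
    (∀ i j, (G.degree i : ℝ) + m i = (G.degree j : ℝ) + m j) ↔
      ((∀ i j, G.degree i = G.degree j) ∨
        ∃ U : Set (Fin n), (∀ i j, G.Adj i j → (i ∈ U ↔ j ∉ U)) ∧
          (∀ i ∈ U, ∀ j ∈ U, G.degree i = G.degree j) ∧
          (∀ i ∉ U, ∀ j ∉ U, G.degree i = G.degree j)) := by
  classical
  have hnt : Nontrivial (Fin n) := Fin.nontrivial_iff_two_le.mpr hn
  -- every vertex has positive degree
  have hdeg : ∀ i : Fin n, 0 < G.degree i := by
    intro i
    obtain ⟨j, hj⟩ := exists_ne i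
    obtain ⟨p⟩ := hG.preconnected i j
    rw [G.degree_pos_iff_exists_adj]
    cases p with
    | nil => exact absurd rfl hj
    | cons h p => exact ⟨_, h⟩
  have hdegR : ∀ i : Fin n, (0:ℝ) < (G.degree i : ℝ) := fun i => by
    exact_mod_cast hdeg i
  -- m i * degree i = sum of neighbor degrees
  have v0 : Fin n := ⟨0, by omega⟩
  have hmS : ∀ i, m i * (G.degree i : ℝ) =
      ((∑ j ∈ G.neighborFinset i, G.degree j : ℕ) : ℝ) := by
    intro i
    rw [hm i, div_mul_cancel₀ _ (hdegR i).ne', Nat.cast_sum]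
  constructor
  · intro h
    obtain ⟨u, -, hu⟩ := Finset.exists_max_image (Finset.univ : Finset (Fin n))
      (fun i => G.degree i) ⟨v0, Finset.mem_univ v0⟩
    obtain ⟨w, -, hw⟩ := Finset.exists_min_image (Finset.univ : Finset (Fin n))
      (fun i => G.degree i) ⟨v0, Finset.mem_univ v0⟩
    set D := G.degree u with hD
    set d := G.degree w with hd
    have hub : ∀ i, G.degree i ≤ D := fun i => hu i (Finset.mem_univ i)
    have hlb : ∀ i, d ≤ G.degree i := fun i => hw i (Finset.mem_univ i)
    -- m u ≥ d
    have hmu : (d : ℝ) ≤ m u := by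
      rw [hm u, le_div_iff₀ (hdegR u)]
      have : (D * d : ℕ) ≤ ∑ j ∈ G.neighborFinset u, G.degree j := by
        calc (D * d : ℕ) = ∑ _j ∈ G.neighborFinset u, d := by
              rw [Finset.sum_const, smul_eq_mul, G.card_neighborFinset_eq_degree]
            _ ≤ _ := Finset.sum_le_sum fun j _ => hlb j
      calc ((d:ℝ) * D) = ((D * d : ℕ) : ℝ) := by push_cast; ring
        _ ≤ _ := by exact_mod_cast Nat.cast_le.mpr this
    have hmw : m w ≤ (D : ℝ) := by
      rw [hm w, div_le_iff₀ (hdegR w)]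
      have : (∑ j ∈ G.neighborFinset w, G.degree j) ≤ d * D := by
        calc (∑ j ∈ G.neighborFinset w, G.degree j)
            ≤ ∑ _j ∈ G.neighborFinset w, D := Finset.sum_le_sum fun j _ => hub j
          _ = d * D := by rw [Finset.sum_const, smul_eq_mul, G.card_neighborFinset_eq_degree]
      calc (∑ j ∈ G.neighborFinset w, (G.degree j : ℝ))
          = ((∑ j ∈ G.neighborFinset w, G.degree j : ℕ) : ℝ) := by rw [Nat.cast_sum]
        _ ≤ ((d * D : ℕ) : ℝ) := by exact_mod_cast this
        _ = (D:ℝ) * d := by push_cast; ring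
    -- the constant equals D + d
    have hc : ∀ i, (G.degree i : ℝ) + m i = (D : ℝ) + d := by
      have h1 : (D : ℝ) + m u = (d : ℝ) + m w := h u w
      have h2 : (D : ℝ) + (d : ℝ) ≤ (D : ℝ) + m u := by linarith
      have h3 : (d : ℝ) + m w ≤ (d : ℝ) + D := by linarith
      have hmu' : m u = d := by linarith
      intro i
      rw [h i u, hmu']
    -- sum of neighbor degrees of i equals degree i * (D + d - degree i)
    have hsum : ∀ i, ((∑ j ∈ G.neighborFinset i, G.degree j : ℕ) : ℝ) =
        (G.degree i : ℝ) * ((D : ℝ) + d - G.degree i) := by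
      intro i
      rw [← hmS i]
      have := hc i
      have : m i = (D : ℝ) + d - G.degree i := by linarith
      rw [this]; ring
    -- Lemma A: neighbors of a max-degree vertex all have degree d
    have lemA : ∀ i, G.degree i = D → ∀ j ∈ G.neighborFinset i, G.degree j = d := by
      intro i hi
      have hs : (∑ j ∈ G.neighborFinset i, G.degree j : ℕ) = D * d := by
        have := hsum i
        rw [hi] at this
        have h2 : ((∑ j ∈ G.neighborFinset i, G.degree j : ℕ) : ℝ) = ((D * d : ℕ) : ℝ) := by
          rw [this]; push_cast; ring
        exact_mod_cast h2
      by_contra hcon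
      push_neg at hcon
      obtain ⟨j, hj, hjd⟩ := hcon
      have hlt : (∑ _j ∈ G.neighborFinset i, d) < ∑ j ∈ G.neighborFinset i, G.degree j :=
        Finset.sum_lt_sum (fun k _ => hlb k) ⟨j, hj, lt_of_le_of_ne (hlb j) (Ne.symm hjd)⟩
      rw [Finset.sum_const, smul_eq_mul, G.card_neighborFinset_eq_degree, hi, hs] at hlt
      omega
    -- Lemma B: neighbors of a min-degree vertex all have degree D
    have lemB : ∀ i, G.degree i = d → ∀ j ∈ G.neighborFinset i, G.degree j = D := by
      intro i hi
      have hs : (∑ j ∈ G.neighborFinset i, G.degree j : ℕ) = d * D := by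
        have := hsum i
        rw [hi] at this
        have h2 : ((∑ j ∈ G.neighborFinset i, G.degree j : ℕ) : ℝ) = ((d * D : ℕ) : ℝ) := by
          rw [this]; push_cast; ring
        exact_mod_cast h2
      by_contra hcon
      push_neg at hcon
      obtain ⟨j, hj, hjd⟩ := hcon
      have hlt : (∑ j ∈ G.neighborFinset i, G.degree j) < ∑ _j ∈ G.neighborFinset i, D :=
        Finset.sum_lt_sum (fun k _ => hub k) ⟨j, hj, lt_of_le_of_ne (hub j) hjd⟩
      rw [Finset.sum_const, smul_eq_mul, G.card_neighborFinset_eq_degree, hi, hs] at hlt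
      omega
    by_cases hDd : D = d
    · left
      intro i j
      have h1 : G.degree i = D := le_antisymm (hub i) (hDd ▸ hlb i)
      have h2 : G.degree j = D := le_antisymm (hub j) (hDd ▸ hlb j)
      rw [h1, h2]
    · right
      -- every vertex has degree D or d
      have key : ∀ v : Fin n, G.degree v = D ∨ G.degree v = d := by
        have step : ∀ {a b : Fin n} (_ : G.Walk a b),
            G.degree a = D ∨ G.degree a = d → G.degree b = D ∨ G.degree b = d := by
          intro a b p
          induction p with
          | nil => exact id
          | @cons x y z hxy p ih =>
            intro hx
            apply ih
            rcases hx with hx | hx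
            · right; exact lemA x hx y ((G.mem_neighborFinset x y).mpr hxy)
            · left; exact lemB x hx y ((G.mem_neighborFinset x y).mpr hxy)
        intro v
        obtain ⟨p⟩ := hG.preconnected u v
        exact step p (Or.inl rfl)
      refine ⟨{i | G.degree i = D}, ?_, ?_, ?_⟩
      · intro i j hij
        constructor
        · intro hi hj
          have := lemA i hi j ((G.mem_neighborFinset i j).mpr hij)
          simp only [Set.mem_setOf_eq] at hj
          exact hDd (hj ▸ this ▸ rfl)
        · intro hj
          have hjd : G.degree j = d := (key j).resolve_left hj
          exact lemB j hjd i ((G.mem_neighborFinset j i).mpr hij.symm)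
      · intro i hi j hj
        simp only [Set.mem_setOf_eq] at hi hj
        rw [hi, hj]
      · intro i hi j hj
        have h1 : G.degree i = d := (key i).resolve_left hi
        have h2 : G.degree j = d := (key j).resolve_left hj
        rw [h1, h2]
  · rintro (hreg | ⟨U, hflip, hU1, hU2⟩)
    · -- regular case
      intro i j
      have hmi : ∀ k, m k = (G.degree k : ℝ) := by
        intro k
        rw [hm k]
        have : ∀ l ∈ G.neighborFinset k, (G.degree l : ℝ) = (G.degree k : ℝ) := by
          intro l _; exact_mod_cast congrArg Nat.cast (hreg l k)
        rw [Finset.sum_congr rfl this, Finset.sum_const, G.card_neighborFinset_eq_degree,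
          nsmul_eq_mul, mul_div_assoc, div_self (hdegR k).ne', mul_one]
      rw [hmi i, hmi j]
      exact_mod_cast congrArg (fun x : ℕ => (x:ℝ) + x) (hreg i j)
    · -- semi-regular case: find an edge
      obtain ⟨b, hab⟩ := G.degree_pos_iff_exists_adj v0 |>.mp (hdeg v0)
      -- one endpoint in U, one not
      have hcross := hflip v0 b hab
      -- wlog pick a ∈ U and a' ∉ U
      obtain ⟨a, a', ha, ha'⟩ : ∃ a a', a ∈ U ∧ a' ∉ U := by
        by_cases h0 : v0 ∈ U
        · exact ⟨v0, b, h0, hcross.mp h0⟩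
        · exact ⟨b, v0, by by_contra hb; exact h0 (hcross.mpr hb), h0⟩
      set r := G.degree a with hr
      set s := G.degree a' with hs
      -- degrees: in U it's r, out of U it's s
      have hinU : ∀ i ∈ U, G.degree i = r := fun i hi => hU1 i hi a ha
      have houtU : ∀ i, i ∉ U → G.degree i = s := fun i hi => hU2 i hi a' ha'
      have hmval : ∀ i, (G.degree i : ℝ) + m i = (r : ℝ) + s := by
        intro i
        by_cases hi : i ∈ U
        · have hdi : G.degree i = r := hinU i hi
          have : ∀ j ∈ G.neighborFinset i, (G.degree j : ℝ) = (s : ℝ) := by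
            intro j hj
            have hadj := (G.mem_neighborFinset i j).mp hj
            have : j ∉ U := (hflip i j hadj).mp hi
            exact_mod_cast congrArg Nat.cast (houtU j this)
          have hmi : m i = (s : ℝ) := by
            rw [hm i, Finset.sum_congr rfl this, Finset.sum_const,
              G.card_neighborFinset_eq_degree, nsmul_eq_mul,
              mul_comm, mul_div_assoc, div_self (hdegR i).ne', mul_one]
          rw [hmi, hdi]
        · have hdi : G.degree i = s := houtU i hi
          have : ∀ j ∈ G.neighborFinset i, (G.degree j : ℝ) = (r : ℝ) := by
            intro j hj
            have hadj := (G.mem_neighborFinset i j).mp hj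
            have hjU : j ∈ U := by
              by_contra hjn
              exact hi ((hflip i j hadj).mpr hjn)
            exact_mod_cast congrArg Nat.cast (hinU j hjU)
          have hmi : m i = (r : ℝ) := by
            rw [hm i, Finset.sum_congr rfl this, Finset.sum_const,
              G.card_neighborFinset_eq_degree, nsmul_eq_mul,
              mul_comm, mul_div_assoc, div_self (hdegR i).ne', mul_one]
          rw [hmi, hdi]
          ring
      intro i j
      rw [hmval i, hmval j]
end
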